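/- arXiv:1607.07157 — 11 statements merged into one kernel-verified Lean document; each statement's English description precedes it below -/
import Mathlib

section
/- Let n ≥ 1 and r ≥ 2, and let ⟨K_1,...,K_r⟩ be an Alexander r-tuple of proper simplicial complexes on [n]. Then the Bier complex Bier(𝒦) = K_1 *_Δ K_2 *_Δ ... *_Δ K_r is a pure simplicial complex of dimension n−r, i.e. every face of the deleted join is contained in a face with exactly n−r+1 elements and no face has more than n−r+1 elements. -/
def IsComplex {V : Type*} (K : Set (Finset V)) : Prop :=
  ∅ ∈ K ∧ ∀ A B : Finset V, A ⊆ B → B ∈ K → A ∈ K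

def CollUnavoidable {V : Type*} {r : ℕ} (K : Fin r → Set (Finset V)) : Prop :=
  ∀ A : Fin r → Finset V, Pairwise (Function.onFun Disjoint A) → ∃ i, A i ∈ K i

/-- An Alexander `r`-tuple: collective `r`-unavoidable, and for every tuple of faces
`A i ∈ K i` the complement of their union has at least `r - 1` elements. -/
def AlexanderTuple {V : Type*} [Fintype V] [DecidableEq V] {r : ℕ}
    (K : Fin r → Set (Finset V)) : Prop :=
  CollUnavoidable K ∧ ∀ A : Fin r → Finset V, (∀ i, A i ∈ K i) →
    r - 1 ≤ (Finset.univ \ Finset.univ.biUnion A).card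

def DeletedJoin {V : Type*} [DecidableEq V] {r : ℕ} (K : Fin r → Set (Finset V)) :
    Set (Finset (V × Fin r)) :=
  {S | (∀ p ∈ S, ∀ q ∈ S, Prod.fst p = Prod.fst q → p = q) ∧
    ∀ i, (S.filter (fun p => p.2 = i)).image Prod.fst ∈ K i}

namespace BierAux

variable {n r : ℕ}

lemma fiber_mem (S : Finset (Fin n × Fin r)) (i : Fin r) (x : Fin n) :
    x ∈ (S.filter (fun p => p.2 = i)).image Prod.fst ↔ (x, i) ∈ S := by
  simp only [Finset.mem_image, Finset.mem_filter]
  constructor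
  · rintro ⟨⟨a, b⟩, ⟨hp, h2⟩, h1⟩
    simp only at h1 h2
    subst h1; subst h2; exact hp
  · intro h; exact ⟨(x, i), ⟨h, rfl⟩, rfl⟩

lemma image_eq_biUnion (S : Finset (Fin n × Fin r)) :
    S.image Prod.fst
      = Finset.univ.biUnion (fun i => (S.filter (fun p => p.2 = i)).image Prod.fst) := by
  ext x
  simp only [Finset.mem_biUnion, Finset.mem_univ, true_and, fiber_mem]
  constructor
  · intro hx
    obtain ⟨⟨a, b⟩, hp, h1⟩ := Finset.mem_image.1 hx
    simp only at h1
    subst h1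
    exact ⟨b, hp⟩
  · rintro ⟨i, hi⟩
    exact Finset.mem_image.2 ⟨(x, i), hi, rfl⟩

lemma card_image_fst {S : Finset (Fin n × Fin r)}
    (hinj : ∀ p ∈ S, ∀ q ∈ S, Prod.fst p = Prod.fst q → p = q) :
    (S.image Prod.fst).card = S.card :=
  Finset.card_image_of_injOn (fun p hp q hq h => hinj p hp q hq h)

lemma part1 (hr : 2 ≤ r) (K : Fin r → Set (Finset (Fin n)))
    (hA : AlexanderTuple K) :
    ∀ S ∈ DeletedJoin K, S.card + r ≤ n + 1 := by
  intro S hS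
  set A := fun i => (S.filter (fun p => p.2 = i)).image Prod.fst with hAdef
  have hbi : Finset.univ.biUnion A = S.image Prod.fst := (image_eq_biUnion S).symm
  have hbc : (Finset.univ.biUnion A).card = S.card := by
    rw [hbi]; exact card_image_fst hS.1
  have h := hA.2 A hS.2
  rw [Finset.card_sdiff_of_subset (Finset.subset_univ _)] at h
  have hle : (Finset.univ.biUnion A).card ≤ Fintype.card (Fin n) :=
    Finset.card_le_card (Finset.subset_univ _)
  simp only [Finset.card_univ, Fintype.card_fin] at h hle
  omega

lemma extend (hr : 2 ≤ r) (K : Fin r → Set (Finset (Fin n)))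
    (hu : CollUnavoidable K) (S : Finset (Fin n × Fin r)) (hS : S ∈ DeletedJoin K)
    (hcard : S.card + r ≤ n) :
    ∃ T ∈ DeletedJoin K, S ⊆ T ∧ T.card = S.card + 1 := by
  classical
  set A := fun i => (S.filter (fun p => p.2 = i)).image Prod.fst with hAdef
  have hAmem : ∀ i x, x ∈ A i ↔ (x, i) ∈ S := fun i x => fiber_mem S i x
  have hbi : Finset.univ.biUnion A = S.image Prod.fst := (image_eq_biUnion S).symm
  set C : Finset (Fin n) := Finset.univ \ Finset.univ.biUnion A with hCdef
  have hCmem : ∀ x, x ∈ C → ∀ i, x ∉ A i := by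
    intro x hx i hxi
    rw [hCdef, Finset.mem_sdiff] at hx
    exact hx.2 (Finset.mem_biUnion.2 ⟨i, Finset.mem_univ i, hxi⟩)
  have hCcard : r ≤ C.card := by
    have hbc : (Finset.univ.biUnion A).card = S.card := by
      rw [hbi]; exact card_image_fst hS.1
    rw [hCdef, Finset.card_sdiff_of_subset (Finset.subset_univ _), hbc]
    simp only [Finset.card_univ, Fintype.card_fin]
    omega
  obtain ⟨C', hC'sub, hC'card⟩ := Finset.exists_subset_card_eq hCcard
  set v : Fin r → Fin n := fun i => (C'.orderIsoOfFin hC'card i : Fin n) with hvdef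
  have hvC : ∀ i, v i ∈ C := fun i => hC'sub (C'.orderIsoOfFin hC'card i).2
  have hvinj : Function.Injective v := by
    intro i j h
    exact (C'.orderIsoOfFin hC'card).injective (Subtype.ext h)
  have hvA : ∀ i j, v i ∉ A j := fun i j => hCmem _ (hvC i) j
  have hAdisj : ∀ i j, i ≠ j → ∀ x, x ∈ A i → x ∉ A j := by
    intro i j hij x hxi hxj
    rw [hAmem] at hxi hxj
    have := hS.1 (x, i) hxi (x, j) hxj rfl
    exact hij (congrArg Prod.snd this)
  set B : Fin r → Finset (Fin n) := fun i => insert (v i) (A i) with hBdef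
  have hBdisj : Pairwise (Function.onFun Disjoint B) := by
    intro i j hij
    rw [Function.onFun, Finset.disjoint_left]
    intro x hxi hxj
    rw [hBdef] at hxi hxj
    simp only [Finset.mem_insert] at hxi hxj
    rcases hxi with h1 | h1 <;> rcases hxj with h2 | h2
    · exact hij (hvinj (h1.symm.trans h2))
    · exact hvA i j (h1 ▸ h2)
    · exact hvA j i (h2 ▸ h1)
    · exact hAdisj i j hij x h1 h2
  obtain ⟨j, hj⟩ := hu B hBdisj
  have hnotmem : (v j, j) ∉ S := by
    intro h
    exact hvA j j ((hAmem j (v j)).2 h)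
  refine ⟨insert (v j, j) S, ⟨?_, ?_⟩, Finset.subset_insert _ _,
    Finset.card_insert_of_notMem hnotmem⟩
  · intro p hp q hq hpq
    rcases Finset.mem_insert.1 hp with hp | hp <;> rcases Finset.mem_insert.1 hq with hq | hq
    · rw [hp, hq]
    · subst hp
      obtain ⟨a, b⟩ := q
      simp only at hpq
      subst hpq
      exact absurd ((hAmem b (v j)).2 hq) (hvA j b)
    · subst hq
      obtain ⟨a, b⟩ := p
      simp only at hpq
      subst hpq
      exact absurd ((hAmem b (v j)).2 hp) (hvA j b)
    · exact hS.1 p hp q hq hpq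
  · intro i
    by_cases hji : j = i
    · subst hji
      have heq : ((insert (v j, j) S).filter (fun p => p.2 = j))
          = insert (v j, j) (S.filter (fun p => p.2 = j)) := by
        rw [Finset.filter_insert, if_pos rfl]
      rw [heq, Finset.image_insert]
      exact hj
    · have heq : ((insert (v j, j) S).filter (fun p => p.2 = i))
          = S.filter (fun p => p.2 = i) := by
        rw [Finset.filter_insert, if_neg (by simpa using hji)]
      rw [heq]
      exact hS.2 i

end BierAux

/-- The Bier complex of an Alexander `r`-tuple of proper complexes on `[n]` is a pure
complex of dimension `n - r`: no face has more than `n - r + 1` elements, and each face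
is contained in a face with exactly `n - r + 1` elements. -/
theorem bierComplex_pure (n r : ℕ) (hn : 1 ≤ n) (hr : 2 ≤ r)
    (K : Fin r → Set (Finset (Fin n)))
    (hcplx : ∀ i, IsComplex (K i)) (hproper : ∀ i, K i ≠ Set.univ)
    (hA : AlexanderTuple K) :
    (∀ S ∈ DeletedJoin K, S.card + r ≤ n + 1) ∧
      (∀ S ∈ DeletedJoin K, ∃ T ∈ DeletedJoin K, S ⊆ T ∧ T.card + r = n + 1) := by
  have part1 := BierAux.part1 hr K hA
  refine ⟨part1, ?_⟩
  have main : ∀ m : ℕ, ∀ S ∈ DeletedJoin K, n + 1 - r - S.card ≤ m →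
      ∃ T ∈ DeletedJoin K, S ⊆ T ∧ T.card + r = n + 1 := by
    intro m
    induction m with
    | zero =>
      intro S hS h0
      exact ⟨S, hS, subset_rfl, by have := part1 S hS; omega⟩
    | succ m ih =>
      intro S hS hle
      by_cases hc : S.card + r = n + 1
      · exact ⟨S, hS, subset_rfl, hc⟩
      · have h1 : S.card + r ≤ n := by have := part1 S hS; omega
        obtain ⟨T, hT, hST, hTc⟩ := BierAux.extend hr K hA.1 S hS h1
        obtain ⟨T', hT', hTT', hfin⟩ := ih T hT (by omega)
        exact ⟨T', hT', hST.trans hTT', hfin⟩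
  intro S hS
  exact main (n + 1 - r - S.card) S hS le_rfl
end

section
/- Let r ≥ 2 and let ⟨K_1,...,K_r⟩ be an Alexander r-tuple of proper simplicial complexes on a finite vertex set V. Then exactly one of the following holds: (1) r = 2 and K_2 = K_1° is the Alexander dual of K_1; or (2) r ≥ 3 and there exist a partition V = N ⊎ C (with C possibly empty) and nonnegative integers m_1,...,m_r with |N| = m_1 + ... + m_r + r − 1 such that for each i, K_i = {A ⊆ V : |A ∩ N| ≤ m_i}, i.e. K_i is the join of the m_i-skeleton of the simplex on N with the full simplex on C. -/
open Finset

section Aux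

variable {V : Type*} [DecidableEq V]

/-- Uniqueness of the representation of a "skeletal" complex on ground set `G`. -/
lemma lemU {G N N' : Finset V} {μ μ' : ℕ} (hN : N ⊆ G) (hN' : N' ⊆ G)
    (h : ∀ A : Finset V, (A ⊆ G ∧ (A ∩ N).card ≤ μ) ↔ (A ⊆ G ∧ (A ∩ N').card ≤ μ'))
    (hμ : μ < N.card) : N = N' ∧ μ = μ' := by
  have hμ' : μ' < N'.card := by
    by_contra hle
    push_neg at hle
    have := (h G).mpr ⟨subset_rfl, by rw [Finset.inter_eq_right.mpr hN']; exact hle⟩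
    rw [Finset.inter_eq_right.mpr hN] at this
    omega
  -- μ' ≤ μ
  have h1 : μ' ≤ μ := by
    by_contra hlt
    push_neg at hlt
    obtain ⟨T, hTN, hTcard⟩ := Finset.exists_subset_card_eq (show μ + 1 ≤ N.card by omega)
    have hT1 : ¬ (T ⊆ G ∧ (T ∩ N).card ≤ μ) := by
      rintro ⟨-, hc⟩
      rw [Finset.inter_eq_left.mpr hTN] at hc
      omega
    have hT2 : T ⊆ G ∧ (T ∩ N').card ≤ μ' := by
      refine ⟨hTN.trans hN, ?_⟩
      have : (T ∩ N').card ≤ T.card := Finset.card_le_card (Finset.inter_subset_left)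
      omega
    exact hT1 ((h T).mpr hT2)
  have h2 : μ ≤ μ' := by
    by_contra hlt
    push_neg at hlt
    obtain ⟨T, hTN, hTcard⟩ := Finset.exists_subset_card_eq (show μ' + 1 ≤ N'.card by omega)
    have hT1 : ¬ (T ⊆ G ∧ (T ∩ N').card ≤ μ') := by
      rintro ⟨-, hc⟩
      rw [Finset.inter_eq_left.mpr hTN] at hc
      omega
    have hT2 : T ⊆ G ∧ (T ∩ N).card ≤ μ := by
      refine ⟨hTN.trans hN', ?_⟩
      have : (T ∩ N).card ≤ T.card := Finset.card_le_card (Finset.inter_subset_left)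
      omega
    exact hT1 ((h T).mp hT2)
  have hμμ' : μ = μ' := le_antisymm h2 h1
  subst hμμ'
  refine ⟨?_, rfl⟩
  have key : ∀ (M M' : Finset V), M ⊆ G → M' ⊆ G → μ < M.card → μ < M'.card →
      (∀ A : Finset V, (A ⊆ G ∧ (A ∩ M).card ≤ μ) → (A ⊆ G ∧ (A ∩ M').card ≤ μ)) →
      M' ⊆ M := by
    intro M M' hM hM' hcM hcM' himp
    intro x hxM'
    by_contra hxM
    obtain ⟨B, hBsub, hBcard⟩ :=
      Finset.exists_subset_card_eq (show μ ≤ (M'.erase x).card by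
        rw [Finset.card_erase_of_mem hxM']; omega)
    have hxB : x ∉ B := fun hx => (Finset.notMem_erase x M') (hBsub hx)
    have hA1 : insert x B ⊆ G ∧ ((insert x B) ∩ M).card ≤ μ := by
      constructor
      · intro y hy
        rcases Finset.mem_insert.mp hy with rfl | hyB
        · exact hM' hxM'
        · exact hM' (Finset.erase_subset x M' (hBsub hyB))
      · have : (insert x B) ∩ M ⊆ B := by
          intro y hy
          rcases Finset.mem_inter.mp hy with ⟨hy1, hy2⟩
          rcases Finset.mem_insert.mp hy1 with rfl | hyB
          · exact absurd hy2 hxM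
          · exact hyB
        calc ((insert x B) ∩ M).card ≤ B.card := Finset.card_le_card this
          _ = μ := hBcard
    have hA2 := himp _ hA1
    have : ((insert x B) ∩ M').card ≤ μ := hA2.2
    have hsub : insert x B ⊆ M' := by
      intro y hy
      rcases Finset.mem_insert.mp hy with rfl | hyB
      · exact hxM'
      · exact Finset.erase_subset x M' (hBsub hyB)
    rw [Finset.inter_eq_left.mpr hsub, Finset.card_insert_of_notMem hxB, hBcard] at this
    omega
  have hsub1 : N' ⊆ N := key N N' hN hN' hμ hμ' (fun A hA => (h A).mp hA)
  have hsub2 : N ⊆ N' := key N' N hN' hN hμ' hμ (fun A hA => (h A).mpr hA)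
  exact Finset.Subset.antisymm hsub2 hsub1

/-- A downward-closed family on ground `G`, invariant under single-element swaps,
is a skeleton. -/
lemma lemSym {G : Finset V} {K : Set (Finset V)} (hem : ∅ ∈ K)
    (hmem : ∀ A ∈ K, A ⊆ G) (hdc : ∀ {A B : Finset V}, A ⊆ B → B ∈ K → A ∈ K)
    (hG : G ∉ K)
    (hswap : ∀ a b C, a ∈ G → b ∈ G → a ≠ b → a ∉ C → b ∉ C →
      insert a C ∈ K → insert b C ∈ K) :
    ∃ m : ℕ, (∀ A : Finset V, A ∈ K ↔ (A ⊆ G ∧ A.card ≤ m)) ∧ m + 1 ≤ G.card := by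
  classical
  -- transfer along equal cardinalities
  have key : ∀ (n : ℕ) (B M : Finset V), B ⊆ G → M ⊆ G → B.card = M.card →
      (M \ B).card ≤ n → B ∈ K → M ∈ K := by
    intro n
    induction n with
    | zero =>
      intro B M hB hM hcard hle hBK
      have : M \ B = ∅ := Finset.card_eq_zero.mp (Nat.le_zero.mp hle)
      have hMB : M ⊆ B := by
        intro x hx
        by_contra hxB
        exact absurd this (Finset.ne_empty_of_mem (Finset.mem_sdiff.mpr ⟨hx, hxB⟩))
      have : M = B := Finset.eq_of_subset_of_card_le hMB (by omega)
      rwa [this]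
    | succ n ih =>
      intro B M hB hM hcard hle hBK
      by_cases h0 : (M \ B).card = 0
      · exact ih B M hB hM hcard (by omega) hBK
      · obtain ⟨b, hb⟩ := Finset.card_pos.mp (by omega : 0 < (M \ B).card)
        rcases Finset.mem_sdiff.mp hb with ⟨hbM, hbB⟩
        have hBMpos : 0 < (B \ M).card := by
          have e1 := Finset.card_sdiff_add_card_inter B M
          have e2 := Finset.card_sdiff_add_card_inter M B
          rw [Finset.inter_comm] at e2
          omega
        obtain ⟨a, ha⟩ := Finset.card_pos.mp hBMpos
        rcases Finset.mem_sdiff.mp ha with ⟨haB, haM⟩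
        have hab : a ≠ b := fun h => haM (h ▸ hbM)
        have hBe : B = insert a (B.erase a) := (Finset.insert_erase haB).symm
        have hB' : insert b (B.erase a) ∈ K := by
          refine hswap a b (B.erase a) (hB haB) (hM hbM) hab
            (Finset.notMem_erase a B) (fun h => hbB (Finset.erase_subset a B h)) ?_
          rwa [← hBe]
        have hbBe : b ∉ B.erase a := fun h => hbB (Finset.erase_subset a B h)
        have hcard' : (insert b (B.erase a)).card = M.card := by
          rw [Finset.card_insert_of_notMem hbBe, Finset.card_erase_of_mem haB]
          have : 0 < B.card := Finset.card_pos.mpr ⟨a, haB⟩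
          omega
        have hsubG : insert b (B.erase a) ⊆ G := by
          intro x hx
          rcases Finset.mem_insert.mp hx with rfl | hx
          · exact hM hbM
          · exact hB (Finset.erase_subset a B hx)
        have hdiff : M \ insert b (B.erase a) ⊆ (M \ B).erase b := by
          intro x hx
          rcases Finset.mem_sdiff.mp hx with ⟨hxM, hxB'⟩
          have hxb : x ≠ b := fun h => hxB' (by rw [h]; exact Finset.mem_insert_self b _)
          refine Finset.mem_erase.mpr ⟨hxb, Finset.mem_sdiff.mpr ⟨hxM, fun hxB => ?_⟩⟩
          have hxa : x ≠ a := fun h => haM (h ▸ hxM)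
          exact hxB' (Finset.mem_insert_of_mem (Finset.mem_erase.mpr ⟨hxa, hxB⟩))
        have hle' : (M \ insert b (B.erase a)).card ≤ n := by
          have h1 : (M \ insert b (B.erase a)).card ≤ ((M \ B).erase b).card :=
            Finset.card_le_card hdiff
          rw [Finset.card_erase_of_mem hb] at h1
          omega
        exact ih _ M hsubG hM hcard' hle' hB'
  -- minimal nonface size
  set S := G.powerset.filter (fun A => A ∉ K) with hS
  have hSne : S.Nonempty := ⟨G, Finset.mem_filter.mpr ⟨Finset.mem_powerset_self G, hG⟩⟩
  have hSine : (S.image Finset.card).Nonempty := hSne.image _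
  set t := (S.image Finset.card).min' hSine with ht
  obtain ⟨M, hMS, hMcard⟩ := Finset.mem_image.mp ((S.image Finset.card).min'_mem hSine)
  rcases Finset.mem_filter.mp hMS with ⟨hMG, hMK⟩
  have hMG' : M ⊆ G := Finset.mem_powerset.mp hMG
  have htle : ∀ A : Finset V, A ⊆ G → A ∉ K → t ≤ A.card := by
    intro A hAG hAK
    exact Finset.min'_le _ _ (Finset.mem_image_of_mem _
      (Finset.mem_filter.mpr ⟨Finset.mem_powerset.mpr hAG, hAK⟩))
  have ht1 : 1 ≤ t := by
    rcases Nat.eq_zero_or_pos t with h0 | h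
    · exfalso
      have hMc : M.card = 0 := by rw [hMcard, ← ht, h0]
      rw [Finset.card_eq_zero.mp hMc] at hMK
      exact hMK hem
    · exact h
  refine ⟨t - 1, ?_, ?_⟩
  · intro A
    constructor
    · intro hAK
      refine ⟨hmem A hAK, ?_⟩
      by_contra hc
      push_neg at hc
      obtain ⟨B, hBA, hBcard⟩ := Finset.exists_subset_card_eq (show t ≤ A.card by omega)
      have hBK : B ∈ K := hdc hBA hAK
      have : M ∈ K := key ((M \ B).card) B M (hBA.trans (hmem A hAK)) hMG'
        (by omega) le_rfl hBK
      exact hMK this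
    · rintro ⟨hAG, hAcard⟩
      by_contra hAK
      have := htle A hAG hAK
      omega
  · have := htle G subset_rfl hG
    omega

variable {ι : Type*} [DecidableEq ι]

/-- Greedy selection: pairwise disjoint subsets of exact prescribed sizes. -/
lemma greedy_exact (J : Finset ι) (m : ι → ℕ) (s : Finset V)
    (h : ∑ j ∈ J, m j ≤ s.card) :
    ∃ T : ι → Finset V, (∀ j ∈ J, T j ⊆ s ∧ (T j).card = m j) ∧
      (↑J : Set ι).Pairwise (Function.onFun Disjoint T) := by
  classical
  induction J using Finset.induction_on generalizing s with
  | empty => exact ⟨fun _ => ∅, by simp, by simp⟩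
  | @insert a J' ha ih =>
    rw [Finset.sum_insert ha] at h
    obtain ⟨Sa, hSa, hSacard⟩ := Finset.exists_subset_card_eq (show m a ≤ s.card by omega)
    have hrest : ∑ j ∈ J', m j ≤ (s \ Sa).card := by
      rw [Finset.card_sdiff_of_subset hSa]
      omega
    obtain ⟨T', hT', hT'pw⟩ := ih (s \ Sa) hrest
    refine ⟨fun j => if j = a then Sa else T' j, ?_, ?_⟩
    · intro j hj
      by_cases hja : j = a
      · subst hja
        simp only [if_pos]
        exact ⟨hSa, hSacard⟩
      · have hj' : j ∈ J' := by
          rcases Finset.mem_insert.mp hj with h | h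
          · exact absurd h hja
          · exact h
        simp only [if_neg hja]
        exact ⟨(hT' j hj').1.trans (Finset.sdiff_subset), (hT' j hj').2⟩
    · intro x hx y hy hxy
      simp only [Finset.coe_insert, Set.mem_insert_iff, Finset.mem_coe] at hx hy
      unfold Function.onFun
      by_cases hxa : x = a
      · subst hxa
        have hya : y ≠ x := fun h => hxy h.symm
        have hy' : y ∈ J' := by
          rcases hy with h | h
          · exact absurd h hya
          · exact h
        simp only [if_pos, if_neg hya]
        exact Finset.disjoint_left.mpr (fun z hz hz' =>
          (Finset.mem_sdiff.mp ((hT' y hy').1 hz')).2 hz)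
      · have hx' : x ∈ J' := by
          rcases hx with h | h
          · exact absurd h hxa
          · exact h
        by_cases hya : y = a
        · subst hya
          simp only [if_pos, if_neg hxa]
          exact Finset.disjoint_left.mpr (fun z hz hz' =>
            (Finset.mem_sdiff.mp ((hT' x hx').1 hz)).2 hz')
        · have hy' : y ∈ J' := by
            rcases hy with h | h
            · exact absurd h hya
            · exact h
          simp only [if_neg hxa, if_neg hya]
          exact hT'pw hx' hy' hxy

/-- Greedy covering: subsets of sizes at most `m j` covering all of `s`. -/
lemma greedy_cover (J : Finset ι) (m : ι → ℕ) (s : Finset V)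
    (h : s.card ≤ ∑ j ∈ J, m j) :
    ∃ T : ι → Finset V, (∀ j ∈ J, T j ⊆ s ∧ (T j).card ≤ m j) ∧ J.biUnion T = s := by
  classical
  induction J using Finset.induction_on generalizing s with
  | empty =>
    refine ⟨fun _ => ∅, by simp, ?_⟩
    simp only [Finset.sum_empty] at h
    simp [Finset.card_eq_zero.mp (Nat.le_zero.mp h)]
  | @insert a J' ha ih =>
    rw [Finset.sum_insert ha] at h
    obtain ⟨Sa, hSa, hSacard⟩ :=
      Finset.exists_subset_card_eq (show min (m a) s.card ≤ s.card from min_le_right _ _)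
    have hrest : (s \ Sa).card ≤ ∑ j ∈ J', m j := by
      rw [Finset.card_sdiff_of_subset hSa, hSacard]
      rcases le_total (m a) s.card with h1 | h1
      · rw [min_eq_left h1]; omega
      · rw [min_eq_right h1]; omega
    obtain ⟨T', hT', hT'cov⟩ := ih (s \ Sa) hrest
    refine ⟨fun j => if j = a then Sa else T' j, ?_, ?_⟩
    · intro j hj
      by_cases hja : j = a
      · subst hja
        simp only [if_pos]
        exact ⟨hSa, by rw [hSacard]; exact min_le_left _ _⟩
      · have hj' : j ∈ J' := by
          rcases Finset.mem_insert.mp hj with h | h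
          · exact absurd h hja
          · exact h
        simp only [if_neg hja]
        exact ⟨(hT' j hj').1.trans (Finset.sdiff_subset), (hT' j hj').2⟩
    · apply Finset.Subset.antisymm
      · intro x hx
        rcases Finset.mem_biUnion.mp hx with ⟨j, hj, hxj⟩
        by_cases hja : j = a
        · subst hja
          simp only [if_pos] at hxj
          exact hSa hxj
        · have hj' : j ∈ J' := by
            rcases Finset.mem_insert.mp hj with h | h
            · exact absurd h hja
            · exact h
          simp only [if_neg hja] at hxj
          exact Finset.sdiff_subset ((hT' j hj').1 hxj)
      · intro x hx
        by_cases hxSa : x ∈ Sa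
        · refine Finset.mem_biUnion.mpr ⟨a, Finset.mem_insert_self _ _, ?_⟩
          simp only [if_pos]
          exact hxSa
        · have : x ∈ s \ Sa := Finset.mem_sdiff.mpr ⟨hx, hxSa⟩
          rw [← hT'cov] at this
          rcases Finset.mem_biUnion.mp this with ⟨j, hj, hxj⟩
          have hja : j ≠ a := fun h => ha (h ▸ hj)
          refine Finset.mem_biUnion.mpr ⟨j, Finset.mem_insert_of_mem hj, ?_⟩
          simp only [if_neg hja]
          exact hxj

end Aux
section RelSysSec

variable {V : Type*} [DecidableEq V] {ι : Type*} [DecidableEq ι]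

/-- A relativized Alexander system on ground set `W` with active indices `J`. -/
structure RelSys (J : Finset ι) (W : Finset V) (K : ι → Set (Finset V)) : Prop where
  empty_mem : ∀ i ∈ J, ∅ ∈ K i
  down : ∀ i ∈ J, ∀ {A B : Finset V}, A ⊆ B → B ∈ K i → A ∈ K i
  subW : ∀ i ∈ J, ∀ A ∈ K i, A ⊆ W
  proper : ∀ i ∈ J, W ∉ K i
  unav : ∀ A : ι → Finset V, (∀ i ∈ J, A i ⊆ W) →
    (↑J : Set ι).Pairwise (Function.onFun Disjoint A) → ∃ i ∈ J, A i ∈ K i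
  compl : ∀ A : ι → Finset V, (∀ i ∈ J, A i ∈ K i) →
    J.card - 1 ≤ (W \ J.biUnion A).card

namespace RelSys

variable {J : Finset ι} {W : Finset V} {K : ι → Set (Finset V)} (hR : RelSys J W K)

/-- Single-face complement bound. -/
lemma single_compl (hR : RelSys J W K) {j : ι} (hj : j ∈ J) {A : Finset V} (hA : A ∈ K j) :
    J.card - 1 ≤ (W \ A).card := by
  classical
  have h := hR.compl (fun i => if i = j then A else ∅) (by
    intro i hi
    by_cases hij : i = j
    · subst hij; simp only [if_pos]; exact hA
    · simp only [if_neg hij]; exact hR.empty_mem i hi)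
  refine le_trans h (Finset.card_le_card ?_)
  apply Finset.sdiff_subset_sdiff (Finset.Subset.refl W)
  intro x hx
  exact Finset.mem_biUnion.mpr ⟨j, hj, by simp only [if_pos]; exact hx⟩

lemma W_nonempty (hR : RelSys J W K) (hJ : J.Nonempty) : W.Nonempty := by
  obtain ⟨i, hi⟩ := hJ
  rcases Finset.eq_empty_or_nonempty W with rfl | h
  · exact absurd (hR.empty_mem i hi) (hR.proper i hi)
  · exact h

/-- No face equals `W` minus one point (when `3 ≤ J.card`). -/
lemma erase_notMem (hR : RelSys J W K) (hJ3 : 3 ≤ J.card) {j : ι} (hj : j ∈ J)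
    {u : V} (hu : u ∈ W) : W.erase u ∉ K j := by
  intro h
  have := hR.single_compl hj h
  have hsub : W \ W.erase u ⊆ {u} := by
    intro x hx
    rcases Finset.mem_sdiff.mp hx with ⟨hxW, hxe⟩
    simp only [Finset.mem_erase] at hxe
    push_neg at hxe
    by_contra hxu
    simp only [Finset.mem_singleton] at hxu
    exact hxe hxu hxW
  have := Finset.card_le_card hsub
  simp only [Finset.card_singleton] at this
  omega

/-- No face equals `W` minus two points (when `4 ≤ J.card`). -/
lemma erase2_notMem (hR : RelSys J W K) (hJ4 : 4 ≤ J.card) {j : ι} (hj : j ∈ J)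
    {u x : V} : (W.erase u).erase x ∉ K j := by
  intro h
  have := hR.single_compl hj h
  have hsub : W \ (W.erase u).erase x ⊆ {u, x} := by
    intro y hy
    rcases Finset.mem_sdiff.mp hy with ⟨hyW, hye⟩
    simp only [Finset.mem_erase] at hye
    push_neg at hye
    by_cases hyx : y = x
    · simp [hyx]
    · by_cases hyu : y = u
      · simp [hyu]
      · exact absurd hyW (hye hyx hyu)
  have h2 := Finset.card_le_card hsub
  have h3 : ({u, x} : Finset V).card ≤ 2 := Finset.card_insert_le _ _ |>.trans (by simp)
  omega

end RelSys

/-- Removing a vertex `u` that is a non-vertex of `K i₀`, together with the index `i₀`. -/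
lemma relsys_erase {J : Finset ι} {W : Finset V} {K : ι → Set (Finset V)}
    (hR : RelSys J W K) (hJ3 : 3 ≤ J.card) {i₀ : ι} (hi₀ : i₀ ∈ J)
    {u : V} (hu : u ∈ W) (huK : {u} ∉ K i₀) :
    RelSys (J.erase i₀) (W.erase u) (fun j => {A | A ∈ K j ∧ A ⊆ W.erase u}) := by
  classical
  constructor
  · intro i hi
    exact ⟨hR.empty_mem i (Finset.mem_of_mem_erase hi), Finset.empty_subset _⟩
  · intro i hi A B hAB hB
    exact ⟨hR.down i (Finset.mem_of_mem_erase hi) hAB hB.1, hAB.trans hB.2⟩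
  · intro i _ A hA
    exact hA.2
  · intro i hi h
    exact hR.erase_notMem hJ3 (Finset.mem_of_mem_erase hi) hu h.1
  · intro A hAsub hpw
    have h := hR.unav (fun j => if j = i₀ then {u} else A j) (by
      intro i hi
      by_cases hii : i = i₀
      · simp only [if_pos hii]
        simpa using hu
      · simp only [if_neg hii]
        exact (hAsub i (Finset.mem_erase.mpr ⟨hii, hi⟩)).trans (Finset.erase_subset u W))
      (by
        intro x hx y hy hxy
        simp only [Finset.mem_coe] at hx hy
        unfold Function.onFun
        have key : ∀ z ∈ J, z ≠ i₀ → Disjoint ({u} : Finset V) (A z) := by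
          intro z hz hzi
          refine Finset.disjoint_left.mpr ?_
          intro w hw hw2
          rw [Finset.mem_singleton] at hw
          subst hw
          exact (Finset.mem_erase.mp (hAsub z (Finset.mem_erase.mpr ⟨hzi, hz⟩) hw2)).1 rfl
        by_cases hxi : x = i₀
        · have hyi : y ≠ i₀ := fun h => hxy (hxi.trans h.symm)
          simp only [if_pos hxi, if_neg hyi]
          exact key y hy hyi
        · by_cases hyi : y = i₀
          · simp only [if_pos hyi, if_neg hxi]
            exact (key x hx hxi).symm
          · simp only [if_neg hxi, if_neg hyi]
            exact hpw (Finset.mem_coe.mpr (Finset.mem_erase.mpr ⟨hxi, hx⟩))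
              (Finset.mem_coe.mpr (Finset.mem_erase.mpr ⟨hyi, hy⟩)) hxy)
    obtain ⟨i, hi, hKi⟩ := h
    by_cases hii : i = i₀
    · exfalso
      apply huK
      simp only [if_pos hii] at hKi
      rwa [hii] at hKi
    · simp only [if_neg hii] at hKi
      have hiJ' : i ∈ J.erase i₀ := Finset.mem_erase.mpr ⟨hii, hi⟩
      exact ⟨i, hiJ', hKi, hAsub i hiJ'⟩
  · intro A hA
    have h := hR.compl (fun j => if j = i₀ then ∅ else A j) (by
      intro i hi
      by_cases hii : i = i₀
      · simp only [if_pos hii]; exact hR.empty_mem i hi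
      · simp only [if_neg hii]
        exact (hA i (Finset.mem_erase.mpr ⟨hii, hi⟩)).1)
    have hBU : J.biUnion (fun j => if j = i₀ then ∅ else A j) = (J.erase i₀).biUnion A := by
      apply Finset.Subset.antisymm
      · intro x hx
        rcases Finset.mem_biUnion.mp hx with ⟨j, hj, hxj⟩
        by_cases hji : j = i₀
        · simp only [if_pos hji] at hxj; exact absurd hxj (Finset.notMem_empty x)
        · simp only [if_neg hji] at hxj
          exact Finset.mem_biUnion.mpr ⟨j, Finset.mem_erase.mpr ⟨hji, hj⟩, hxj⟩
      · intro x hx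
        rcases Finset.mem_biUnion.mp hx with ⟨j, hj, hxj⟩
        rcases Finset.mem_erase.mp hj with ⟨hji, hjJ⟩
        exact Finset.mem_biUnion.mpr ⟨j, hjJ, by simp only [if_neg hji]; exact hxj⟩
    rw [hBU] at h
    have huc : u ∈ W \ (J.erase i₀).biUnion A := by
      refine Finset.mem_sdiff.mpr ⟨hu, ?_⟩
      intro hc
      rcases Finset.mem_biUnion.mp hc with ⟨j, hj, hxj⟩
      exact (Finset.mem_erase.mp ((hA j hj).2 hxj)).1 rfl
    have heq : (W.erase u) \ (J.erase i₀).biUnion A = (W \ (J.erase i₀).biUnion A).erase u := by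
      ext x
      simp only [Finset.mem_sdiff, Finset.mem_erase]
      tauto
    rw [heq, Finset.card_erase_of_mem huc, Finset.card_erase_of_mem hi₀]
    omega

/-- The deletion/link system at a vertex `v` all of whose singletons are faces. -/
lemma relsys_linkdel {J : Finset ι} {W : Finset V} {K : ι → Set (Finset V)}
    (hR : RelSys J W K) (hJ3 : 3 ≤ J.card) {v : V} (hv : v ∈ W)
    (hvK : ∀ i ∈ J, {v} ∈ K i) {i : ι} (hi : i ∈ J) :
    RelSys J (W.erase v)
      (fun j => if j = i then {A | A ⊆ W.erase v ∧ insert v A ∈ K i}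
        else {A | A ∈ K j ∧ A ⊆ W.erase v}) := by
  classical
  constructor
  · intro j hj
    by_cases hji : j = i
    · subst hji
      simp only [if_pos]
      refine ⟨Finset.empty_subset _, ?_⟩
      simpa using hvK j hj
    · simp only [if_neg hji]
      exact ⟨hR.empty_mem j hj, Finset.empty_subset _⟩
  · intro j hj A B hAB hB
    by_cases hji : j = i
    · subst hji
      simp only [if_pos] at hB ⊢
      exact ⟨hAB.trans hB.1, hR.down j hj (Finset.insert_subset_insert v hAB) hB.2⟩
    · simp only [if_neg hji] at hB ⊢
      exact ⟨hR.down j hj hAB hB.1, hAB.trans hB.2⟩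
  · intro j hj A hA
    by_cases hji : j = i
    · subst hji; simp only [if_pos] at hA; exact hA.1
    · simp only [if_neg hji] at hA; exact hA.2
  · intro j hj h
    by_cases hji : j = i
    · subst hji
      simp only [if_pos, Set.mem_setOf_eq] at h
      have h2 := h.2
      rw [Finset.insert_erase hv] at h2
      exact hR.proper j hj h2
    · simp only [if_neg hji] at h
      exact hR.erase_notMem hJ3 hj hv h.1
  · intro A hAsub hpw
    have h := hR.unav (fun j => if j = i then insert v (A i) else A j) (by
      intro j hj
      by_cases hji : j = i
      · subst hji
        simp only [if_pos]
        exact Finset.insert_subset hv ((hAsub j hj).trans (Finset.erase_subset v W))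
      · simp only [if_neg hji]
        exact (hAsub j hj).trans (Finset.erase_subset v W))
      (by
        intro x hx y hy hxy
        simp only [Finset.mem_coe] at hx hy
        unfold Function.onFun
        have hva : ∀ z ∈ J, v ∉ A z := fun z hz hvz =>
          (Finset.mem_erase.mp (hAsub z hz hvz)).1 rfl
        by_cases hxi : x = i
        · have hyi : y ≠ i := fun h => hxy (hxi.trans h.symm)
          simp only [if_pos hxi, if_neg hyi]
          rw [Finset.disjoint_insert_left]
          refine ⟨hva y hy, ?_⟩
          have h2 : Disjoint (A x) (A y) := hpw (Finset.mem_coe.mpr hx) (Finset.mem_coe.mpr hy) hxy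
          rwa [hxi] at h2
        · by_cases hyi : y = i
          · simp only [if_pos hyi, if_neg hxi]
            rw [Finset.disjoint_insert_right]
            refine ⟨hva x hx, ?_⟩
            have h2 : Disjoint (A x) (A y) := hpw (Finset.mem_coe.mpr hx) (Finset.mem_coe.mpr hy) hxy
            rwa [hyi] at h2
          · simp only [if_neg hxi, if_neg hyi]
            exact hpw (Finset.mem_coe.mpr hx) (Finset.mem_coe.mpr hy) hxy)
    obtain ⟨j, hj, hKj⟩ := h
    by_cases hji : j = i
    · simp only [if_pos hji] at hKj
      refine ⟨j, hj, ?_⟩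
      rw [if_pos hji]
      rw [hji] at hKj ⊢
      exact ⟨hAsub i hi, hKj⟩
    · simp only [if_neg hji] at hKj
      refine ⟨j, hj, ?_⟩
      rw [if_neg hji]
      exact ⟨hKj, hAsub j hj⟩
  · intro A hA
    have hmem : ∀ j ∈ J, (if j = i then insert v (A i) else A j) ∈ K j := by
      intro j hj
      by_cases hji : j = i
      · subst hji
        simp only [if_pos]
        have := hA j hj
        simp only [if_pos] at this
        exact this.2
      · simp only [if_neg hji]
        have := hA j hj
        simp only [if_neg hji] at this
        exact this.1
    have h := hR.compl _ hmem
    have hAsub : ∀ j ∈ J, A j ⊆ W.erase v := by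
      intro j hj
      have := hA j hj
      by_cases hji : j = i
      · subst hji; simp only [if_pos] at this; exact this.1
      · simp only [if_neg hji] at this; exact this.2
    have heq : W \ J.biUnion (fun j => if j = i then insert v (A i) else A j)
        = (W.erase v) \ J.biUnion A := by
      ext x
      simp only [Finset.mem_sdiff, Finset.mem_erase, Finset.mem_biUnion]
      constructor
      · rintro ⟨hxW, hx⟩
        have hxv : x ≠ v := by
          intro hxveq
          exact hx ⟨i, hi, by simp only [if_pos]; rw [hxveq]; exact Finset.mem_insert_self _ _⟩
        refine ⟨⟨hxv, hxW⟩, ?_⟩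
        rintro ⟨j, hj, hxj⟩
        by_cases hji : j = i
        · subst hji
          exact hx ⟨j, hj, by simp only [if_pos]; exact Finset.mem_insert_of_mem hxj⟩
        · exact hx ⟨j, hj, by simp only [if_neg hji]; exact hxj⟩
      · rintro ⟨⟨hxv, hxW⟩, hx⟩
        refine ⟨hxW, ?_⟩
        rintro ⟨j, hj, hxj⟩
        by_cases hji : j = i
        · subst hji
          simp only [if_pos] at hxj
          rcases Finset.mem_insert.mp hxj with rfl | hxj
          · exact hxv rfl
          · exact hx ⟨j, hj, hxj⟩
        · simp only [if_neg hji] at hxj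
          exact hx ⟨j, hj, hxj⟩
    rw [heq] at h
    exact h

end RelSysSec
section MainSec

variable {V : Type*} [DecidableEq V] {ι : Type*} [DecidableEq ι]

lemma exists_third {J : Finset ι} (h3 : 3 ≤ J.card) (a b : ι) :
    ∃ c ∈ J, c ≠ a ∧ c ≠ b := by
  have h1 : J.card - 1 ≤ (J.erase a).card := Finset.pred_card_le_card_erase
  have h2 : (J.erase a).card - 1 ≤ ((J.erase a).erase b).card := Finset.pred_card_le_card_erase
  have : 0 < ((J.erase a).erase b).card := by omega
  obtain ⟨c, hc⟩ := Finset.card_pos.mp this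
  rcases Finset.mem_erase.mp hc with ⟨hcb, hc'⟩
  rcases Finset.mem_erase.mp hc' with ⟨hca, hcJ⟩
  exact ⟨c, hcJ, hca, hcb⟩

/-- Complexes with no vertices are trivial. -/
lemma RelSys.trivial_desc {J : Finset ι} {W : Finset V} {K : ι → Set (Finset V)}
    (hR : RelSys J W K) {i : ι} (hi : i ∈ J) (hsing : ∀ x ∈ W, {x} ∉ K i) :
    ∀ A : Finset V, A ∈ K i ↔ (A ⊆ W ∧ (A ∩ W).card ≤ 0) := by
  intro A
  constructor
  · intro hA
    have hAW : A ⊆ W := hR.subW i hi A hA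
    have hAe : A = ∅ := by
      by_contra h
      obtain ⟨x, hx⟩ := Finset.nonempty_iff_ne_empty.mpr h
      exact hsing x (hAW hx) (hR.down i hi (Finset.singleton_subset_iff.mpr hx) hA)
    subst hAe
    simp
  · rintro ⟨hAW, hc⟩
    rw [Finset.inter_eq_left.mpr hAW] at hc
    rw [Finset.card_eq_zero.mp (Nat.le_zero.mp hc)]
    exact hR.empty_mem i hi

lemma main_lemma : ∀ (k : ℕ) (J : Finset ι) (W : Finset V) (K : ι → Set (Finset V)),
    J.card + W.card ≤ k → 3 ≤ J.card → RelSys J W K →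
    ∃ (N : Finset V) (m : ι → ℕ), N ⊆ W ∧ N.card + 1 = (∑ j ∈ J, m j) + J.card ∧
      ∀ i ∈ J, ∀ A : Finset V, A ∈ K i ↔ (A ⊆ W ∧ (A ∩ N).card ≤ m i) := by
  classical
  intro k
  induction k with
  | zero =>
    intro J W K hk hJ3 _
    omega
  | succ k IH =>
    intro J W K hk hJ3 hR
    have hJne : J.Nonempty := Finset.card_pos.mp (by omega)
    have hWne : W.Nonempty := hR.W_nonempty hJne
    by_cases hgood : ∃ v ∈ W, ∀ i ∈ J, {v} ∈ K i
    · -- CASE A : link/deletion reduction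
      obtain ⟨v, hvW, hvK⟩ := hgood
      set W' := W.erase v with hW'def
      have hW'card : W'.card + 1 = W.card := Finset.card_erase_add_one hvW
      have hvW' : v ∉ W' := Finset.notMem_erase v W
      have hIH : ∀ i, i ∈ J → ∃ (N : Finset V) (m : ι → ℕ), N ⊆ W' ∧
          N.card + 1 = (∑ j ∈ J, m j) + J.card ∧
          ∀ j ∈ J, ∀ A : Finset V,
            A ∈ (if j = i then {A : Finset V | A ⊆ W' ∧ insert v A ∈ K i}
              else {A : Finset V | A ∈ K j ∧ A ⊆ W'}) ↔
            (A ⊆ W' ∧ (A ∩ N).card ≤ m j) := by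
        intro i hi
        exact IH J W' _ (by omega) hJ3 (relsys_linkdel hR hJ3 hvW hvK hi)
      choose! Nf mf hNsub hNcount hNdesc using hIH
      have hDdesc : ∀ i ∈ J, ∀ j ∈ J, j ≠ i → ∀ A : Finset V,
          (A ∈ K j ∧ A ⊆ W') ↔ (A ⊆ W' ∧ (A ∩ Nf i).card ≤ mf i j) := by
        intro i hi j hj hji A
        have := hNdesc i hi j hj A
        rwa [if_neg hji] at this
      have hLdesc : ∀ i ∈ J, ∀ A : Finset V,
          (A ⊆ W' ∧ insert v A ∈ K i) ↔ (A ⊆ W' ∧ (A ∩ Nf i).card ≤ mf i i) := by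
        intro i hi A
        have := hNdesc i hi i hi A
        rwa [if_pos rfl] at this
      have hW'notK : ∀ j ∈ J, W' ∉ K j := fun j hj => hR.erase_notMem hJ3 hj hvW
      have hprop : ∀ i ∈ J, ∀ j ∈ J, j ≠ i → mf i j < (Nf i).card := by
        intro i hi j hj hji
        by_contra hc
        push_neg at hc
        have := (hDdesc i hi j hj hji W').mpr ⟨subset_rfl, by
          rw [Finset.inter_eq_right.mpr (hNsub i hi)]; exact hc⟩
        exact hW'notK j hj this.1
      -- merging
      have hmerge : ∀ i ∈ J, ∀ i' ∈ J, ∀ j ∈ J, j ≠ i → j ≠ i' →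
          Nf i = Nf i' ∧ mf i j = mf i' j := by
        intro i hi i' hi' j hj hji hji'
        exact lemU (hNsub i hi) (hNsub i' hi')
          (fun A => Iff.trans ((hDdesc i hi j hj hji A).symm) (hDdesc i' hi' j hj hji' A))
          (hprop i hi j hj hji)
      obtain ⟨i₁, hi₁⟩ := hJne
      obtain ⟨i₂, hi₂J, hi₂1, -⟩ := exists_third hJ3 i₁ i₁
      have hNall : ∀ i ∈ J, Nf i = Nf i₁ := by
        intro i hi
        by_cases hii : i = i₁
        · rw [hii]
        · obtain ⟨j, hjJ, hji, hji₁⟩ := exists_third hJ3 i i₁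
          exact (hmerge i hi i₁ hi₁ j hjJ hji hji₁).1
      set N' := Nf i₁ with hN'def
      have hN'sub : N' ⊆ W' := hNsub i₁ hi₁
      set μ : ι → ℕ := fun j => if j = i₁ then mf i₂ i₁ else mf i₁ j with hμdef
      have hμeq : ∀ i ∈ J, ∀ j ∈ J, j ≠ i → mf i j = μ j := by
        intro i hi j hj hji
        rw [hμdef]
        by_cases hji₁ : j = i₁
        · simp only [if_pos hji₁]
          by_cases hii₂ : i = i₂
          · rw [hii₂, hji₁]
          · have hji₂ : j ≠ i₂ := fun h => hi₂1 (h ▸ hji₁)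
            have h2 := (hmerge i hi i₂ hi₂J j hj hji hji₂).2
            rw [hji₁] at h2
            rw [hji₁]
            exact h2
        · simp only [if_neg hji₁]
          by_cases hii₁ : i = i₁
          · rw [hii₁]
          · exact (hmerge i hi i₁ hi₁ j hj hji hji₁).2
      -- description of D j and L i in terms of N' and μ
      have hD : ∀ j ∈ J, ∀ A : Finset V,
          (A ∈ K j ∧ A ⊆ W') ↔ (A ⊆ W' ∧ (A ∩ N').card ≤ μ j) := by
        intro j hj A
        obtain ⟨i, hiJ, hij, -⟩ := exists_third hJ3 j j
        have := hDdesc i hiJ j hj (fun h => hij h.symm) A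
        rwa [hNall i hiJ, hμeq i hiJ j hj (fun h => hij h.symm)] at this
      have hL : ∀ i ∈ J, ∀ A : Finset V,
          (A ⊆ W' ∧ insert v A ∈ K i) ↔ (A ⊆ W' ∧ (A ∩ N').card ≤ mf i i) := by
        intro i hi A
        have := hLdesc i hi A
        rwa [hNall i hi] at this
      have hμprop : ∀ j ∈ J, μ j < N'.card := by
        intro j hj
        by_contra hc
        push_neg at hc
        have := (hD j hj W').mpr ⟨subset_rfl, by
          rw [Finset.inter_eq_right.mpr hN'sub]; exact hc⟩
        exact hW'notK j hj this.1
      have hmfle : ∀ i ∈ J, mf i i ≤ μ i := by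
        intro i hi
        by_contra hc
        push_neg at hc
        obtain ⟨T, hTN, hTc⟩ := Finset.exists_subset_card_eq
          (show μ i + 1 ≤ N'.card from hμprop i hi)
        have hTW : T ⊆ W' := hTN.trans hN'sub
        have hTL : T ⊆ W' ∧ insert v T ∈ K i := (hL i hi T).mpr ⟨hTW, by
          rw [Finset.inter_eq_left.mpr hTN]; omega⟩
        have hTD : T ∈ K i ∧ T ⊆ W' :=
          ⟨hR.down i hi (Finset.subset_insert v T) hTL.2, hTW⟩
        have := ((hD i hi T).mp hTD).2
        rw [Finset.inter_eq_left.mpr hTN] at this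
        omega
      -- count equations
      have hsum_i : ∀ i ∈ J, μ i + (N'.card + 1) = mf i i + (∑ j ∈ J, μ j) + J.card := by
        intro i hi
        have h1 := hNcount i hi
        rw [hNall i hi] at h1
        have h2 : ∑ j ∈ J, mf i j = mf i i + ∑ j ∈ J.erase i, mf i j :=
          (Finset.add_sum_erase J (mf i) hi).symm
        have h3 : ∑ j ∈ J.erase i, mf i j = ∑ j ∈ J.erase i, μ j := by
          apply Finset.sum_congr rfl
          intro j hj
          exact hμeq i hi j (Finset.mem_of_mem_erase hj) (Finset.ne_of_mem_erase hj)
        have h4 : μ i + ∑ j ∈ J.erase i, μ j = ∑ j ∈ J, μ j :=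
          Finset.add_sum_erase J μ hi
        omega
      -- the (D)-based upper bound
      have hupper : ∑ j ∈ J, μ j + J.card ≤ N'.card + 2 := by
        rcases le_or_gt (∑ j ∈ J, μ j) N'.card with hS | hS
        · obtain ⟨T, hT, hTpw⟩ := greedy_exact J μ N' hS
          set f : ι → Finset V := fun j => if j = i₁ then T j ∪ (W' \ N') else T j with hfdef
          have hTsub : ∀ j ∈ J, T j ⊆ N' := fun j hj => (hT j hj).1
          have hface : ∀ j ∈ J, f j ∈ K j := by
            intro j hj
            have hint : f j ∩ N' = T j := by
              rw [hfdef]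
              by_cases hji : j = i₁
              · simp only [if_pos hji]
                rw [Finset.union_inter_distrib_right]
                rw [Finset.inter_eq_left.mpr (hTsub j hj)]
                have : (W' \ N') ∩ N' = ∅ := by
                  apply Finset.eq_empty_of_forall_notMem
                  intro x hx
                  rcases Finset.mem_inter.mp hx with ⟨hx1, hx2⟩
                  exact (Finset.mem_sdiff.mp hx1).2 hx2
                rw [this, Finset.union_empty]
              · simp only [if_neg hji]
                exact Finset.inter_eq_left.mpr (hTsub j hj)
            have hsubW' : f j ⊆ W' := by
              rw [hfdef]
              by_cases hji : j = i₁
              · simp only [if_pos hji]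
                exact Finset.union_subset ((hTsub j hj).trans hN'sub) (Finset.sdiff_subset)
              · simp only [if_neg hji]
                exact (hTsub j hj).trans hN'sub
            exact ((hD j hj (f j)).mpr ⟨hsubW', by rw [hint, (hT j hj).2]⟩).1
          have hcompl := hR.compl f hface
          have hsub : W \ J.biUnion f ⊆ insert v (N' \ J.biUnion T) := by
            intro x hx
            rcases Finset.mem_sdiff.mp hx with ⟨hxW, hxf⟩
            by_cases hxv : x = v
            · exact Finset.mem_insert.mpr (Or.inl hxv)
            · have hxW' : x ∈ W' := Finset.mem_erase.mpr ⟨hxv, hxW⟩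
              have hxN' : x ∈ N' := by
                by_contra hxN
                apply hxf
                refine Finset.mem_biUnion.mpr ⟨i₁, hi₁, ?_⟩
                rw [hfdef]
                simp only [if_pos]
                exact Finset.mem_union_right _ (Finset.mem_sdiff.mpr ⟨hxW', hxN⟩)
              refine Finset.mem_insert.mpr (Or.inr (Finset.mem_sdiff.mpr ⟨hxN', ?_⟩))
              intro hc
              rcases Finset.mem_biUnion.mp hc with ⟨j, hj, hxj⟩
              apply hxf
              refine Finset.mem_biUnion.mpr ⟨j, hj, ?_⟩
              rw [hfdef]
              by_cases hji : j = i₁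
              · simp only [if_pos hji]
                exact Finset.mem_union_left _ hxj
              · simp only [if_neg hji]
                exact hxj
          have hTbU : J.biUnion T ⊆ N' := Finset.biUnion_subset.mpr hTsub
          have hTcard : (J.biUnion T).card = ∑ j ∈ J, μ j := by
            rw [Finset.card_biUnion (fun x hx y hy hxy => hTpw hx hy hxy)]
            exact Finset.sum_congr rfl (fun j hj => (hT j hj).2)
          have hc1 : (N' \ J.biUnion T).card = N'.card - ∑ j ∈ J, μ j := by
            rw [Finset.card_sdiff_of_subset hTbU, hTcard]
          have hc2 := Finset.card_le_card hsub
          have hc3 := Finset.card_insert_le v (N' \ J.biUnion T)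
          omega
        · exfalso
          obtain ⟨T, hT, hTcov⟩ := greedy_cover J μ N' (le_of_lt hS)
          set f : ι → Finset V := fun j => if j = i₁ then T j ∪ (W' \ N') else T j with hfdef
          have hTsub : ∀ j ∈ J, T j ⊆ N' := fun j hj => (hT j hj).1
          have hface : ∀ j ∈ J, f j ∈ K j := by
            intro j hj
            have hint : f j ∩ N' = T j := by
              rw [hfdef]
              by_cases hji : j = i₁
              · simp only [if_pos hji]
                rw [Finset.union_inter_distrib_right]
                rw [Finset.inter_eq_left.mpr (hTsub j hj)]
                have : (W' \ N') ∩ N' = ∅ := by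
                  apply Finset.eq_empty_of_forall_notMem
                  intro x hx
                  rcases Finset.mem_inter.mp hx with ⟨hx1, hx2⟩
                  exact (Finset.mem_sdiff.mp hx1).2 hx2
                rw [this, Finset.union_empty]
              · simp only [if_neg hji]
                exact Finset.inter_eq_left.mpr (hTsub j hj)
            have hsubW' : f j ⊆ W' := by
              rw [hfdef]
              by_cases hji : j = i₁
              · simp only [if_pos hji]
                exact Finset.union_subset ((hTsub j hj).trans hN'sub) (Finset.sdiff_subset)
              · simp only [if_neg hji]
                exact (hTsub j hj).trans hN'sub
            exact ((hD j hj (f j)).mpr ⟨hsubW', by rw [hint]; exact (hT j hj).2⟩).1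
          have hcompl := hR.compl f hface
          have hsub : W \ J.biUnion f ⊆ {v} := by
            intro x hx
            rcases Finset.mem_sdiff.mp hx with ⟨hxW, hxf⟩
            by_cases hxv : x = v
            · simp [hxv]
            · exfalso
              have hxW' : x ∈ W' := Finset.mem_erase.mpr ⟨hxv, hxW⟩
              by_cases hxN' : x ∈ N'
              · rw [← hTcov] at hxN'
                rcases Finset.mem_biUnion.mp hxN' with ⟨j, hj, hxj⟩
                apply hxf
                refine Finset.mem_biUnion.mpr ⟨j, hj, ?_⟩
                rw [hfdef]
                by_cases hji : j = i₁
                · simp only [if_pos hji]; exact Finset.mem_union_left _ hxj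
                · simp only [if_neg hji]; exact hxj
              · apply hxf
                refine Finset.mem_biUnion.mpr ⟨i₁, hi₁, ?_⟩
                rw [hfdef]
                simp only [if_pos]
                exact Finset.mem_union_right _ (Finset.mem_sdiff.mpr ⟨hxW', hxN'⟩)
          have := Finset.card_le_card hsub
          simp only [Finset.card_singleton] at this
          omega
      have hlower : N'.card + 1 ≤ ∑ j ∈ J, μ j + J.card := by
        have h1 := hsum_i i₁ hi₁
        have h2 := hmfle i₁ hi₁
        omega
      -- bookkeeping of t
      by_cases ht : ∑ j ∈ J, μ j + J.card = N'.card + 1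
      · -- t = 0, take N := N'
        have hmfeq : ∀ i ∈ J, mf i i = μ i := by
          intro i hi
          have := hsum_i i hi
          omega
        refine ⟨N', μ, hN'sub.trans (Finset.erase_subset v W), ht.symm ▸ rfl, ?_⟩
        intro i hi A
        constructor
        · intro hA
          have hAW : A ⊆ W := hR.subW i hi A hA
          refine ⟨hAW, ?_⟩
          by_cases hvA : v ∈ A
          · have h1 : A.erase v ⊆ W' := Finset.erase_subset_erase v hAW
            have h2 : insert v (A.erase v) ∈ K i := by
              rw [Finset.insert_erase hvA]; exact hA
            have h3 := ((hL i hi (A.erase v)).mp ⟨h1, h2⟩).2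
            have h4 : A.erase v ∩ N' = A ∩ N' := by
              ext x
              simp only [Finset.mem_inter, Finset.mem_erase]
              constructor
              · rintro ⟨⟨-, hx⟩, hxN⟩; exact ⟨hx, hxN⟩
              · rintro ⟨hx, hxN⟩
                refine ⟨⟨fun h => hvW' (hN'sub (by rw [← h]; exact hxN)), hx⟩, hxN⟩
            rw [h4] at h3
            have := hmfeq i hi
            omega
          · have hAW' : A ⊆ W' := Finset.subset_erase.mpr ⟨hAW, hvA⟩
            exact ((hD i hi A).mp ⟨hA, hAW'⟩).2
        · rintro ⟨hAW, hAc⟩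
          by_cases hvA : v ∈ A
          · have h1 : A.erase v ⊆ W' := Finset.erase_subset_erase v hAW
            have h4 : A.erase v ∩ N' = A ∩ N' := by
              ext x
              simp only [Finset.mem_inter, Finset.mem_erase]
              constructor
              · rintro ⟨⟨-, hx⟩, hxN⟩; exact ⟨hx, hxN⟩
              · rintro ⟨hx, hxN⟩
                refine ⟨⟨fun h => hvW' (hN'sub (by rw [← h]; exact hxN)), hx⟩, hxN⟩
            have h2 := (hL i hi (A.erase v)).mpr ⟨h1, by rw [h4]; rw [hmfeq i hi]; exact hAc⟩
            have := h2.2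
            rwa [Finset.insert_erase hvA] at this
          · have hAW' : A ⊆ W' := Finset.subset_erase.mpr ⟨hAW, hvA⟩
            exact ((hD i hi A).mpr ⟨hAW', hAc⟩).1
      · -- t = 1, take N := insert v N'
        have ht1 : ∑ j ∈ J, μ j + J.card = N'.card + 2 := by omega
        have hmfeq : ∀ i ∈ J, mf i i + 1 = μ i := by
          intro i hi
          have := hsum_i i hi
          omega
        have hvN' : v ∉ N' := fun h => hvW' (hN'sub h)
        refine ⟨insert v N', μ, Finset.insert_subset hvW (hN'sub.trans (Finset.erase_subset v W)),
          by rw [Finset.card_insert_of_notMem hvN']; omega, ?_⟩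
        intro i hi A
        have hintv : v ∈ A → (A ∩ insert v N').card = (A.erase v ∩ N').card + 1 := by
          intro hvA
          have : A ∩ insert v N' = insert v (A.erase v ∩ N') := by
            ext x
            simp only [Finset.mem_inter, Finset.mem_insert, Finset.mem_erase]
            constructor
            · rintro ⟨hxA, hx | hxN⟩
              · exact Or.inl hx
              · by_cases hxv : x = v
                · exact Or.inl hxv
                · exact Or.inr ⟨⟨hxv, hxA⟩, hxN⟩
            · rintro (hx | ⟨⟨hxv, hxA⟩, hxN⟩)
              · exact ⟨hx ▸ hvA, Or.inl hx⟩
              · exact ⟨hxA, Or.inr hxN⟩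
          rw [this, Finset.card_insert_of_notMem]
          intro hc
          exact hvN' (Finset.mem_inter.mp hc).2
        have hintnv : v ∉ A → A ∩ insert v N' = A ∩ N' := by
          intro hvA
          ext x
          simp only [Finset.mem_inter, Finset.mem_insert]
          constructor
          · rintro ⟨hxA, hx | hxN⟩
            · exact absurd (hx ▸ hxA) hvA
            · exact ⟨hxA, hxN⟩
          · rintro ⟨hxA, hxN⟩
            exact ⟨hxA, Or.inr hxN⟩
        constructor
        · intro hA
          have hAW : A ⊆ W := hR.subW i hi A hA
          refine ⟨hAW, ?_⟩
          by_cases hvA : v ∈ A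
          · have h1 : A.erase v ⊆ W' := Finset.erase_subset_erase v hAW
            have h2 : insert v (A.erase v) ∈ K i := by
              rw [Finset.insert_erase hvA]; exact hA
            have h3 := ((hL i hi (A.erase v)).mp ⟨h1, h2⟩).2
            rw [hintv hvA]
            have := hmfeq i hi
            omega
          · rw [hintnv hvA]
            have hAW' : A ⊆ W' := Finset.subset_erase.mpr ⟨hAW, hvA⟩
            have := ((hD i hi A).mp ⟨hA, hAW'⟩).2
            omega
        · rintro ⟨hAW, hAc⟩
          by_cases hvA : v ∈ A
          · have h1 : A.erase v ⊆ W' := Finset.erase_subset_erase v hAW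
            rw [hintv hvA] at hAc
            have h2 := (hL i hi (A.erase v)).mpr ⟨h1, by
              have := hmfeq i hi; omega⟩
            have := h2.2
            rwa [Finset.insert_erase hvA] at this
          · rw [hintnv hvA] at hAc
            have hAW' : A ⊆ W' := Finset.subset_erase.mpr ⟨hAW, hvA⟩
            exact ((hD i hi A).mpr ⟨hAW', hAc⟩).1
    · -- CASE B
      push_neg at hgood
      -- every vertex is a non-vertex of some complex
      by_cases hJ4 : 4 ≤ J.card
      · -- CASE B, r ≥ 4
        obtain ⟨v₀, hv₀W⟩ := hWne
        obtain ⟨i₀, hi₀J, hv₀K⟩ := hgood v₀ hv₀W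
        have hJ'3 : 3 ≤ (J.erase i₀).card := by
          rw [Finset.card_erase_of_mem hi₀J]; omega
        have hJ'card : (J.erase i₀).card + 1 = J.card := by
          rw [Finset.card_erase_of_mem hi₀J]; omega
        -- hb1 : full skeleton description of all other complexes after deleting a bad vertex
        have hb1 : ∀ u ∈ W, {u} ∉ K i₀ → ∃ m' : ι → ℕ,
            ((∑ j ∈ J.erase i₀, m' j) + J.card = W.card + 1) ∧
            ∀ j ∈ J.erase i₀, ∀ A : Finset V, A ⊆ W.erase u → (A ∈ K j ↔ A.card ≤ m' j) := by
          intro u huW huK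
          have hRu := relsys_erase hR hJ3 hi₀J huW huK
          have hucard : (W.erase u).card + 1 = W.card := Finset.card_erase_add_one huW
          obtain ⟨N₁, m₁, hN₁sub, hN₁count, hN₁desc⟩ :=
            IH (J.erase i₀) (W.erase u) _ (by omega) hJ'3 hRu
          -- membership translation
          have hN₁desc' : ∀ j ∈ J.erase i₀, ∀ A : Finset V, A ⊆ W.erase u →
              (A ∈ K j ↔ (A ∩ N₁).card ≤ m₁ j) := by
            intro j hj A hA
            have := hN₁desc j hj A
            simp only [Set.mem_setOf_eq] at this
            constructor
            · intro h; exact (this.mp ⟨h, hA⟩).2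
            · intro h; exact (this.mpr ⟨hA, h⟩).1
          by_cases hNW : N₁ = W.erase u
          · rw [hNW] at hN₁count
            refine ⟨m₁, by omega, ?_⟩
            intro j hj A hA
            have := hN₁desc' j hj A hA
            rwa [hNW, Finset.inter_eq_left.mpr hA] at this
          · exfalso
            have hss : N₁ ⊂ W.erase u := Finset.ssubset_iff_subset_ne.mpr ⟨hN₁sub, hNW⟩
            obtain ⟨x, hxW', hxN₁⟩ := Finset.exists_of_ssubset hss
            have hxW : x ∈ W := Finset.mem_of_mem_erase hxW'
            have hxu : x ≠ u := (Finset.mem_erase.mp hxW').1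
            have hxKj : ∀ j ∈ J.erase i₀, {x} ∈ K j := by
              intro j hj
              refine (hN₁desc' j hj {x} (Finset.singleton_subset_iff.mpr hxW')).mpr ?_
              have : {x} ∩ N₁ = ∅ := by
                apply Finset.eq_empty_of_forall_notMem
                intro y hy
                rcases Finset.mem_inter.mp hy with ⟨hy1, hy2⟩
                rw [Finset.mem_singleton] at hy1
                exact hxN₁ (hy1 ▸ hy2)
              rw [this]
              simp
            have hxK0 : {x} ∉ K i₀ := by
              intro hc
              obtain ⟨i, hiJ, hiK⟩ := hgood x hxW
              by_cases hii : i = i₀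
              · rw [hii] at hiK; exact hiK hc
              · exact hiK (hxKj i (Finset.mem_erase.mpr ⟨hii, hiJ⟩))
            have hRx := relsys_erase hR hJ3 hi₀J hxW hxK0
            have hxcard : (W.erase x).card + 1 = W.card := Finset.card_erase_add_one hxW
            obtain ⟨N₂, m₂, hN₂sub, hN₂count, hN₂desc⟩ :=
              IH (J.erase i₀) (W.erase x) _ (by omega) hJ'3 hRx
            have hN₂desc' : ∀ j ∈ J.erase i₀, ∀ A : Finset V, A ⊆ W.erase x →
                (A ∈ K j ↔ (A ∩ N₂).card ≤ m₂ j) := by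
              intro j hj A hA
              have := hN₂desc j hj A
              simp only [Set.mem_setOf_eq] at this
              constructor
              · intro h; exact (this.mp ⟨h, hA⟩).2
              · intro h; exact (this.mpr ⟨hA, h⟩).1
            -- the common ground
            set G := (W.erase u).erase x with hGdef
            have hGu : G ⊆ W.erase u := Finset.erase_subset x (W.erase u)
            have hGx : G ⊆ W.erase x := by
              rw [hGdef, Finset.erase_right_comm]
              exact Finset.erase_subset u (W.erase x)
            have hGnotK : ∀ j ∈ J.erase i₀, G ∉ K j := fun j hj =>
              hR.erase2_notMem hJ4 (Finset.mem_of_mem_erase hj)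
            have hN₁G : N₁ ⊆ G := by
              intro y hy
              exact Finset.mem_erase.mpr ⟨fun h => hxN₁ (h ▸ hy), hN₁sub hy⟩
            have hN₂G : N₂.erase u ⊆ G := by
              intro y hy
              rcases Finset.mem_erase.mp hy with ⟨hyu, hyN₂⟩
              rw [hGdef, Finset.erase_right_comm]
              exact Finset.mem_erase.mpr ⟨hyu, hN₂sub hyN₂⟩
            have hiff : ∀ j ∈ J.erase i₀, ∀ A : Finset V,
                (A ⊆ G ∧ (A ∩ N₁).card ≤ m₁ j) ↔ (A ⊆ G ∧ (A ∩ N₂.erase u).card ≤ m₂ j) := by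
              intro j hj A
              constructor
              · rintro ⟨hAG, hAc⟩
                refine ⟨hAG, ?_⟩
                have hmem : A ∈ K j := (hN₁desc' j hj A (hAG.trans hGu)).mpr hAc
                have h2 := (hN₂desc' j hj A (hAG.trans hGx)).mp hmem
                have he : A ∩ N₂.erase u = A ∩ N₂ := by
                  ext y
                  simp only [Finset.mem_inter, Finset.mem_erase]
                  constructor
                  · rintro ⟨hy1, -, hy2⟩; exact ⟨hy1, hy2⟩
                  · rintro ⟨hy1, hy2⟩
                    exact ⟨hy1, fun h => (Finset.mem_erase.mp (hGu (hAG hy1))).1 h, hy2⟩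
                rwa [he]
              · rintro ⟨hAG, hAc⟩
                refine ⟨hAG, ?_⟩
                have he : A ∩ N₂.erase u = A ∩ N₂ := by
                  ext y
                  simp only [Finset.mem_inter, Finset.mem_erase]
                  constructor
                  · rintro ⟨hy1, -, hy2⟩; exact ⟨hy1, hy2⟩
                  · rintro ⟨hy1, hy2⟩
                    exact ⟨hy1, fun h => (Finset.mem_erase.mp (hGu (hAG hy1))).1 h, hy2⟩
                rw [he] at hAc
                have hmem : A ∈ K j := (hN₂desc' j hj A (hAG.trans hGx)).mpr hAc
                exact (hN₁desc' j hj A (hAG.trans hGu)).mp hmem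
            have hμ1 : ∀ j ∈ J.erase i₀, m₁ j < N₁.card := by
              intro j hj
              by_contra hc
              push_neg at hc
              have := (hN₁desc' j hj G hGu).mpr (by
                rw [Finset.inter_eq_right.mpr hN₁G]; exact hc)
              exact hGnotK j hj this
            have hall : ∀ j ∈ J.erase i₀, N₁ = N₂.erase u ∧ m₁ j = m₂ j := fun j hj =>
              lemU hN₁G hN₂G (hiff j hj) (hμ1 j hj)
            obtain ⟨j', hj'⟩ := Finset.card_pos.mp (show 0 < (J.erase i₀).card by omega)
            have hsumeq : ∑ j ∈ J.erase i₀, m₁ j = ∑ j ∈ J.erase i₀, m₂ j :=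
              Finset.sum_congr rfl (fun j hj => (hall j hj).2)
            by_cases huN₂ : u ∈ N₂
            · -- cardinality contradiction
              have h1 := (hall j' hj').1
              have h2 : (N₂.erase u).card + 1 = N₂.card := Finset.card_erase_add_one huN₂
              have h3 : N₁.card = (N₂.erase u).card := by rw [h1]
              omega
            · -- main (D)-violation
              have hN₂N₁ : N₂ = N₁ := by
                have h1 := (hall j' hj').1
                rw [Finset.erase_eq_of_notMem huN₂] at h1
                exact h1.symm
              -- choose two distinct indices
              obtain ⟨j₁, hj₁, j₂, hj₂, hj₁₂⟩ := Finset.one_lt_card.mp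
                (show 1 < (J.erase i₀).card by omega)
              -- disjoint subsets of N₁ of sizes m₁ j
              have hsle : ∑ j ∈ J.erase i₀, m₁ j ≤ N₁.card := by omega
              obtain ⟨T, hT, hTpw⟩ := greedy_exact (J.erase i₀) m₁ N₁ hsle
              have hTsub : ∀ j ∈ J.erase i₀, T j ⊆ N₁ := fun j hj => (hT j hj).1
              set f : ι → Finset V := fun j =>
                if j = j₁ then (W.erase x) \ (N₁ \ T j₁)
                else if j = j₂ then insert x (T j₂)
                else if j ∈ J.erase i₀ then T j else ∅ with hfdef
              have hj₁J : j₁ ∈ J := Finset.mem_of_mem_erase hj₁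
              have hj₂J : j₂ ∈ J := Finset.mem_of_mem_erase hj₂
              have hface : ∀ j ∈ J, f j ∈ K j := by
                intro j hj
                rw [hfdef]
                by_cases h1 : j = j₁
                · simp only [if_pos h1]
                  rw [h1]
                  refine (hN₂desc' j₁ hj₁ _ (Finset.sdiff_subset)).mpr ?_
                  have hint : ((W.erase x) \ (N₁ \ T j₁)) ∩ N₂ = T j₁ := by
                    rw [hN₂N₁]
                    ext y
                    simp only [Finset.mem_inter, Finset.mem_sdiff, Finset.mem_erase]
                    constructor
                    · rintro ⟨⟨-, hy2⟩, hy3⟩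
                      by_contra hyT
                      exact hy2 ⟨hy3, hyT⟩
                    · intro hyT
                      have hyN : y ∈ N₁ := hTsub j₁ hj₁ hyT
                      refine ⟨⟨⟨fun h => hxN₁ (h ▸ hyN), ?_⟩, fun hc => hc.2 hyT⟩, hN₂N₁ ▸ hyN⟩
                      exact Finset.mem_of_mem_erase (hN₁sub hyN)
                  rw [hint, (hT j₁ hj₁).2]
                  exact (hall j₁ hj₁).2.le
                · simp only [if_neg h1]
                  by_cases h2 : j = j₂
                  · simp only [if_pos h2]
                    rw [h2]
                    refine (hN₁desc' j₂ hj₂ _ ?_).mpr ?_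
                    · exact Finset.insert_subset hxW' ((hTsub j₂ hj₂).trans hN₁sub)
                    · have hint : (insert x (T j₂)) ∩ N₁ = T j₂ := by
                        ext y
                        simp only [Finset.mem_inter, Finset.mem_insert]
                        constructor
                        · rintro ⟨hy1 | hy1, hy2⟩
                          · exact absurd (hy1 ▸ hy2) hxN₁
                          · exact hy1
                        · intro hyT
                          exact ⟨Or.inr hyT, hTsub j₂ hj₂ hyT⟩
                      rw [hint, (hT j₂ hj₂).2]
                  · simp only [if_neg h2]
                    by_cases h3 : j ∈ J.erase i₀
                    · simp only [if_pos h3]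
                      refine (hN₁desc' j h3 _ ((hTsub j h3).trans hN₁sub)).mpr ?_
                      rw [Finset.inter_eq_left.mpr (hTsub j h3), (hT j h3).2]
                    · simp only [if_neg h3]
                      exact hR.empty_mem j hj
              have hcompl := hR.compl f hface
              have hsub : W \ J.biUnion f ⊆ N₁ \ (J.erase i₀).biUnion T := by
                intro y hy
                rcases Finset.mem_sdiff.mp hy with ⟨hyW, hyf⟩
                have hyx : y ≠ x := by
                  intro h
                  apply hyf
                  refine Finset.mem_biUnion.mpr ⟨j₂, hj₂J, ?_⟩
                  rw [hfdef]
                  have hj₂₁ : j₂ ≠ j₁ := fun hc => hj₁₂ hc.symm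
                  simp only [if_neg hj₂₁, if_pos]
                  rw [h]
                  exact Finset.mem_insert_self x _
                have hyN₁ : y ∈ N₁ := by
                  by_contra hyN
                  apply hyf
                  refine Finset.mem_biUnion.mpr ⟨j₁, hj₁J, ?_⟩
                  rw [hfdef]
                  simp only [if_pos]
                  refine Finset.mem_sdiff.mpr ⟨Finset.mem_erase.mpr ⟨hyx, hyW⟩, ?_⟩
                  intro hc
                  exact hyN (Finset.mem_sdiff.mp hc).1
                refine Finset.mem_sdiff.mpr ⟨hyN₁, ?_⟩
                intro hc
                rcases Finset.mem_biUnion.mp hc with ⟨j, hj, hyT⟩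
                apply hyf
                refine Finset.mem_biUnion.mpr ⟨j, Finset.mem_of_mem_erase hj, ?_⟩
                rw [hfdef]
                by_cases h1 : j = j₁
                · simp only [if_pos h1]
                  rw [h1] at hyT
                  refine Finset.mem_sdiff.mpr ⟨?_, fun hc2 => (Finset.mem_sdiff.mp hc2).2 hyT⟩
                  exact Finset.mem_erase.mpr ⟨hyx, hyW⟩
                · simp only [if_neg h1]
                  by_cases h2 : j = j₂
                  · simp only [if_pos h2]
                    rw [h2] at hyT
                    exact Finset.mem_insert_of_mem hyT
                  · simp only [if_neg h2, if_pos hj]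
                    exact hyT
              have hTbU : (J.erase i₀).biUnion T ⊆ N₁ := Finset.biUnion_subset.mpr hTsub
              have hTcard : ((J.erase i₀).biUnion T).card = ∑ j ∈ J.erase i₀, m₁ j := by
                rw [Finset.card_biUnion (fun a ha b hb hab => hTpw ha hb hab)]
                exact Finset.sum_congr rfl (fun j hj => (hT j hj).2)
              have hc1 : (N₁ \ (J.erase i₀).biUnion T).card = N₁.card - ∑ j ∈ J.erase i₀, m₁ j := by
                rw [Finset.card_sdiff_of_subset hTbU, hTcard]
              have hc2 := Finset.card_le_card hsub
              omega
        -- (b2) : K i₀ has no vertices at all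
        obtain ⟨m, hmcount, hmdesc⟩ := hb1 v₀ hv₀W hv₀K
        have hK0 : ∀ w ∈ W, {w} ∉ K i₀ := by
          intro w hwW hwK
          by_cases hwv : w = v₀
          · rw [hwv] at hwK; exact hv₀K hwK
          · have hwe : w ∈ W.erase v₀ := Finset.mem_erase.mpr ⟨hwv, hwW⟩
            have hscard : ((W.erase v₀).erase w).card + 2 = W.card := by
              rw [Finset.card_erase_of_mem hwe, Finset.card_erase_of_mem hv₀W]
              have h2 : 2 ≤ W.card := by
                have := Finset.one_lt_card.mpr ⟨v₀, hv₀W, w, hwW, fun h => hwv h.symm⟩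
                omega
              omega
            have hsle : ∑ j ∈ J.erase i₀, m j ≤ ((W.erase v₀).erase w).card := by omega
            obtain ⟨T, hT, hTpw⟩ := greedy_exact (J.erase i₀) m _ hsle
            have hTsub : ∀ j ∈ J.erase i₀, T j ⊆ (W.erase v₀).erase w :=
              fun j hj => (hT j hj).1
            set f : ι → Finset V := fun j =>
              if j = i₀ then {w} else if j ∈ J.erase i₀ then T j else ∅ with hfdef
            have hface : ∀ j ∈ J, f j ∈ K j := by
              intro j hj
              rw [hfdef]
              by_cases h1 : j = i₀
              · simp only [if_pos h1]
                rw [h1]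
                exact hwK
              · simp only [if_neg h1]
                have hj' : j ∈ J.erase i₀ := Finset.mem_erase.mpr ⟨h1, hj⟩
                simp only [if_pos hj']
                refine (hmdesc j hj' (T j) ((hTsub j hj').trans (Finset.erase_subset _ _))).mpr ?_
                rw [(hT j hj').2]
            have hcompl := hR.compl f hface
            have hins : insert w ((J.erase i₀).biUnion T) ⊆ J.biUnion f := by
              intro y hy
              rcases Finset.mem_insert.mp hy with rfl | hy
              · refine Finset.mem_biUnion.mpr ⟨i₀, hi₀J, ?_⟩
                rw [hfdef]
                simp only [if_pos]
                exact Finset.mem_singleton_self y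
              · rcases Finset.mem_biUnion.mp hy with ⟨j, hj, hyT⟩
                refine Finset.mem_biUnion.mpr ⟨j, Finset.mem_of_mem_erase hj, ?_⟩
                rw [hfdef]
                have h1 : j ≠ i₀ := (Finset.mem_erase.mp hj).1
                simp only [if_neg h1, if_pos hj]
                exact hyT
            have hsub : W \ J.biUnion f ⊆ W \ insert w ((J.erase i₀).biUnion T) :=
              Finset.sdiff_subset_sdiff (Finset.Subset.refl W) hins
            have hinsW : insert w ((J.erase i₀).biUnion T) ⊆ W := by
              refine Finset.insert_subset hwW ?_
              refine Finset.biUnion_subset.mpr (fun j hj => ?_)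
              exact (hTsub j hj).trans ((Finset.erase_subset _ _).trans (Finset.erase_subset _ _))
            have hwT : w ∉ (J.erase i₀).biUnion T := by
              intro hc
              rcases Finset.mem_biUnion.mp hc with ⟨j, hj, hyT⟩
              exact (Finset.mem_erase.mp (hTsub j hj hyT)).1 rfl
            have hTcard : ((J.erase i₀).biUnion T).card = ∑ j ∈ J.erase i₀, m j := by
              rw [Finset.card_biUnion (fun a ha b hb hab => hTpw ha hb hab)]
              exact Finset.sum_congr rfl (fun j hj => (hT j hj).2)
            have hc1 : (insert w ((J.erase i₀).biUnion T)).card = (∑ j ∈ J.erase i₀, m j) + 1 := by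
              rw [Finset.card_insert_of_notMem hwT, hTcard]
            have hc2 := Finset.card_le_card hsub
            rw [Finset.card_sdiff_of_subset hinsW, hc1] at hc2
            have hc3 := Finset.card_le_card hinsW
            omega
        -- (b3) : consistency across the choice of deleted vertex
        have hdesc_u : ∀ u ∈ W, ∀ j ∈ J.erase i₀, ∀ A : Finset V, A ⊆ W.erase u →
            (A ∈ K j ↔ A.card ≤ m j) := by
          intro u huW j hj A hAsub
          by_cases huv : u = v₀
          · exact hmdesc j hj A (huv ▸ hAsub)
          · obtain ⟨m', hm'count, hm'desc⟩ := hb1 u huW (hK0 u huW)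
            suffices hmm : m' j = m j by
              rw [← hmm]
              exact hm'desc j hj A hAsub
            set G := (W.erase v₀).erase u with hGdef
            have hGv₀ : G ⊆ W.erase v₀ := Finset.erase_subset u (W.erase v₀)
            have hGu : G ⊆ W.erase u := by
              rw [hGdef, Finset.erase_right_comm]
              exact Finset.erase_subset v₀ (W.erase u)
            have hGnot : G ∉ K j := hR.erase2_notMem hJ4 (Finset.mem_of_mem_erase hj)
            have hiff : ∀ B : Finset V,
                (B ⊆ G ∧ (B ∩ G).card ≤ m j) ↔ (B ⊆ G ∧ (B ∩ G).card ≤ m' j) := by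
              intro B
              constructor
              · rintro ⟨hBG, hBc⟩
                rw [Finset.inter_eq_left.mpr hBG] at hBc
                refine ⟨hBG, ?_⟩
                rw [Finset.inter_eq_left.mpr hBG]
                have hmem : B ∈ K j := (hmdesc j hj B (hBG.trans hGv₀)).mpr hBc
                exact (hm'desc j hj B (hBG.trans hGu)).mp hmem
              · rintro ⟨hBG, hBc⟩
                rw [Finset.inter_eq_left.mpr hBG] at hBc
                refine ⟨hBG, ?_⟩
                rw [Finset.inter_eq_left.mpr hBG]
                have hmem : B ∈ K j := (hm'desc j hj B (hBG.trans hGu)).mpr hBc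
                exact (hmdesc j hj B (hBG.trans hGv₀)).mp hmem
            have hμG : m j < G.card := by
              by_contra hc
              push_neg at hc
              exact hGnot ((hmdesc j hj G hGv₀).mpr hc)
            have := lemU (Finset.Subset.refl G) (Finset.Subset.refl G) hiff hμG
            omega
        -- m j is small
        have hmleW : ∀ j ∈ J.erase i₀, m j + 3 ≤ W.card := by
          intro j hj
          have h1 : m j ≤ ∑ j' ∈ J.erase i₀, m j' :=
            Finset.single_le_sum (fun _ _ => Nat.zero_le _) hj
          omega
        -- final assembly
        refine ⟨W, fun j => if j = i₀ then 0 else m j, Finset.Subset.refl W, ?_, ?_⟩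
        · have hsum : ∑ j ∈ J, (if j = i₀ then 0 else m j) = ∑ j ∈ J.erase i₀, m j := by
            rw [← Finset.add_sum_erase J _ hi₀J]
            simp only [if_pos]
            rw [Nat.zero_add]
            exact Finset.sum_congr rfl (fun j hj => by
              simp only [if_neg (Finset.mem_erase.mp hj).1])
          rw [hsum]
          omega
        · intro i hi A
          by_cases hii : i = i₀
          · simp only [if_pos hii]
            rw [hii]
            have := hR.trivial_desc hi₀J hK0 A
            exact this
          · simp only [if_neg hii]
            have hj : i ∈ J.erase i₀ := Finset.mem_erase.mpr ⟨hii, hi⟩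
            constructor
            · intro hA
              have hAW : A ⊆ W := hR.subW i hi A hA
              refine ⟨hAW, ?_⟩
              rw [Finset.inter_eq_left.mpr hAW]
              have hAne : A ≠ W := fun h => hR.proper i hi (h ▸ hA)
              have hss : A ⊂ W := Finset.ssubset_iff_subset_ne.mpr ⟨hAW, hAne⟩
              obtain ⟨u, huW, huA⟩ := Finset.exists_of_ssubset hss
              exact (hdesc_u u huW i hj A (Finset.subset_erase.mpr ⟨hAW, huA⟩)).mp hA
            · rintro ⟨hAW, hAc⟩
              rw [Finset.inter_eq_left.mpr hAW] at hAc
              have hAlt : A.card < W.card := by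
                have := hmleW i hj
                omega
              have : (W \ A).Nonempty := by
                rw [← Finset.card_pos, Finset.card_sdiff_of_subset hAW]
                omega
              obtain ⟨u, hu⟩ := this
              rcases Finset.mem_sdiff.mp hu with ⟨huW, huA⟩
              exact (hdesc_u u huW i hj A (Finset.subset_erase.mpr ⟨hAW, huA⟩)).mpr hAc
      · -- CASE B, r = 3
        have hJcard : J.card = 3 := by omega
        -- three-element index set helper
        have hcov3 : ∀ a b c : ι, a ∈ J → b ∈ J → c ∈ J → a ≠ b → a ≠ c → b ≠ c →
            ∀ i ∈ J, i = a ∨ i = b ∨ i = c := by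
          intro a b c haJ hbJ hcJ hab hac hbc i hi
          have hsub : ({a, b, c} : Finset ι) ⊆ J := by
            intro y hy
            simp only [Finset.mem_insert, Finset.mem_singleton] at hy
            rcases hy with rfl | rfl | rfl
            · exact haJ
            · exact hbJ
            · exact hcJ
          have hcard : ({a, b, c} : Finset ι).card = 3 := by
            rw [Finset.card_insert_of_notMem (by simp [hab, hac]),
              Finset.card_insert_of_notMem (by simp [hbc]), Finset.card_singleton]
          have heq : ({a, b, c} : Finset ι) = J :=
            Finset.eq_of_subset_of_card_le hsub (by omega)
          rw [← heq] at hi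
          simpa using hi
        have hW2 : 2 ≤ W.card := by
          have h := hR.compl (fun _ => ∅) (fun i hi => hR.empty_mem i hi)
          have hBU : J.biUnion (fun _ : ι => (∅ : Finset V)) = ∅ := by
            apply Finset.eq_empty_of_forall_notMem
            intro y hy
            rcases Finset.mem_biUnion.mp hy with ⟨j, -, hyj⟩
            exact Finset.notMem_empty y hyj
          rw [hBU, Finset.sdiff_empty] at h
          omega
        -- B1 engine
        have hB1 : ∀ a b c : ι, a ∈ J → b ∈ J → c ∈ J → a ≠ b → a ≠ c → b ≠ c →
            (∃ x ∈ W, {x} ∉ K a) → ∀ u ∈ W, {u} ∉ K b → {u} ∉ K a := by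
          rintro a b c haJ hbJ hcJ hab hac hbc ⟨x, hxW, hxK⟩ u huW huKb huKa
          have hux : u ≠ x := fun h => hxK (h ▸ huKa)
          by_cases hex : ∃ B, B ⊆ (W.erase x).erase u ∧ B ∉ K c
          · obtain ⟨B, hBsub, hBK⟩ := hex
            have hxB : x ∉ B := fun h =>
              (Finset.mem_erase.mp (Finset.mem_of_mem_erase (hBsub h))).1 rfl
            have huB : u ∉ B := fun h => (Finset.mem_erase.mp (hBsub h)).1 rfl
            set f : ι → Finset V := fun i => if i = a then {x} else if i = b then {u} else B
              with hfdef
            have hfa : f a = {x} := by rw [hfdef]; simp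
            have hfb : f b = {u} := by
              rw [hfdef]; simp only [if_neg (fun h : b = a => hab h.symm), if_pos]
            have hfc : f c = B := by
              rw [hfdef]
              simp only [if_neg (fun h : c = a => hac h.symm),
                if_neg (fun h : c = b => hbc h.symm)]
            have hBW : B ⊆ W := hBsub.trans
              ((Finset.erase_subset _ _).trans (Finset.erase_subset _ _))
            obtain ⟨i, hiJ, hiK⟩ := hR.unav f
              (by
                intro i hi
                rcases hcov3 a b c haJ hbJ hcJ hab hac hbc i hi with h | h | h
                · rw [h, hfa]; simpa using hxW
                · rw [h, hfb]; simpa using huW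
                · rw [h, hfc]; exact hBW)
              (by
                intro p hp q hq hpq
                unfold Function.onFun
                have key : ∀ s t : ι, s ∈ J → t ∈ J → s ≠ t → Disjoint (f s) (f t) := by
                  intro s t hs ht hst
                  rcases hcov3 a b c haJ hbJ hcJ hab hac hbc s hs with h1 | h1 | h1 <;>
                    rcases hcov3 a b c haJ hbJ hcJ hab hac hbc t ht with h2 | h2 | h2 <;>
                      rw [h1, h2]
                  · exact absurd (h1.trans h2.symm) hst
                  · rw [hfa, hfb]
                    exact Finset.disjoint_singleton.mpr (Ne.symm hux)
                  · rw [hfa, hfc]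
                    exact Finset.disjoint_singleton_left.mpr hxB
                  · rw [hfb, hfa]
                    exact Finset.disjoint_singleton.mpr hux
                  · exact absurd (h1.trans h2.symm) hst
                  · rw [hfb, hfc]
                    exact Finset.disjoint_singleton_left.mpr huB
                  · rw [hfc, hfa]
                    exact Finset.disjoint_singleton_right.mpr hxB
                  · rw [hfc, hfb]
                    exact Finset.disjoint_singleton_right.mpr huB
                  · exact absurd (h1.trans h2.symm) hst
                exact key p q (Finset.mem_coe.mp hp) (Finset.mem_coe.mp hq) hpq)
            rcases hcov3 a b c haJ hbJ hcJ hab hac hbc i hiJ with h | h | h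
            · rw [h, hfa] at hiK; exact hxK hiK
            · rw [h, hfb] at hiK; exact huKb hiK
            · rw [h, hfc] at hiK; exact hBK hiK
          · push_neg at hex
            have hbig : (W.erase x).erase u ∈ K c := hex _ (Finset.Subset.refl _)
            set f : ι → Finset V := fun i =>
              if i = a then {u} else if i = c then (W.erase x).erase u else ∅ with hfdef
            have hface : ∀ i ∈ J, f i ∈ K i := by
              intro i hi
              rcases hcov3 a b c haJ hbJ hcJ hab hac hbc i hi with h | h | h
              · rw [hfdef]; simp only [h, if_pos]; exact huKa
              · rw [hfdef]
                simp only [h, if_neg (fun hh : b = a => hab hh.symm),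
                  if_neg (fun hh : b = c => hbc hh)]
                exact hR.empty_mem b hbJ
              · rw [hfdef]
                simp only [h, if_neg (fun hh : c = a => hac hh.symm), if_pos]
                exact hbig
            have hcompl := hR.compl f hface
            have hsub : W \ J.biUnion f ⊆ {x} := by
              intro y hy
              rcases Finset.mem_sdiff.mp hy with ⟨hyW, hyf⟩
              rw [Finset.mem_singleton]
              by_contra hyx
              have hyu : y ≠ u := by
                intro h
                apply hyf
                refine Finset.mem_biUnion.mpr ⟨a, haJ, ?_⟩
                rw [hfdef]; simp only [if_pos]
                simp [h]
              apply hyf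
              refine Finset.mem_biUnion.mpr ⟨c, hcJ, ?_⟩
              rw [hfdef]
              simp only [if_neg (fun hh : c = a => hac hh.symm), if_pos]
              exact Finset.mem_erase.mpr ⟨hyu, Finset.mem_erase.mpr ⟨hyx, hyW⟩⟩
            have hcard := Finset.card_le_card hsub
            simp only [Finset.card_singleton] at hcard
            omega
        by_cases hP2 : ∃ i₁ ∈ J, ∃ i₂ ∈ J, i₁ ≠ i₂ ∧
            (∃ x ∈ W, {x} ∉ K i₁) ∧ (∃ y ∈ W, {y} ∉ K i₂)
        · -- at least two complexes with non-vertices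
          obtain ⟨i₁, hi₁J, i₂, hi₂J, h12, hP1, hP2'⟩ := hP2
          obtain ⟨j₃, hj₃J, hj₃1, hj₃2⟩ := exists_third hJ3 i₁ i₂
          have h13 : i₁ ≠ j₃ := Ne.symm hj₃1
          have h23 : i₂ ≠ j₃ := Ne.symm hj₃2
          have hU12 : ∀ u ∈ W, {u} ∉ K i₁ ∧ {u} ∉ K i₂ := by
            intro u huW
            obtain ⟨i, hiJ, hiK⟩ := hgood u huW
            rcases hcov3 i₁ i₂ j₃ hi₁J hi₂J hj₃J h12 h13 h23 i hiJ with h | h | h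
            · rw [h] at hiK
              exact ⟨hiK, hB1 i₂ i₁ j₃ hi₂J hi₁J hj₃J (Ne.symm h12) h23 h13 hP2' u huW hiK⟩
            · rw [h] at hiK
              exact ⟨hB1 i₁ i₂ j₃ hi₁J hi₂J hj₃J h12 h13 h23 hP1 u huW hiK, hiK⟩
            · rw [h] at hiK
              have hPj : ∃ z ∈ W, {z} ∉ K j₃ := ⟨u, huW, hiK⟩
              exact ⟨hB1 i₁ j₃ i₂ hi₁J hj₃J hi₂J h13 h12 (Ne.symm h23) hP1 u huW hiK,
                hB1 i₂ j₃ i₁ hi₂J hj₃J hi₁J h23 (Ne.symm h12) (Ne.symm h13) hP2' u huW hiK⟩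
          by_cases hPj₃ : ∃ z ∈ W, {z} ∉ K j₃
          · -- all three complexes are trivial
            have hU3 : ∀ u ∈ W, {u} ∉ K j₃ := fun u huW =>
              hB1 j₃ i₁ i₂ hj₃J hi₁J hi₂J hj₃1 hj₃2 h12 hPj₃ u huW (hU12 u huW).1
            have hWle : W.card ≤ 2 := by
              by_contra hc
              push_neg at hc
              obtain ⟨T, hTsub, hTc⟩ := Finset.exists_subset_card_eq
                (show 3 ≤ W.card by omega)
              obtain ⟨x, y, z, hxy, hxz, hyz, hTeq⟩ := Finset.card_eq_three.mp hTc
              have hxW : x ∈ W := hTsub (by rw [hTeq]; simp)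
              have hyW : y ∈ W := hTsub (by rw [hTeq]; simp)
              have hzW : z ∈ W := hTsub (by rw [hTeq]; simp)
              set f : ι → Finset V := fun i =>
                if i = i₁ then {x} else if i = i₂ then {y} else {z} with hfdef
              obtain ⟨i, hiJ, hiK⟩ := hR.unav f
                (by
                  intro i hi
                  rw [hfdef]
                  by_cases h1 : i = i₁
                  · simp only [if_pos h1]; simpa using hxW
                  · simp only [if_neg h1]
                    by_cases h2 : i = i₂
                    · simp only [if_pos h2]; simpa using hyW
                    · simp only [if_neg h2]; simpa using hzW)
                (by
                  intro p hp q hq hpq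
                  unfold Function.onFun
                  have hfa : f i₁ = {x} := by rw [hfdef]; simp
                  have hfb : f i₂ = {y} := by
                    rw [hfdef]
                    simp only [if_neg (fun hh : i₂ = i₁ => h12 hh.symm), if_pos]
                  have hfc : f j₃ = {z} := by
                    rw [hfdef]
                    simp only [if_neg hj₃1, if_neg hj₃2]
                  have key : ∀ s ∈ J, ∀ t ∈ J, s ≠ t → Disjoint (f s) (f t) := by
                    intro s hs t ht hst
                    rcases hcov3 i₁ i₂ j₃ hi₁J hi₂J hj₃J h12 h13 h23 s hs with h1 | h1 | h1 <;>
                      rcases hcov3 i₁ i₂ j₃ hi₁J hi₂J hj₃J h12 h13 h23 t ht with h2 | h2 | h2 <;>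
                        rw [h1, h2]
                    · exact absurd (h1.trans h2.symm) hst
                    · rw [hfa, hfb]; exact Finset.disjoint_singleton.mpr hxy
                    · rw [hfa, hfc]; exact Finset.disjoint_singleton.mpr hxz
                    · rw [hfb, hfa]; exact Finset.disjoint_singleton.mpr (Ne.symm hxy)
                    · exact absurd (h1.trans h2.symm) hst
                    · rw [hfb, hfc]; exact Finset.disjoint_singleton.mpr hyz
                    · rw [hfc, hfa]; exact Finset.disjoint_singleton.mpr (Ne.symm hxz)
                    · rw [hfc, hfb]; exact Finset.disjoint_singleton.mpr (Ne.symm hyz)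
                    · exact absurd (h1.trans h2.symm) hst
                  exact key p (Finset.mem_coe.mp hp) q (Finset.mem_coe.mp hq) hpq)
              rcases hcov3 i₁ i₂ j₃ hi₁J hi₂J hj₃J h12 h13 h23 i hiJ with h | h | h
              · rw [h, hfdef] at hiK
                simp only [if_pos] at hiK
                exact (hU12 x hxW).1 hiK
              · rw [h, hfdef] at hiK
                simp only [if_neg (fun hh : i₂ = i₁ => h12 hh.symm), if_pos] at hiK
                exact (hU12 y hyW).2 hiK
              · rw [h, hfdef] at hiK
                simp only [if_neg hj₃1, if_neg hj₃2] at hiK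
                exact hU3 z hzW hiK
            refine ⟨W, fun _ => 0, Finset.Subset.refl W, ?_, ?_⟩
            · simp only [Finset.sum_const_zero]
              omega
            · intro i hi A
              refine hR.trivial_desc hi ?_ A
              intro x hxW
              rcases hcov3 i₁ i₂ j₃ hi₁J hi₂J hj₃J h12 h13 h23 i hi with h | h | h
              · rw [h]; exact (hU12 x hxW).1
              · rw [h]; exact (hU12 x hxW).2
              · rw [h]; exact hU3 x hxW
          · -- K j₃ is a full skeleton, the others trivial
            have hK3 : ∀ A : Finset V, A ∈ K j₃ ↔ (A ⊆ W ∧ A.card ≤ W.card - 2) := by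
              intro A
              constructor
              · intro hA
                have hAW := hR.subW j₃ hj₃J A hA
                have := hR.single_compl hj₃J hA
                rw [Finset.card_sdiff_of_subset hAW] at this
                have := Finset.card_le_card hAW
                refine ⟨hAW, by omega⟩
              · rintro ⟨hAW, hAc⟩
                have hsd : 2 ≤ (W \ A).card := by
                  rw [Finset.card_sdiff_of_subset hAW]
                  have := Finset.card_le_card hAW
                  omega
                obtain ⟨u, hu, v', hv', huv⟩ := Finset.one_lt_card.mp (show 1 < (W \ A).card by omega)
                rcases Finset.mem_sdiff.mp hu with ⟨huW, huA⟩
                rcases Finset.mem_sdiff.mp hv' with ⟨hv'W, hv'A⟩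
                set f : ι → Finset V := fun i =>
                  if i = i₁ then {u} else if i = i₂ then {v'} else A with hfdef
                obtain ⟨i, hiJ, hiK⟩ := hR.unav f
                  (by
                    intro i hi
                    rw [hfdef]
                    by_cases h1 : i = i₁
                    · simp only [if_pos h1]; simpa using huW
                    · simp only [if_neg h1]
                      by_cases h2 : i = i₂
                      · simp only [if_pos h2]; simpa using hv'W
                      · simp only [if_neg h2]; exact hAW)
                  (by
                    intro p hp q hq hpq
                    unfold Function.onFun
                    have hfa : f i₁ = {u} := by rw [hfdef]; simp
                    have hfb : f i₂ = {v'} := by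
                      rw [hfdef]
                      simp only [if_neg (fun hh : i₂ = i₁ => h12 hh.symm), if_pos]
                    have hfc : f j₃ = A := by
                      rw [hfdef]
                      simp only [if_neg hj₃1, if_neg hj₃2]
                    have hd1 : Disjoint ({u} : Finset V) {v'} :=
                      Finset.disjoint_singleton.mpr huv
                    have hd2 : Disjoint ({u} : Finset V) A :=
                      Finset.disjoint_singleton_left.mpr huA
                    have hd3 : Disjoint ({v'} : Finset V) A :=
                      Finset.disjoint_singleton_left.mpr hv'A
                    have key : ∀ s ∈ J, ∀ t ∈ J, s ≠ t → Disjoint (f s) (f t) := by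
                      intro s hs t ht hst
                      rcases hcov3 i₁ i₂ j₃ hi₁J hi₂J hj₃J h12 h13 h23 s hs with h1 | h1 | h1 <;>
                        rcases hcov3 i₁ i₂ j₃ hi₁J hi₂J hj₃J h12 h13 h23 t ht with h2 | h2 | h2 <;>
                          rw [h1, h2]
                      · exact absurd (h1.trans h2.symm) hst
                      · rw [hfa, hfb]; exact hd1
                      · rw [hfa, hfc]; exact hd2
                      · rw [hfb, hfa]; exact hd1.symm
                      · exact absurd (h1.trans h2.symm) hst
                      · rw [hfb, hfc]; exact hd3
                      · rw [hfc, hfa]; exact hd2.symm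
                      · rw [hfc, hfb]; exact hd3.symm
                      · exact absurd (h1.trans h2.symm) hst
                    exact key p (Finset.mem_coe.mp hp) q (Finset.mem_coe.mp hq) hpq)
                rcases hcov3 i₁ i₂ j₃ hi₁J hi₂J hj₃J h12 h13 h23 i hiJ with h | h | h
                · rw [h, hfdef] at hiK
                  simp only [if_pos] at hiK
                  exact absurd hiK ((hU12 u huW).1)
                · rw [h, hfdef] at hiK
                  simp only [if_neg (fun hh : i₂ = i₁ => h12 hh.symm), if_pos] at hiK
                  exact absurd hiK ((hU12 v' hv'W).2)
                · rw [h, hfdef] at hiK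
                  simp only [if_neg hj₃1, if_neg hj₃2] at hiK
                  exact hiK
            refine ⟨W, fun i => if i = j₃ then W.card - 2 else 0, Finset.Subset.refl W, ?_, ?_⟩
            · have hsum : ∑ j ∈ J, (if j = j₃ then W.card - 2 else 0) = W.card - 2 := by
                rw [Finset.sum_ite_eq' J j₃ (fun _ => W.card - 2)]
                simp [hj₃J]
              rw [hsum, hJcard]
              omega
            · intro i hi A
              by_cases hij : i = j₃
              · simp only [if_pos hij]
                rw [hij]
                have := hK3 A
                constructor
                · intro hA
                  obtain ⟨h1, h2⟩ := this.mp hA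
                  exact ⟨h1, by rwa [Finset.inter_eq_left.mpr h1]⟩
                · rintro ⟨h1, h2⟩
                  rw [Finset.inter_eq_left.mpr h1] at h2
                  exact this.mpr ⟨h1, h2⟩
              · simp only [if_neg hij]
                refine hR.trivial_desc hi ?_ A
                intro x hxW
                rcases hcov3 i₁ i₂ j₃ hi₁J hi₂J hj₃J h12 h13 h23 i hi with h | h | h
                · rw [h]; exact (hU12 x hxW).1
                · rw [h]; exact (hU12 x hxW).2
                · exact absurd h hij
        · -- exactly one complex with non-vertices : duality case
          push_neg at hP2
          obtain ⟨w₀, hw₀W⟩ := hWne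
          obtain ⟨iS, hiSJ, hw₀K⟩ := hgood w₀ hw₀W
          have hPS : ∃ x ∈ W, {x} ∉ K iS := ⟨w₀, hw₀W, hw₀K⟩
          have hKiS : ∀ x ∈ W, {x} ∉ K iS := by
            intro x hxW
            obtain ⟨i, hiJ, hiK⟩ := hgood x hxW
            by_cases hii : i = iS
            · rwa [hii] at hiK
            · exact absurd (hP2 iS hiSJ i hiJ (fun h => hii h.symm) hPS x hxW) hiK
          have hcard2 : (J.erase iS).card = 2 := by
            rw [Finset.card_erase_of_mem hiSJ]; omega
          obtain ⟨j₁, j₂, hj₁₂, hJe⟩ := Finset.card_eq_two.mp hcard2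
          have hj₁E : j₁ ∈ J.erase iS := by rw [hJe]; simp
          have hj₂E : j₂ ∈ J.erase iS := by rw [hJe]; simp
          have hj₁J : j₁ ∈ J := Finset.mem_of_mem_erase hj₁E
          have hj₂J : j₂ ∈ J := Finset.mem_of_mem_erase hj₂E
          have hj₁S : j₁ ≠ iS := (Finset.mem_erase.mp hj₁E).1
          have hj₂S : j₂ ≠ iS := (Finset.mem_erase.mp hj₂E).1
          have honly : ∀ a ∈ J, ∀ b ∈ J, a ≠ iS → b ≠ iS → a ≠ b →
              ∀ s ∈ J, s ≠ a → s ≠ b → s = iS := by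
            intro a haJ b hbJ haS hbS hab s hs hsa hsb
            rcases hcov3 iS j₁ j₂ hiSJ hj₁J hj₂J (Ne.symm hj₁S) (Ne.symm hj₂S) hj₁₂
              s hs with h | h | h
            · exact h
            · exfalso
              rcases hcov3 iS j₁ j₂ hiSJ hj₁J hj₂J (Ne.symm hj₁S) (Ne.symm hj₂S) hj₁₂
                a haJ with ha | ha | ha
              · exact haS ha
              · exact hsa (h.trans ha.symm)
              · rcases hcov3 iS j₁ j₂ hiSJ hj₁J hj₂J (Ne.symm hj₁S) (Ne.symm hj₂S) hj₁₂
                  b hbJ with hb | hb | hb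
                · exact hbS hb
                · exact hsb (h.trans hb.symm)
                · exact hab (ha.trans hb.symm)
            · exfalso
              rcases hcov3 iS j₁ j₂ hiSJ hj₁J hj₂J (Ne.symm hj₁S) (Ne.symm hj₂S) hj₁₂
                a haJ with ha | ha | ha
              · exact haS ha
              · rcases hcov3 iS j₁ j₂ hiSJ hj₁J hj₂J (Ne.symm hj₁S) (Ne.symm hj₂S) hj₁₂
                  b hbJ with hb | hb | hb
                · exact hbS hb
                · exact hab (ha.trans hb.symm)
                · exact hsb (h.trans hb.symm)
              · exact hsa (h.trans ha.symm)
          -- duality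
          have hdual : ∀ a ∈ J, ∀ b ∈ J, a ≠ iS → b ≠ iS → a ≠ b → ∀ w ∈ W,
              ∀ A : Finset V, A ⊆ W.erase w → (A ∈ K a ↔ (W.erase w) \ A ∉ K b) := by
            intro a haJ b hbJ haS hbS hab w hwW A hAsub
            constructor
            · intro hA hB
              set f : ι → Finset V := fun i =>
                if i = a then A else if i = b then (W.erase w) \ A else ∅ with hfdef
              have hface : ∀ i ∈ J, f i ∈ K i := by
                intro i hi
                rw [hfdef]
                by_cases h1 : i = a
                · simp only [if_pos h1]; rw [h1]; exact hA
                · simp only [if_neg h1]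
                  by_cases h2 : i = b
                  · simp only [if_pos h2]; rw [h2]; exact hB
                  · simp only [if_neg h2]; exact hR.empty_mem i hi
              have hcompl := hR.compl f hface
              have hsub : W \ J.biUnion f ⊆ {w} := by
                intro y hy
                rcases Finset.mem_sdiff.mp hy with ⟨hyW, hyf⟩
                rw [Finset.mem_singleton]
                by_contra hyw
                have hyA : y ∉ A := fun h => hyf (Finset.mem_biUnion.mpr ⟨a, haJ, by
                  rw [hfdef]; simp only [if_pos]; exact h⟩)
                apply hyf
                refine Finset.mem_biUnion.mpr ⟨b, hbJ, ?_⟩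
                rw [hfdef]
                simp only [if_neg (fun hh : b = a => hab hh.symm), if_pos]
                exact Finset.mem_sdiff.mpr ⟨Finset.mem_erase.mpr ⟨hyw, hyW⟩, hyA⟩
              have hcard := Finset.card_le_card hsub
              simp only [Finset.card_singleton] at hcard
              omega
            · intro hB
              by_contra hA
              set f : ι → Finset V := fun i =>
                if i = a then A else if i = b then (W.erase w) \ A else {w} with hfdef
              obtain ⟨i, hiJ, hiK⟩ := hR.unav f
                (by
                  intro i hi
                  rw [hfdef]
                  by_cases h1 : i = a
                  · simp only [if_pos h1]
                    exact hAsub.trans (Finset.erase_subset w W)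
                  · simp only [if_neg h1]
                    by_cases h2 : i = b
                    · simp only [if_pos h2]
                      exact (Finset.sdiff_subset).trans (Finset.erase_subset w W)
                    · simp only [if_neg h2]; simpa using hwW)
                (by
                  intro p hp q hq hpq
                  unfold Function.onFun
                  have hfa : f a = A := by rw [hfdef]; simp
                  have hfb : f b = (W.erase w) \ A := by
                    rw [hfdef]
                    simp only [if_neg (fun hh : b = a => hab hh.symm), if_pos]
                  have hwA : w ∉ A := fun h => (Finset.mem_erase.mp (hAsub h)).1 rfl
                  have hd1 : Disjoint A ((W.erase w) \ A) := Finset.disjoint_sdiff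
                  have hd2 : Disjoint A ({w} : Finset V) :=
                    Finset.disjoint_singleton_right.mpr hwA
                  have hd3 : Disjoint ((W.erase w) \ A) ({w} : Finset V) := by
                    rw [Finset.disjoint_singleton_right]
                    intro h
                    exact (Finset.mem_erase.mp (Finset.mem_sdiff.mp h).1).1 rfl
                  have hfother : ∀ s ∈ J, s ≠ a → s ≠ b → f s = {w} := by
                    intro s hs hsa hsb
                    rw [hfdef]
                    simp only [if_neg hsa, if_neg hsb]
                  have key : ∀ s ∈ J, ∀ t ∈ J, s ≠ t → Disjoint (f s) (f t) := by
                    intro s hs t ht hst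
                    by_cases hs1 : s = a
                    · by_cases ht1 : t = a
                      · exact absurd (hs1.trans ht1.symm) hst
                      · by_cases ht2 : t = b
                        · rw [hs1, ht2, hfa, hfb]; exact hd1
                        · rw [hs1, hfa, hfother t ht ht1 ht2]; exact hd2
                    · by_cases hs2 : s = b
                      · by_cases ht1 : t = a
                        · rw [hs2, ht1, hfb, hfa]; exact hd1.symm
                        · by_cases ht2 : t = b
                          · exact absurd (hs2.trans ht2.symm) hst
                          · rw [hs2, hfb, hfother t ht ht1 ht2]; exact hd3
                      · rw [hfother s hs hs1 hs2]
                        by_cases ht1 : t = a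
                        · rw [ht1, hfa]; exact hd2.symm
                        · by_cases ht2 : t = b
                          · rw [ht2, hfb]; exact hd3.symm
                          · exfalso
                            have hsS : s = iS := honly a haJ b hbJ haS hbS hab s hs hs1 hs2
                            have htS : t = iS := honly a haJ b hbJ haS hbS hab t ht ht1 ht2
                            exact hst (hsS.trans htS.symm)
                  exact key p (Finset.mem_coe.mp hp) q (Finset.mem_coe.mp hq) hpq)
              by_cases h1 : i = a
              · rw [hfdef] at hiK
                simp only [if_pos h1] at hiK
                rw [h1] at hiK
                exact hA hiK
              · by_cases h2 : i = b
                · rw [hfdef] at hiK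
                  simp only [if_neg h1, if_pos h2] at hiK
                  rw [h2] at hiK
                  exact hB hiK
                · rw [hfdef] at hiK
                  simp only [if_neg h1, if_neg h2] at hiK
                  have hiS : i = iS := honly a haJ b hbJ haS hbS hab i hiJ h1 h2
                  rw [hiS] at hiK
                  exact hKiS w hwW hiK
          -- swap invariance
          have hswapK : ∀ a ∈ J, ∀ b ∈ J, a ≠ iS → b ≠ iS → a ≠ b →
              ∀ x y C, x ∈ W → y ∈ W → x ≠ y → x ∉ C → y ∉ C →
                insert x C ∈ K a → insert y C ∈ K a := by
            intro a haJ b hbJ haS hbS hab x y C hxW hyW hxy hxC hyC hxCK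
            have hCW : C ⊆ W := (Finset.subset_insert x C).trans (hR.subW a haJ _ hxCK)
            set B := (W.erase x) \ insert y C with hBdef
            have hBx : B ⊆ W.erase x := Finset.sdiff_subset
            have hyB : y ∉ B := fun h => (Finset.mem_sdiff.mp h).2 (Finset.mem_insert_self y C)
            have hBy : B ⊆ W.erase y := by
              intro z hz
              refine Finset.mem_erase.mpr ⟨fun h => hyB (h ▸ hz), ?_⟩
              exact Finset.mem_of_mem_erase (hBx hz)
            have hc1 : (W.erase y) \ B = insert x C := by
              ext z
              simp only [Finset.mem_sdiff, Finset.mem_erase, Finset.mem_insert, hBdef,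
                not_and, not_not]
              constructor
              · rintro ⟨⟨hzy, hzW⟩, hzB⟩
                by_cases hzx : z = x
                · exact Or.inl hzx
                · have := hzB ⟨hzx, hzW⟩
                  rcases this with h | h
                  · exact absurd h hzy
                  · exact Or.inr h
              · rintro (rfl | hzC)
                · exact ⟨⟨hxy, hxW⟩, fun h => absurd rfl h.1⟩
                · refine ⟨⟨fun h => hyC (h ▸ hzC), hCW hzC⟩, fun _ => Or.inr hzC⟩
            have hc2 : (W.erase x) \ B = insert y C := by
              rw [hBdef, Finset.sdiff_sdiff_self_left]
              apply Finset.inter_eq_right.mpr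
              intro z hz
              rcases Finset.mem_insert.mp hz with rfl | hzC
              · exact Finset.mem_erase.mpr ⟨fun h => hxy h.symm, hyW⟩
              · exact Finset.mem_erase.mpr ⟨fun h => hxC (h ▸ hzC), hCW hzC⟩
            have h1 := hdual b hbJ a haJ hbS haS (Ne.symm hab) y hyW B hBy
            rw [hc1] at h1
            have hBKb : B ∉ K b := fun hBb => (h1.mp hBb) hxCK
            have h2 := hdual b hbJ a haJ hbS haS (Ne.symm hab) x hxW B hBx
            rw [hc2] at h2
            by_contra hyCK
            exact hBKb (h2.mpr (fun h => hyCK h))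
          -- symmetry ⇒ both are skeletons
          obtain ⟨m₁, hm₁, hm₁le⟩ := lemSym (hR.empty_mem j₁ hj₁J) (hR.subW j₁ hj₁J)
            (fun {A B} => hR.down j₁ hj₁J) (hR.proper j₁ hj₁J)
            (fun a b C haG hbG habne haC hbC hin =>
              hswapK j₁ hj₁J j₂ hj₂J hj₁S hj₂S hj₁₂ a b C haG hbG habne haC hbC hin)
          obtain ⟨m₂, hm₂, hm₂le⟩ := lemSym (hR.empty_mem j₂ hj₂J) (hR.subW j₂ hj₂J)
            (fun {A B} => hR.down j₂ hj₂J) (hR.proper j₂ hj₂J)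
            (fun a b C haG hbG habne haC hbC hin =>
              hswapK j₂ hj₂J j₁ hj₁J hj₂S hj₁S (Ne.symm hj₁₂) a b C haG hbG habne haC hbC hin)
          -- m₁ + 2 ≤ |W|
          have hm₁W : m₁ + 2 ≤ W.card := by
            obtain ⟨F, hFW, hFc⟩ := Finset.exists_subset_card_eq (show m₁ ≤ W.card by omega)
            have hFK : F ∈ K j₁ := (hm₁ F).mpr ⟨hFW, le_of_eq hFc⟩
            have := hR.single_compl hj₁J hFK
            rw [Finset.card_sdiff_of_subset hFW, hFc] at this
            omega
          -- counts via duality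
          obtain ⟨w, hwW⟩ := hR.W_nonempty hJne
          have hwcard : (W.erase w).card + 1 = W.card := Finset.card_erase_add_one hwW
          have hgeq : m₁ + m₂ + 2 ≤ W.card := by
            obtain ⟨A, hAsub, hAc⟩ := Finset.exists_subset_card_eq
              (show m₁ ≤ (W.erase w).card by omega)
            have hAK : A ∈ K j₁ := (hm₁ A).mpr
              ⟨hAsub.trans (Finset.erase_subset w W), le_of_eq hAc⟩
            have hd := (hdual j₁ hj₁J j₂ hj₂J hj₁S hj₂S hj₁₂ w hwW A hAsub).mp hAK
            have hcc : ((W.erase w) \ A).card = W.card - 1 - m₁ := by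
              rw [Finset.card_sdiff_of_subset hAsub, hAc]
              omega
            have hsubW : (W.erase w) \ A ⊆ W := (Finset.sdiff_subset).trans
              (Finset.erase_subset w W)
            have : ¬ (W.card - 1 - m₁ ≤ m₂) := by
              intro hc
              exact hd ((hm₂ _).mpr ⟨hsubW, by rw [hcc]; exact hc⟩)
            omega
          have hle : W.card ≤ m₁ + m₂ + 2 := by
            by_contra hc
            push_neg at hc
            obtain ⟨A, hAsub, hAc⟩ := Finset.exists_subset_card_eq
              (show m₁ + 1 ≤ (W.erase w).card by omega)
            have hAK : A ∉ K j₁ := by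
              rw [hm₁]
              rintro ⟨-, hcc⟩
              omega
            have hd := hdual j₁ hj₁J j₂ hj₂J hj₁S hj₂S hj₁₂ w hwW A hAsub
            have hmem : (W.erase w) \ A ∈ K j₂ := by
              by_contra hno
              exact hAK (hd.mpr hno)
            have := ((hm₂ _).mp hmem).2
            rw [Finset.card_sdiff_of_subset hAsub, hAc] at this
            omega
          have hWeq : W.card = m₁ + m₂ + 2 := le_antisymm hle hgeq
          -- final assembly
          have hJeq : J = insert iS {j₁, j₂} := by
            rw [← hJe, Finset.insert_erase hiSJ]
          refine ⟨W, fun i => if i = j₁ then m₁ else if i = j₂ then m₂ else 0,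
            Finset.Subset.refl W, ?_, ?_⟩
          · have hsum : ∑ j ∈ J, (if j = j₁ then m₁ else if j = j₂ then m₂ else 0)
                = m₁ + m₂ := by
              rw [hJeq, Finset.sum_insert (by simp [Ne.symm hj₁S, Ne.symm hj₂S]),
                Finset.sum_insert (by simp [hj₁₂]), Finset.sum_singleton]
              simp only [if_neg hj₁S, if_neg hj₂S, if_pos,
                if_neg (fun h : j₂ = j₁ => hj₁₂ h.symm)]
              simp [Ne.symm hj₁S, Ne.symm hj₂S, hj₁S, hj₂S]
            rw [hsum, hJcard, hWeq]
          · intro i hi A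
            by_cases h1 : i = j₁
            · simp only [if_pos h1]
              rw [h1]
              constructor
              · intro hA
                obtain ⟨ha, hb⟩ := (hm₁ A).mp hA
                exact ⟨ha, by rwa [Finset.inter_eq_left.mpr ha]⟩
              · rintro ⟨ha, hb⟩
                rw [Finset.inter_eq_left.mpr ha] at hb
                exact (hm₁ A).mpr ⟨ha, hb⟩
            · simp only [if_neg h1]
              by_cases h2 : i = j₂
              · simp only [if_pos h2]
                rw [h2]
                constructor
                · intro hA
                  obtain ⟨ha, hb⟩ := (hm₂ A).mp hA
                  exact ⟨ha, by rwa [Finset.inter_eq_left.mpr ha]⟩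
                · rintro ⟨ha, hb⟩
                  rw [Finset.inter_eq_left.mpr ha] at hb
                  exact (hm₂ A).mpr ⟨ha, hb⟩
              · simp only [if_neg h2]
                have hiiS : i = iS := by
                  rcases hcov3 iS j₁ j₂ hiSJ hj₁J hj₂J (Ne.symm hj₁S) (Ne.symm hj₂S)
                    hj₁₂ i hi with h | h | h
                  · exact h
                  · exact absurd h h1
                  · exact absurd h h2
                rw [hiiS]
                exact hR.trivial_desc hiSJ hKiS A

end MainSec

/-- The Alexander dual of a complex `K` on the vertex type `V`:
all complements of non-faces. -/
def alexDual {V : Type*} [Fintype V] [DecidableEq V] (K : Set (Finset V)) :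
    Set (Finset V) :=
  {F | Finset.univ \ F ∉ K}

/-- Classification of Alexander `r`-tuples: exactly one of the following holds.
Either `r = 2` and the pair is a pair of mutually Alexander dual complexes, or `r ≥ 3`
and there is a partition `V = N ⊎ C` (with `C` possibly empty) and numbers `m i` with
`|N| = m 1 + ⋯ + m r + r - 1` such that each `K i` consists of the sets meeting `N` in
at most `m i` elements (the join of the `m i`-skeleton on `N` with the simplex on `C`). -/
theorem alexanderTuple_classification {V : Type*} [Fintype V] [DecidableEq V]
    (r : ℕ) (hr : 2 ≤ r) (K : Fin r → Set (Finset V))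
    (hcplx : ∀ i, IsComplex (K i)) (hproper : ∀ i, K i ≠ Set.univ)
    (hA : AlexanderTuple K) :
    Xor'
      (r = 2 ∧ K ⟨1, by omega⟩ = alexDual (K ⟨0, by omega⟩))
      (3 ≤ r ∧ ∃ (N : Finset V) (m : Fin r → ℕ),
        N.card = (∑ i, m i) + r - 1 ∧
        ∀ i, K i = {A : Finset V | (A ∩ N).card ≤ m i}) := by
  classical
  rcases (show r = 2 ∨ 3 ≤ r by omega) with hr2 | hr3
  · -- r = 2 : duality
    subst hr2
    refine Or.inl ⟨⟨rfl, ?_⟩, fun h => by omega⟩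
    ext F
    simp only [alexDual, Set.mem_setOf_eq]
    set f : Fin 2 → Finset V := fun i => if i = ⟨0, by omega⟩ then Finset.univ \ F else F
      with hfdef
    have hf0 : f ⟨0, by omega⟩ = Finset.univ \ F := by rw [hfdef]; simp
    have hne : (⟨1, by omega⟩ : Fin 2) ≠ ⟨0, by omega⟩ := by
      intro h
      simpa using congrArg Fin.val h
    have hf1 : f ⟨1, by omega⟩ = F := by
      rw [hfdef]
      simp only [if_neg hne]
    have hall : ∀ i : Fin 2, i = ⟨0, by omega⟩ ∨ i = ⟨1, by omega⟩ := by
      intro i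
      rcases (show i.val = 0 ∨ i.val = 1 by omega) with h | h
      · exact Or.inl (Fin.ext h)
      · exact Or.inr (Fin.ext h)
    constructor
    · intro hF hcompl
      have hbu : Finset.univ.biUnion f = Finset.univ := by
        apply Finset.Subset.antisymm (Finset.subset_univ _)
        intro x _
        by_cases hxF : x ∈ F
        · exact Finset.mem_biUnion.mpr ⟨⟨1, by omega⟩, Finset.mem_univ _, by
            rw [hf1]; exact hxF⟩
        · exact Finset.mem_biUnion.mpr ⟨⟨0, by omega⟩, Finset.mem_univ _, by
            rw [hf0]; exact Finset.mem_sdiff.mpr ⟨Finset.mem_univ x, hxF⟩⟩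
      have := hA.2 f (by
        intro i
        rcases hall i with h | h
        · rw [h, hf0]; exact hcompl
        · rw [h, hf1]; exact hF)
      rw [hbu] at this
      simp at this
    · intro hcompl
      obtain ⟨i, hi⟩ := hA.1 f (by
        intro i j hij
        unfold Function.onFun
        rcases hall i with h1 | h1 <;> rcases hall j with h2 | h2
        · exact absurd (h1.trans h2.symm) hij
        · rw [h1, h2, hf0, hf1]
          exact Finset.sdiff_disjoint
        · rw [h1, h2, hf0, hf1]
          exact Finset.disjoint_sdiff
        · exact absurd (h1.trans h2.symm) hij)
      rcases hall i with h | h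
      · rw [h, hf0] at hi
        exact absurd hi hcompl
      · rwa [h, hf1] at hi
  · -- r ≥ 3 : skeleta
    refine Or.inr ⟨⟨hr3, ?_⟩, fun h => by omega⟩
    have hRel : RelSys (Finset.univ : Finset (Fin r)) (Finset.univ : Finset V) K := by
      constructor
      · intro i _
        exact (hcplx i).1
      · intro i _ A B hAB hB
        exact (hcplx i).2 A B hAB hB
      · intro i _ A _
        exact Finset.subset_univ A
      · intro i _ h
        apply hproper i
        apply Set.eq_univ_of_forall
        intro A
        exact (hcplx i).2 A Finset.univ (Finset.subset_univ A) h
      · intro A _ hpw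
        have : Pairwise (Function.onFun Disjoint A) := by
          rw [← Set.pairwise_univ, ← Finset.coe_univ]
          exact hpw
        obtain ⟨i, hi⟩ := hA.1 A this
        exact ⟨i, Finset.mem_univ i, hi⟩
      · intro A hAK
        have := hA.2 A (fun i => hAK i (Finset.mem_univ i))
        simpa [Finset.card_univ] using this
    obtain ⟨N, m, -, hcount, hdesc⟩ := main_lemma (Finset.univ.card + (Finset.univ : Finset V).card)
      Finset.univ Finset.univ K le_rfl (by simpa using hr3) hRel
    refine ⟨N, m, ?_, ?_⟩
    · have hJc : (Finset.univ : Finset (Fin r)).card = r := by simp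
      rw [hJc] at hcount
      omega
    · intro i
      ext A
      have := hdesc i (Finset.mem_univ i) A
      simp only [Finset.subset_univ, true_and] at this
      rw [Set.mem_setOf_eq]
      exact this
end

section
/- Let ⟨K_1,...,K_r⟩ be a collective r-unavoidable r-tuple of simplicial complexes on [n]. Then for every maximal disjoint collection (A_1,...,A_r) with A_i ∈ K_i for all i, the set [n] ∖ (A_1 ∪ ... ∪ A_r) contains at most r−1 elements. -/
/-- For a collective `r`-unavoidable tuple, every maximal disjoint collection
`(A 1, …, A r)` with `A i ∈ K i` leaves at most `r - 1` elements of `[n]` uncovered. -/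
theorem collUnavoidable_maximal_complement_le (n r : ℕ)
    (K : Fin r → Set (Finset (Fin n))) (hcplx : ∀ i, IsComplex (K i))
    (hcu : CollUnavoidable K)
    (A : Fin r → Finset (Fin n))
    (hdisj : Pairwise (Function.onFun Disjoint A))
    (hmem : ∀ i, A i ∈ K i)
    (hmax : ¬ ∃ A' : Fin r → Finset (Fin n),
      Pairwise (Function.onFun Disjoint A') ∧ (∀ i, A' i ∈ K i) ∧
      (∀ i, A i ⊆ A' i) ∧ ∃ j, A j ⊂ A' j) :
    (Finset.univ \ Finset.univ.biUnion A).card ≤ r - 1 := by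
  obtain ⟨i0, _⟩ := hcu A hdisj
  have hr : 1 ≤ r := i0.pos
  by_contra hlt
  push_neg at hlt
  have hrle : r ≤ (Finset.univ \ Finset.univ.biUnion A).card := by omega
  obtain ⟨s, hs, hscard⟩ := Finset.exists_subset_card_eq hrle
  -- an injection from Fin r into uncovered vertices
  let e : Fin r → Fin n := fun i => s.orderIsoOfFin hscard i
  have he_mem : ∀ i, e i ∈ Finset.univ \ Finset.univ.biUnion A := fun i =>
    hs (s.orderIsoOfFin hscard i).2
  have he_not : ∀ i j, e i ∉ A j := by
    intro i j hij
    have := he_mem i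
    simp only [Finset.mem_sdiff, Finset.mem_biUnion] at this
    exact this.2 ⟨j, Finset.mem_univ j, hij⟩
  have he_inj : Function.Injective e := fun i j h => by
    have := (s.orderIsoOfFin hscard).injective (Subtype.ext h)
    exact this
  set B : Fin r → Finset (Fin n) := fun i => insert (e i) (A i) with hB
  have hBdisj : Pairwise (Function.onFun Disjoint B) := by
    intro i j hij
    simp only [Function.onFun, hB, Finset.disjoint_left]
    intro a ha ha'
    simp only [Finset.mem_insert] at ha ha'
    rcases ha with rfl | ha
    · rcases ha' with h | h
      · exact hij (he_inj h)
      · exact he_not i j h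
    · rcases ha' with rfl | h
      · exact he_not j i ha
      · exact Finset.disjoint_left.mp (hdisj hij) ha h
  obtain ⟨i, hi⟩ := hcu B hBdisj
  apply hmax
  have hAB : ∀ j, A j ⊆ B j := fun j => Finset.subset_insert _ _
  refine ⟨fun j => if j = i then B i else A j, ?_, ?_, ?_, ⟨i, ?_⟩⟩
  · intro a b hab
    have hsub : ∀ j, (if j = i then B i else A j) ⊆ B j := by
      intro j
      by_cases hj : j = i
      · subst hj; simp
      · simp only [if_neg hj]; exact hAB j
    exact Finset.disjoint_of_subset_left (hsub a) (Finset.disjoint_of_subset_right (hsub b) (hBdisj hab))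
  · intro j
    by_cases hj : j = i
    · subst hj; simpa using hi
    · simpa [hj] using hmem j
  · intro j
    by_cases hj : j = i
    · subst hj; simpa using hAB j
    · simp [hj]
  · simp only [if_pos rfl, hB]
    exact Finset.ssubset_insert (he_not i i)
end

section
/- Let ⟨K_1,...,K_r⟩ be an Alexander r-tuple of simplicial complexes on [n]. Then for every maximal disjoint collection (A_1,...,A_r) with A_i ∈ K_i for all i, the set [n] ∖ (A_1 ∪ ... ∪ A_r) has exactly r−1 elements. -/
/-- For an Alexander `r`-tuple, every maximal disjoint collection `(A 1, …, A r)` with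
`A i ∈ K i` leaves exactly `r - 1` elements of `[n]` uncovered. -/
theorem alexanderTuple_maximal_complement_eq (n r : ℕ)
    (K : Fin r → Set (Finset (Fin n))) (hcplx : ∀ i, IsComplex (K i))
    (hA : AlexanderTuple K)
    (A : Fin r → Finset (Fin n))
    (hdisj : Pairwise (Function.onFun Disjoint A))
    (hmem : ∀ i, A i ∈ K i)
    (hmax : ¬ ∃ A' : Fin r → Finset (Fin n),
      Pairwise (Function.onFun Disjoint A') ∧ (∀ i, A' i ∈ K i) ∧
      (∀ i, A i ⊆ A' i) ∧ ∃ j, A j ⊂ A' j) :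
    (Finset.univ \ Finset.univ.biUnion A).card = r - 1 := by
  rcases Nat.eq_zero_or_pos r with hr | hr
  · subst hr
    obtain ⟨i, _⟩ := hA.1 (fun _ => ∅) (by intro j; exact absurd j.2 (by simp))
    exact absurd i.2 (by simp)
  set C := Finset.univ \ Finset.univ.biUnion A with hC
  have h1 : r - 1 ≤ C.card := hA.2 A hmem
  by_contra hne
  have h2 : r ≤ C.card := by omega
  obtain ⟨S, hSC, hScard⟩ := Finset.exists_subset_card_eq h2
  set x := S.orderEmbOfFin hScard with hx
  have hxC : ∀ j, (x j) ∈ C := fun j => hSC (S.orderEmbOfFin_mem hScard j)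
  have hxA : ∀ j k, x j ∉ A k := by
    intro j k h
    have := hxC j
    simp only [hC, Finset.mem_sdiff, Finset.mem_biUnion, Finset.mem_univ, true_and,
      not_exists] at this
    exact this k h
  set B : Fin r → Finset (Fin n) := fun j => insert (x j) (A j) with hB
  have hBdisj : Pairwise (Function.onFun Disjoint B) := by
    intro j k hjk
    simp only [Function.onFun, hB, Finset.disjoint_left]
    intro a ha hak
    rcases Finset.mem_insert.1 ha with h | h
    · rcases Finset.mem_insert.1 hak with h' | h'
      · exact hjk (x.injective (h.symm.trans h'))
      · exact hxA j k (h ▸ h')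
    · rcases Finset.mem_insert.1 hak with h' | h'
      · exact hxA k j (h' ▸ h)
      · exact (Finset.disjoint_left.1 (hdisj hjk)) h h'
  obtain ⟨i, hBi⟩ := hA.1 B hBdisj
  apply hmax
  refine ⟨Function.update A i (B i), ?_, ?_, ?_, i, ?_⟩
  · intro j k hjk
    have hsub : ∀ m, Function.update A i (B i) m ⊆ B m := by
      intro m
      by_cases hm : m = i
      · subst hm; simp
      · rw [Function.update_of_ne hm]
        exact Finset.subset_insert _ _
    exact Disjoint.mono (hsub j) (hsub k) (hBdisj hjk)
  · intro j
    by_cases hj : j = i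
    · subst hj; simpa using hBi
    · rw [Function.update_of_ne hj]; exact hmem j
  · intro j
    by_cases hj : j = i
    · subst hj; simp [hB, Finset.subset_insert]
    · rw [Function.update_of_ne hj]
  · simp only [Function.update_self, hB]
    exact Finset.ssubset_insert (hxA i i)
end

section
/- Every Alexander r-tuple ⟨K_1,...,K_r⟩ of simplicial complexes on [n] is a minimal collective r-unavoidable r-tuple: there is no r-tuple ⟨K_1',...,K_r'⟩ of simplicial complexes on [n] that is collective r-unavoidable and satisfies K_i' ⊆ K_i for all i with K_j' ⊊ K_j for some j. -/
/-- Every Alexander `r`-tuple on `[n]` is a minimal collective `r`-unavoidable tuple: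
no componentwise-smaller tuple of complexes is collective `r`-unavoidable. -/
theorem alexanderTuple_minimal_unavoidable (n r : ℕ)
    (K : Fin r → Set (Finset (Fin n))) (hcplx : ∀ i, IsComplex (K i))
    (hA : AlexanderTuple K) :
    ¬ ∃ K' : Fin r → Set (Finset (Fin n)),
      (∀ i, IsComplex (K' i)) ∧ CollUnavoidable K' ∧
      (∀ i, K' i ⊆ K i) ∧ ∃ j, K' j ⊂ K j := by
  classical
  rintro ⟨K', hc', hu', hsub, j, hlt⟩
  obtain ⟨S, hSK, hSK'⟩ := Set.exists_of_ssubset hlt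
  by_cases hbad : ∃ A : Fin r → Finset (Fin n), A j = S ∧
      Pairwise (Function.onFun Disjoint A) ∧ ∀ i, i ≠ j → A i ∉ K i
  · obtain ⟨A, hAj, hdisj, hnot⟩ := hbad
    obtain ⟨i, hi⟩ := hu' A hdisj
    by_cases hij : i = j
    · subst hij; rw [hAj] at hi; exact hSK' hi
    · exact hnot i hij (hsub i hi)
  · push_neg at hbad
    -- the set of "good" families
    set s : Finset (Fin r → Finset (Fin n)) :=
      Finset.univ.filter (fun A => A j = S ∧ Pairwise (Function.onFun Disjoint A) ∧
        ∀ i, A i ∈ K i) with hs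
    have hne : s.Nonempty := by
      refine ⟨fun i => if i = j then S else ∅, ?_⟩
      simp only [hs, Finset.mem_filter, Finset.mem_univ, true_and]
      refine ⟨by simp, ?_, ?_⟩
      · intro a b hab
        simp only [Function.onFun]
        by_cases ha : a = j <;> by_cases hb : b = j <;> simp [ha, hb] at hab ⊢
      · intro i
        by_cases h : i = j <;> simp only [h, if_true, if_false]
        · exact hSK
        · exact (hcplx i).1
    obtain ⟨A, hAs, hmax⟩ := Finset.exists_max_image s (fun A => ∑ i, (A i).card) hne
    rw [hs, Finset.mem_filter] at hAs
    obtain ⟨-, hAj, hdisj, hAK⟩ := hAs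
    set C : Finset (Fin n) := Finset.univ \ Finset.univ.biUnion A with hCdef
    have hC : r - 1 ≤ C.card := hA.2 A hAK
    obtain ⟨C', hC'sub, hC'card⟩ := Finset.exists_subset_card_eq hC
    have hcard : (Finset.univ.erase j).card = C'.card := by
      rw [Finset.card_erase_of_mem (Finset.mem_univ j), Finset.card_univ,
        Fintype.card_fin, hC'card]
    let e := Finset.equivOfCardEq hcard
    have hjmem : ∀ i : Fin r, i ≠ j → i ∈ Finset.univ.erase j := fun i h =>
      Finset.mem_erase_of_ne_of_mem h (Finset.mem_univ i)
    -- the chosen new vertices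
    set c : ∀ i : Fin r, i ≠ j → Fin n := fun i h => (e ⟨i, hjmem i h⟩ : Fin n) with hc
    have hcC : ∀ i h, c i h ∈ C := fun i h => hC'sub (e ⟨i, hjmem i h⟩).2
    have hcnotA : ∀ i h k, c i h ∉ A k := by
      intro i h k hk
      have := hcC i h
      rw [hCdef, Finset.mem_sdiff] at this
      exact this.2 (Finset.mem_biUnion.mpr ⟨k, Finset.mem_univ k, hk⟩)
    have hcinj : ∀ i₁ h₁ i₂ h₂, c i₁ h₁ = c i₂ h₂ → i₁ = i₂ := by
      intro i₁ h₁ i₂ h₂ hcc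
      have := e.injective (Subtype.coe_injective hcc)
      exact congrArg Subtype.val this
    set B : Fin r → Finset (Fin n) :=
      fun i => if h : i = j then S else insert (c i h) (A i) with hB
    have hBsup : ∀ k, A k ⊆ B k := by
      intro k
      by_cases h : k = j
      · subst h; rw [hB]; simp [hAj]
      · rw [hB]; simp only [dif_neg h]; exact Finset.subset_insert _ _
    have hBj : B j = S := by rw [hB]; simp
    have hBdisj : Pairwise (Function.onFun Disjoint B) := by
      intro a b hab
      simp only [Function.onFun, hB]
      by_cases ha : a = j <;> by_cases hb : b = j
      · exact absurd (ha.trans hb.symm) hab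
      · simp only [dif_pos ha, dif_neg hb, Finset.disjoint_insert_right, ← hAj]
        exact ⟨hcnotA b hb j, ha ▸ hdisj hab⟩
      · simp only [dif_neg ha, dif_pos hb, Finset.disjoint_insert_left, ← hAj]
        exact ⟨hcnotA a ha j, hb ▸ hdisj hab⟩
      · rw [dif_neg ha, dif_neg hb, Finset.disjoint_insert_left,
          Finset.disjoint_insert_right, Finset.mem_insert]
        refine ⟨?_, hcnotA b hb a, hdisj hab⟩
        rintro (hcc | hm)
        · exact hab (hcinj a ha b hb hcc)
        · exact hcnotA a ha b hm
    obtain ⟨i, hij, hBi⟩ := hbad B hBj hBdisj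
    rw [hB] at hBi
    simp only [dif_neg hij] at hBi
    -- the improved family
    set A' : Fin r → Finset (Fin n) := Function.update A i (insert (c i hij) (A i))
      with hA'
    have hA'B : ∀ k, A' k ⊆ B k := by
      intro k
      by_cases h : k = i
      · subst h
        simp only [hA', Function.update_self, hB, dif_neg hij]
        exact Finset.Subset.refl _
      · rw [hA', Function.update_of_ne h]; exact hBsup k
    have hA's : A' ∈ s := by
      rw [hs, Finset.mem_filter]
      refine ⟨Finset.mem_univ _, ?_, ?_, ?_⟩
      · rw [hA', Function.update_of_ne (Ne.symm hij), hAj]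
      · intro a b hab
        exact (hBdisj hab).mono (hA'B a) (hA'B b)
      · intro k
        by_cases h : k = i
        · subst h; rw [hA', Function.update_self]; exact hBi
        · rw [hA', Function.update_of_ne h]; exact hAK k
    have hsum : ∑ k, (A' k).card = (∑ k, (A k).card) + 1 := by
      have h1 : ∑ k ∈ Finset.univ.erase i, (A' k).card
          = ∑ k ∈ Finset.univ.erase i, (A k).card :=
        Finset.sum_congr rfl (fun k hk => by
          rw [hA', Function.update_of_ne (Finset.mem_erase.1 hk).1])
      have h2 : (A' i).card = (A i).card + 1 := by
        rw [hA', Function.update_self, Finset.card_insert_of_notMem (hcnotA i hij i)]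
      rw [← Finset.sum_erase_add Finset.univ _ (Finset.mem_univ i),
        ← Finset.sum_erase_add Finset.univ (fun k => (A k).card) (Finset.mem_univ i),
        h1, h2, add_assoc]
    have := hmax A' hA's
    omega
end

section
/- Let K be a proper simplicial complex on [n] that is superdual, i.e. K° ⊆ K. Then the geometric realization of the Bier sphere Bier(K) = K *_Δ K° is homotopy equivalent to the sphere S^{n−2}. -/
def realization {V : Type*} [Fintype V] (K : Set (Finset V)) : Set (V → ℝ) :=
  {f | (∀ v, 0 ≤ f v) ∧ (∑ v, f v) = 1 ∧ ∃ S ∈ K, ∀ v, f v ≠ 0 → v ∈ S}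

namespace BierAux

variable {n : ℕ}

/-- positive support -/
noncomputable def psupp (g : Fin n → ℝ) : Finset (Fin n) := Finset.univ.filter (fun v => 0 < g v)
/-- negative support -/
noncomputable def nsupp (g : Fin n → ℝ) : Finset (Fin n) := Finset.univ.filter (fun v => g v < 0)

lemma mem_psupp {g : Fin n → ℝ} {v : Fin n} : v ∈ psupp g ↔ 0 < g v := by
  simp [psupp]

lemma mem_nsupp {g : Fin n → ℝ} {v : Fin n} : v ∈ nsupp g ↔ g v < 0 := by
  simp [nsupp]

variable {K : Set (Finset (Fin n))}

lemma univ_not_mem (hK : IsComplex K) (hproper : K ≠ Set.univ) :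
    Finset.univ ∉ K := fun h =>
  hproper (Set.eq_univ_of_forall fun A => hK.2 A _ (Finset.subset_univ A) h)

lemma empty_mem_dual (hK : IsComplex K) (hproper : K ≠ Set.univ) :
    ∅ ∈ alexDual K := by
  simpa [alexDual] using univ_not_mem hK hproper

lemma dual_mono (hK : IsComplex K) {A B : Finset (Fin n)} (hAB : A ⊆ B)
    (hB : B ∈ alexDual K) : A ∈ alexDual K := fun hA =>
  hB (hK.2 _ _ (Finset.sdiff_subset_sdiff (le_refl _) hAB) hA)

lemma univ_not_mem_dual (hK : IsComplex K) : Finset.univ ∉ alexDual K := by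
  intro h
  exact h (by simpa using hK.1)

/-- the set of heights `t` at which the positive support of `u + t·𝟙` is a face of `K` -/
def Pset (K : Set (Finset (Fin n))) (u : Fin n → ℝ) : Set ℝ :=
  {t | psupp (fun v => u v + t) ∈ K}

def Qset (K : Set (Finset (Fin n))) (u : Fin n → ℝ) : Set ℝ :=
  {t | nsupp (fun v => u v + t) ∈ alexDual K}

noncomputable def tau (K : Set (Finset (Fin n))) (u : Fin n → ℝ) : ℝ := sSup (Pset K u)
noncomputable def sigma (K : Set (Finset (Fin n))) (u : Fin n → ℝ) : ℝ := sInf (Qset K u)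

lemma psupp_mono {u : Fin n → ℝ} {t t' : ℝ} (h : t ≤ t') :
    psupp (fun v => u v + t) ⊆ psupp (fun v => u v + t') := by
  intro v hv
  rw [mem_psupp] at hv ⊢
  linarith

lemma nsupp_anti {u : Fin n → ℝ} {t t' : ℝ} (h : t ≤ t') :
    nsupp (fun v => u v + t') ⊆ nsupp (fun v => u v + t)  := by
  intro v hv
  rw [mem_nsupp] at hv ⊢
  linarith

lemma abs_le_sum (u : Fin n → ℝ) (v : Fin n) : |u v| ≤ ∑ w, |u w| :=
  Finset.single_le_sum (fun w _ => abs_nonneg (u w)) (Finset.mem_univ v)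

lemma Pset_nonempty (hK : IsComplex K) (u : Fin n → ℝ) : (Pset K u).Nonempty := by
  refine ⟨-(1 + ∑ w, |u w|), ?_⟩
  have : psupp (fun v => u v + -(1 + ∑ w, |u w|)) = ∅ := by
    apply Finset.eq_empty_of_forall_notMem
    intro v hv
    rw [mem_psupp] at hv
    have h1 : u v ≤ |u v| := le_abs_self _
    have h2 := abs_le_sum u v
    linarith
  rw [Pset, Set.mem_setOf_eq, this]
  exact hK.1

lemma Pset_bddAbove (hK : IsComplex K) (hproper : K ≠ Set.univ) (u : Fin n → ℝ) :
    BddAbove (Pset K u) := by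
  refine ⟨1 + ∑ w, |u w|, fun t ht => ?_⟩
  by_contra hlt
  push_neg at hlt
  have : psupp (fun v => u v + t) = Finset.univ := by
    apply Finset.eq_univ_of_forall
    intro v
    rw [mem_psupp]
    have h1 : -|u v| ≤ u v := neg_abs_le _
    have h2 := abs_le_sum u v
    linarith
  rw [Pset, Set.mem_setOf_eq, this] at ht
  exact univ_not_mem hK hproper ht

lemma Qset_nonempty (hK : IsComplex K) (hproper : K ≠ Set.univ) (u : Fin n → ℝ) :
    (Qset K u).Nonempty := by
  refine ⟨1 + ∑ w, |u w|, ?_⟩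
  have : nsupp (fun v => u v + (1 + ∑ w, |u w|)) = ∅ := by
    apply Finset.eq_empty_of_forall_notMem
    intro v hv
    rw [mem_nsupp] at hv
    have h1 : -|u v| ≤ u v := neg_abs_le _
    have h2 := abs_le_sum u v
    linarith
  rw [Qset, Set.mem_setOf_eq, this]
  exact empty_mem_dual hK hproper

lemma Qset_bddBelow (hK : IsComplex K) (u : Fin n → ℝ) : BddBelow (Qset K u) := by
  refine ⟨-(1 + ∑ w, |u w|), fun t ht => ?_⟩
  by_contra hlt
  push_neg at hlt
  have : nsupp (fun v => u v + t) = Finset.univ := by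
    apply Finset.eq_univ_of_forall
    intro v
    rw [mem_nsupp]
    have h1 : u v ≤ |u v| := le_abs_self _
    have h2 := abs_le_sum u v
    linarith
  rw [Qset, Set.mem_setOf_eq, this] at ht
  exact univ_not_mem_dual hK ht

lemma tau_mem (hK : IsComplex K) (hproper : K ≠ Set.univ) (u : Fin n → ℝ) :
    tau K u ∈ Pset K u := by
  set A := psupp (fun v => u v + tau K u) with hA
  rcases A.eq_empty_or_nonempty with hAe | hAne
  · show A ∈ K
    rw [hAe]; exact hK.1
  · set ε := A.inf' hAne (fun v => u v + tau K u) with hε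
    have hεpos : 0 < ε := by
      rw [hε, Finset.lt_inf'_iff]
      intro v hv
      rw [hA, mem_psupp] at hv
      exact hv
    obtain ⟨t, ht, htlt⟩ := exists_lt_of_lt_csSup (Pset_nonempty hK u)
      (show tau K u - ε < tau K u by linarith)
    have hle : t ≤ tau K u := le_csSup (Pset_bddAbove hK hproper u) ht
    have heq : psupp (fun v => u v + t) = A := by
      apply Finset.Subset.antisymm (psupp_mono hle)
      intro v hv
      have h1 : ε ≤ u v + tau K u := Finset.inf'_le _ hv
      rw [mem_psupp]
      linarith
    show A ∈ K
    rw [← heq]; exact ht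

lemma mem_Pset_iff (hK : IsComplex K) (hproper : K ≠ Set.univ) {u : Fin n → ℝ} {t : ℝ} :
    t ∈ Pset K u ↔ t ≤ tau K u := by
  constructor
  · exact fun ht => le_csSup (Pset_bddAbove hK hproper u) ht
  · intro ht
    exact hK.2 _ _ (psupp_mono ht) (tau_mem hK hproper u)

lemma sigma_mem (hK : IsComplex K) (hproper : K ≠ Set.univ) (u : Fin n → ℝ) :
    sigma K u ∈ Qset K u := by
  set A := nsupp (fun v => u v + sigma K u) with hA
  rcases A.eq_empty_or_nonempty with hAe | hAne
  · show A ∈ alexDual K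
    rw [hAe]; exact empty_mem_dual hK hproper
  · set ε := A.inf' hAne (fun v => -(u v + sigma K u)) with hε
    have hεpos : 0 < ε := by
      rw [hε, Finset.lt_inf'_iff]
      intro v hv
      rw [hA, mem_nsupp] at hv
      linarith
    obtain ⟨t, ht, htlt⟩ := exists_lt_of_csInf_lt (Qset_nonempty hK hproper u)
      (show sigma K u < sigma K u + ε by linarith)
    have hle : sigma K u ≤ t := csInf_le (Qset_bddBelow hK u) ht
    have heq : nsupp (fun v => u v + t) = A := by
      apply Finset.Subset.antisymm (nsupp_anti hle)
      intro v hv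
      have h1 : ε ≤ -(u v + sigma K u) := Finset.inf'_le _ hv
      rw [mem_nsupp]
      linarith
    show A ∈ alexDual K
    rw [← heq]; exact ht

lemma mem_Qset_iff (hK : IsComplex K) (hproper : K ≠ Set.univ) {u : Fin n → ℝ} {t : ℝ} :
    t ∈ Qset K u ↔ sigma K u ≤ t := by
  constructor
  · exact fun ht => csInf_le (Qset_bddBelow hK u) ht
  · intro ht
    exact dual_mono hK (nsupp_anti ht) (sigma_mem hK hproper u)

lemma cover (hK : IsComplex K) (u : Fin n → ℝ) (t : ℝ) :
    t ∈ Pset K u ∨ t ∈ Qset K u := by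
  by_cases hP : t ∈ Pset K u
  · exact Or.inl hP
  · refine Or.inr ?_
    intro hmem
    apply hP
    refine hK.2 _ _ ?_ hmem
    intro v hv
    rw [mem_psupp] at hv
    rw [Finset.mem_sdiff]
    refine ⟨Finset.mem_univ v, ?_⟩
    rw [mem_nsupp]
    linarith

lemma sigma_le_tau (hK : IsComplex K) (hproper : K ≠ Set.univ) (u : Fin n → ℝ) :
    sigma K u ≤ tau K u := by
  by_contra hlt
  push_neg at hlt
  set t := (tau K u + sigma K u) / 2 with ht
  rcases cover hK u t with h | h
  · rw [mem_Pset_iff hK hproper] at h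
    simp only [ht] at h
    linarith
  · rw [mem_Qset_iff hK hproper] at h
    simp only [ht] at h
    linarith


variable {n : ℕ} {K : Set (Finset (Fin n))}

lemma tau_lip (hK : IsComplex K) (hproper : K ≠ Set.univ) {u u' : Fin n → ℝ} {ε : ℝ}
    (h : ∀ v, |u v - u' v| ≤ ε) : tau K u' ≤ tau K u + ε := by
  apply csSup_le (Pset_nonempty hK u')
  intro t ht
  have h2 : t - ε ∈ Pset K u := by
    refine hK.2 _ _ ?_ ht
    intro v hv
    rw [mem_psupp] at hv ⊢
    have := abs_le.mp (h v)
    linarith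
  have h3 : t - ε ≤ tau K u := le_csSup (Pset_bddAbove hK hproper u) h2
  linarith

lemma sigma_lip (hK : IsComplex K) (hproper : K ≠ Set.univ) {u u' : Fin n → ℝ} {ε : ℝ}
    (h : ∀ v, |u v - u' v| ≤ ε) : sigma K u - ε ≤ sigma K u' := by
  apply le_csInf (Qset_nonempty hK hproper u')
  intro t ht
  have h2 : t + ε ∈ Qset K u := by
    refine dual_mono hK ?_ ht
    intro v hv
    rw [mem_nsupp] at hv ⊢
    have := abs_le.mp (h v)
    linarith
  have h3 : sigma K u ≤ t + ε := csInf_le (Qset_bddBelow hK u) h2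
  linarith

lemma dist_coord_le {u u' : Fin n → ℝ} (v : Fin n) : |u v - u' v| ≤ dist u u' := by
  have := dist_le_pi_dist u u' v
  rwa [Real.dist_eq] at this

lemma continuous_tau (hK : IsComplex K) (hproper : K ≠ Set.univ) :
    Continuous (tau K : (Fin n → ℝ) → ℝ) := by
  apply LipschitzWith.continuous (K := 1)
  apply LipschitzWith.of_dist_le_mul
  intro u u'
  rw [Real.dist_eq, NNReal.coe_one, one_mul]
  rw [abs_le]
  constructor
  · have := tau_lip hK hproper (u := u) (u' := u') (ε := dist u u') (fun v => dist_coord_le v)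
    linarith
  · have := tau_lip hK hproper (u := u') (u' := u) (ε := dist u u')
      (fun v => by rw [abs_sub_comm]; exact dist_coord_le v)
    linarith

lemma continuous_sigma (hK : IsComplex K) (hproper : K ≠ Set.univ) :
    Continuous (sigma K : (Fin n → ℝ) → ℝ) := by
  apply LipschitzWith.continuous (K := 1)
  apply LipschitzWith.of_dist_le_mul
  intro u u'
  rw [Real.dist_eq, NNReal.coe_one, one_mul]
  rw [abs_le]
  constructor
  · have := sigma_lip hK hproper (u := u') (u' := u) (ε := dist u u')
      (fun v => by rw [abs_sub_comm]; exact dist_coord_le v)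
    linarith
  · have := sigma_lip hK hproper (u := u) (u' := u') (ε := dist u u') (fun v => dist_coord_le v)
    linarith

lemma psupp_smul {y : Fin n → ℝ} {c : ℝ} (hc : 0 < c) :
    psupp (fun v => c * y v) = psupp y := by
  ext v
  rw [mem_psupp, mem_psupp]
  constructor
  · intro h; nlinarith
  · intro h; exact mul_pos hc h

lemma nsupp_smul {y : Fin n → ℝ} {c : ℝ} (hc : 0 < c) :
    nsupp (fun v => c * y v) = nsupp y := by
  ext v
  rw [mem_nsupp, mem_nsupp]
  constructor
  · intro h; nlinarith
  · intro h; exact mul_neg_of_pos_of_neg hc h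

lemma mem_Pset_smul_iff {u : Fin n → ℝ} {c t : ℝ} (hc : 0 < c) :
    t ∈ Pset K (fun v => c * u v) ↔ t / c ∈ Pset K u := by
  have : psupp (fun v => c * u v + t) = psupp (fun v => u v + t / c) := by
    have heq : (fun v => c * u v + t) = (fun v => c * (u v + t / c)) := by
      funext v
      field_simp
    rw [heq, psupp_smul hc]
  rw [Pset, Pset, Set.mem_setOf_eq, Set.mem_setOf_eq, this]

lemma mem_Qset_smul_iff {u : Fin n → ℝ} {c t : ℝ} (hc : 0 < c) :
    t ∈ Qset K (fun v => c * u v) ↔ t / c ∈ Qset K u := by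
  have : nsupp (fun v => c * u v + t) = nsupp (fun v => u v + t / c) := by
    have heq : (fun v => c * u v + t) = (fun v => c * (u v + t / c)) := by
      funext v
      field_simp
    rw [heq, nsupp_smul hc]
  rw [Qset, Qset, Set.mem_setOf_eq, Set.mem_setOf_eq, this]

lemma tau_smul (hK : IsComplex K) (hproper : K ≠ Set.univ) {u : Fin n → ℝ} {c : ℝ}
    (hc : 0 < c) : tau K (fun v => c * u v) = c * tau K u := by
  apply le_antisymm
  · have h1 := tau_mem hK hproper (fun v => c * u v)
    rw [mem_Pset_smul_iff hc, mem_Pset_iff hK hproper] at h1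
    rw [div_le_iff₀ hc] at h1
    linarith [h1]
  · have h2 : c * tau K u ∈ Pset K (fun v => c * u v) := by
      rw [mem_Pset_smul_iff hc, mul_div_cancel_left₀ _ (ne_of_gt hc)]
      exact tau_mem hK hproper u
    exact le_csSup (Pset_bddAbove hK hproper _) h2

lemma sigma_smul (hK : IsComplex K) (hproper : K ≠ Set.univ) {u : Fin n → ℝ} {c : ℝ}
    (hc : 0 < c) : sigma K (fun v => c * u v) = c * sigma K u := by
  apply le_antisymm
  · have h2 : c * sigma K u ∈ Qset K (fun v => c * u v) := by
      rw [mem_Qset_smul_iff hc, mul_div_cancel_left₀ _ (ne_of_gt hc)]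
      exact sigma_mem hK hproper u
    exact csInf_le (Qset_bddBelow hK _) h2
  · have h1 := sigma_mem hK hproper (fun v => c * u v)
    rw [mem_Qset_smul_iff hc, mem_Qset_iff hK hproper] at h1
    rw [le_div_iff₀ hc] at h1
    linarith [h1]


variable {n : ℕ} {K : Set (Finset (Fin n))}

/-- the "signed measure" model of the Bier sphere -/
def Xset (K : Set (Finset (Fin n))) : Set (Fin n → ℝ) :=
  {g | (∑ v, |g v|) = 1 ∧ psupp g ∈ K ∧ nsupp g ∈ alexDual K}

noncomputable def avg (g : Fin n → ℝ) : ℝ := (∑ v, g v) / n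

noncomputable def hp (g : Fin n → ℝ) : Fin n → ℝ := fun v => g v - avg g

lemma hp_add_avg (g : Fin n → ℝ) : (fun v => hp g v + avg g) = g := by
  funext v
  simp [hp]

lemma sum_hp (hn : 0 < n) (g : Fin n → ℝ) : ∑ v, hp g v = 0 := by
  have hne : (n : ℝ) ≠ 0 := Nat.cast_ne_zero.mpr hn.ne'
  simp only [hp, Finset.sum_sub_distrib, Finset.sum_const, Finset.card_univ,
    Fintype.card_fin, nsmul_eq_mul, avg]
  field_simp
  ring

lemma hp_ne_zero (hK : IsComplex K) (hproper : K ≠ Set.univ) {g : Fin n → ℝ}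
    (hg : g ∈ Xset K) : hp g ≠ 0 := by
  intro h0
  have hg_eq : ∀ v, g v = avg g := by
    intro v
    have := congrFun h0 v
    simp only [hp, Pi.zero_apply, sub_eq_zero] at this
    exact this
  rcases lt_trichotomy (avg g) 0 with hlt | heq | hgt
  · have : nsupp g = Finset.univ := Finset.eq_univ_of_forall fun v => by
      rw [mem_nsupp, hg_eq v]; exact hlt
    exact univ_not_mem_dual hK (this ▸ hg.2.2)
  · have hzero : ∀ v, g v = 0 := fun v => by rw [hg_eq v, heq]
    have : (∑ v, |g v|) = 0 := by simp [hzero]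
    rw [hg.1] at this
    norm_num at this
  · have : psupp g = Finset.univ := Finset.eq_univ_of_forall fun v => by
      rw [mem_psupp, hg_eq v]; exact hgt
    exact univ_not_mem hK hproper (this ▸ hg.2.1)

/-- ℓ¹-normalization -/
noncomputable def nrm (y : Fin n → ℝ) : Fin n → ℝ := fun v => (∑ w, |y w|)⁻¹ * y v

lemma sum_abs_nonneg (y : Fin n → ℝ) : 0 ≤ ∑ w, |y w| :=
  Finset.sum_nonneg fun w _ => abs_nonneg _

lemma sum_abs_pos {y : Fin n → ℝ} (hy : y ≠ 0) : 0 < ∑ w, |y w| := by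
  rcases (Function.ne_iff.mp hy) with ⟨v, hv⟩
  have h1 : 0 < |y v| := abs_pos.mpr hv
  exact Finset.sum_pos' (fun w _ => abs_nonneg _) ⟨v, Finset.mem_univ v, h1⟩

lemma psupp_nrm {y : Fin n → ℝ} (hy : y ≠ 0) : psupp (nrm y) = psupp y := by
  have := psupp_smul (y := y) (c := (∑ w, |y w|)⁻¹) (inv_pos.mpr (sum_abs_pos hy))
  exact this

lemma nsupp_nrm {y : Fin n → ℝ} (hy : y ≠ 0) : nsupp (nrm y) = nsupp y := by
  exact nsupp_smul (inv_pos.mpr (sum_abs_pos hy))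

lemma sum_abs_nrm {y : Fin n → ℝ} (hy : y ≠ 0) : ∑ v, |nrm y v| = 1 := by
  have hL := sum_abs_pos hy
  simp only [nrm, abs_mul, abs_inv, abs_of_pos hL, ← Finset.mul_sum]
  field_simp

lemma nrm_smul {y : Fin n → ℝ} {c : ℝ} (hc : 0 < c) :
    nrm (fun v => c * y v) = nrm y := by
  funext v
  simp only [nrm, abs_mul, abs_of_pos hc, ← Finset.mul_sum]
  rcases eq_or_ne y 0 with rfl | hy
  · simp
  · have hL := sum_abs_pos hy
    rw [mul_inv]
    field_simp

lemma shift_ne_zero (hn : 0 < n) {h : Fin n → ℝ} (hsum : ∑ v, h v = 0) (hne : h ≠ 0)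
    (c : ℝ) : (fun v => h v + c) ≠ 0 := by
  intro h0
  apply hne
  have hc : ∀ v, h v = -c := by
    intro v
    have := congrFun h0 v
    simp only [Pi.zero_apply] at this
    linarith
  have hsum2 : ∑ v, h v = n * (-c) := by
    simp [hc, Finset.sum_const, Finset.card_univ, mul_comm]
  rw [hsum] at hsum2
  have hnne : (n : ℝ) ≠ 0 := Nat.cast_ne_zero.mpr hn.ne'
  have hc0 : c = 0 := by
    rcases mul_eq_zero.mp hsum2.symm with h | h
    · exact absurd h hnne
    · linarith
  funext v
  rw [hc v, hc0, neg_zero, Pi.zero_apply]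

lemma mem_Xset_of (hK : IsComplex K) (hproper : K ≠ Set.univ) (hn : 0 < n)
    {h : Fin n → ℝ} (hsum : ∑ v, h v = 0) (hne : h ≠ 0) {c : ℝ}
    (hc1 : sigma K h ≤ c) (hc2 : c ≤ tau K h) :
    nrm (fun v => h v + c) ∈ Xset K := by
  have hy : (fun v => h v + c) ≠ 0 := shift_ne_zero hn hsum hne c
  refine ⟨sum_abs_nrm hy, ?_, ?_⟩
  · rw [psupp_nrm hy]
    exact (mem_Pset_iff hK hproper).mpr hc2
  · rw [nsupp_nrm hy]
    exact (mem_Qset_iff hK hproper).mpr hc1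

lemma avg_mem (hn : 0 < n) {g : Fin n → ℝ} (hg : g ∈ Xset K) :
    avg g ∈ Pset K (hp g) ∧ avg g ∈ Qset K (hp g) := by
  constructor
  · show psupp (fun v => hp g v + avg g) ∈ K
    rw [hp_add_avg]
    exact hg.2.1
  · show nsupp (fun v => hp g v + avg g) ∈ alexDual K
    rw [hp_add_avg]
    exact hg.2.2

/-- the midpoint section -/
noncomputable def msec (K : Set (Finset (Fin n))) (u : Fin n → ℝ) : ℝ :=
  (sigma K u + tau K u) / 2

lemma msec_bounds (hK : IsComplex K) (hproper : K ≠ Set.univ) (u : Fin n → ℝ) :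
    sigma K u ≤ msec K u ∧ msec K u ≤ tau K u := by
  have := sigma_le_tau hK hproper u
  constructor <;> (rw [msec]; linarith)

lemma msec_smul (hK : IsComplex K) (hproper : K ≠ Set.univ) {u : Fin n → ℝ} {c : ℝ}
    (hc : 0 < c) : msec K (fun v => c * u v) = c * msec K u := by
  rw [msec, msec, tau_smul hK hproper hc, sigma_smul hK hproper hc]
  ring


variable {n : ℕ} {K : Set (Finset (Fin n))}

noncomputable def toEu (y : Fin n → ℝ) : EuclideanSpace ℝ (Fin n) :=
  (WithLp.equiv 2 (Fin n → ℝ)).symm y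

lemma toEu_apply (y : Fin n → ℝ) (v : Fin n) : toEu y v = y v :=
  rfl

lemma toEu_coordFun (x : EuclideanSpace ℝ (Fin n)) : toEu (fun v => x v) = x := by
  have h1 : (fun v => x v) = (WithLp.equiv 2 (Fin n → ℝ)) x :=
    funext fun v => rfl
  rw [toEu, h1, Equiv.symm_apply_apply]

lemma toEu_smul (c : ℝ) (y : Fin n → ℝ) : toEu (fun v => c * y v) = c • toEu y := by
  have h1 : (fun v => c * y v) = c • y := funext fun v => rfl
  rw [toEu, h1]
  rfl

lemma toEu_ne_zero {y : Fin n → ℝ} (hy : y ≠ 0) : toEu y ≠ 0 := by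
  intro h0
  apply hy
  funext v
  have := congrArg (fun x : EuclideanSpace ℝ (Fin n) => x v) h0
  simpa [toEu_apply] using this

/-- the sphere of the hyperplane of coordinate-sum zero -/
def Zset (n : ℕ) : Set (EuclideanSpace ℝ (Fin n)) :=
  {x | (∑ v, x v) = 0 ∧ ‖x‖ = 1}

lemma coordFun_ne_zero {x : EuclideanSpace ℝ (Fin n)} (hx : ‖x‖ = 1) :
    (fun v => x v) ≠ 0 := by
  intro h0
  have hz : ∀ v, x v = 0 := fun v => congrFun h0 v
  rw [EuclideanSpace.norm_eq] at hx
  simp only [hz, norm_zero] at hx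
  norm_num at hx

noncomputable def piFun (K : Set (Finset (Fin n))) (g : Fin n → ℝ) :
    EuclideanSpace ℝ (Fin n) :=
  toEu (fun v => ‖toEu (hp g)‖⁻¹ * hp g v)

noncomputable def sFun (K : Set (Finset (Fin n))) (x : EuclideanSpace ℝ (Fin n)) :
    Fin n → ℝ :=
  nrm (fun v => x v + msec K (fun w => x w))

lemma norm_toEu_hp_pos (hK : IsComplex K) (hproper : K ≠ Set.univ) {g : Fin n → ℝ}
    (hg : g ∈ Xset K) : 0 < ‖toEu (hp g)‖ :=
  norm_pos_iff.mpr (toEu_ne_zero (hp_ne_zero hK hproper hg))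

lemma piFun_mem (hK : IsComplex K) (hproper : K ≠ Set.univ) (hn : 0 < n)
    {g : Fin n → ℝ} (hg : g ∈ Xset K) : piFun K g ∈ Zset n := by
  set l := ‖toEu (hp g)‖ with hl
  have hlpos : 0 < l := norm_toEu_hp_pos hK hproper hg
  constructor
  · show (∑ v, piFun K g v) = 0
    simp only [piFun, toEu_apply, ← Finset.mul_sum]
    rw [sum_hp hn g, mul_zero]
  · show ‖piFun K g‖ = 1
    rw [piFun, ← hl, toEu_smul, norm_smul]
    simp only [norm_inv, Real.norm_eq_abs, abs_of_pos hlpos, ← hl]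
    field_simp

lemma sFun_mem (hK : IsComplex K) (hproper : K ≠ Set.univ) (hn : 0 < n)
    {x : EuclideanSpace ℝ (Fin n)} (hx : x ∈ Zset n) : sFun K x ∈ Xset K := by
  have hsum : (∑ v, (fun w => x w) v) = 0 := hx.1
  have hne : (fun w => x w) ≠ 0 := coordFun_ne_zero hx.2
  exact mem_Xset_of hK hproper hn hsum hne
    (msec_bounds hK hproper _).1 (msec_bounds hK hproper _).2

lemma nrm_of_mem {g : Fin n → ℝ} (hg : g ∈ Xset K) : nrm g = g := by
  funext v
  rw [nrm, hg.1]
  norm_num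

lemma avg_bounds (hK : IsComplex K) (hproper : K ≠ Set.univ) (hn : 0 < n)
    {g : Fin n → ℝ} (hg : g ∈ Xset K) :
    sigma K (hp g) ≤ avg g ∧ avg g ≤ tau K (hp g) := by
  obtain ⟨h1, h2⟩ := avg_mem hn hg
  exact ⟨(mem_Qset_iff hK hproper).mp h2, (mem_Pset_iff hK hproper).mp h1⟩

/-- the deformation: slide the height parameter linearly to the midpoint -/
noncomputable def Hfun (K : Set (Finset (Fin n))) (θ : ℝ) (g : Fin n → ℝ) :
    Fin n → ℝ :=
  nrm (fun v => hp g v + ((1 - θ) * msec K (hp g) + θ * avg g))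

lemma Hfun_mem (hK : IsComplex K) (hproper : K ≠ Set.univ) (hn : 0 < n)
    {θ : ℝ} (hθ0 : 0 ≤ θ) (hθ1 : θ ≤ 1) {g : Fin n → ℝ} (hg : g ∈ Xset K) :
    Hfun K θ g ∈ Xset K := by
  have hb1 := msec_bounds hK hproper (hp g)
  have hb2 := avg_bounds hK hproper hn hg
  refine mem_Xset_of hK hproper hn (sum_hp hn g) (hp_ne_zero hK hproper hg) ?_ ?_
  · nlinarith [hb1.1, hb2.1]
  · nlinarith [hb1.2, hb2.2]

lemma Hfun_one {g : Fin n → ℝ} (hg : g ∈ Xset K) : Hfun K 1 g = g := by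
  rw [Hfun]
  have h1 : (fun v => hp g v + ((1 - 1) * msec K (hp g) + 1 * avg g)) = g := by
    funext v
    simp [hp]
  rw [h1, nrm_of_mem hg]

lemma Hfun_zero (hK : IsComplex K) (hproper : K ≠ Set.univ) (hn : 0 < n)
    {g : Fin n → ℝ} (hg : g ∈ Xset K) : Hfun K 0 g = sFun K (piFun K g) := by
  set l := ‖toEu (hp g)‖ with hl
  have hlpos : 0 < l := norm_toEu_hp_pos hK hproper hg
  have hlinv : 0 < l⁻¹ := inv_pos.mpr hlpos
  have hcoord : ∀ v, piFun K g v = l⁻¹ * hp g v := by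
    intro v
    rw [piFun, toEu_apply, hl]
  have hmsec : msec K (fun w => piFun K g w) = l⁻¹ * msec K (hp g) := by
    have h1 : (fun w => piFun K g w) = (fun w => l⁻¹ * hp g w) := funext hcoord
    rw [h1, msec_smul hK hproper hlinv]
  rw [sFun, hmsec]
  have h2 : (fun v => piFun K g v + l⁻¹ * msec K (hp g))
      = (fun v => l⁻¹ * (hp g v + msec K (hp g))) := by
    funext v
    rw [hcoord v]
    ring
  rw [h2, nrm_smul hlinv, Hfun]
  congr 1
  funext v
  ring

lemma piFun_sFun (hK : IsComplex K) (hproper : K ≠ Set.univ) (hn : 0 < n)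
    {x : EuclideanSpace ℝ (Fin n)} (hx : x ∈ Zset n) : piFun K (sFun K x) = x := by
  have hnn : (n : ℝ) ≠ 0 := Nat.cast_ne_zero.mpr hn.ne'
  set m := msec K (fun w => x w) with hm
  set y : Fin n → ℝ := fun v => x v + m with hy
  have hyne : y ≠ 0 := shift_ne_zero hn hx.1 (coordFun_ne_zero hx.2) m
  set L := ∑ w, |y w| with hL
  have hLpos : 0 < L := sum_abs_pos hyne
  set g := sFun K x with hg
  have hgv : ∀ v, g v = L⁻¹ * y v := fun v => rfl
  have hsumg : (∑ v, g v) = L⁻¹ * ((n : ℝ) * m) := by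
    simp only [hgv, ← Finset.mul_sum, hy]
    rw [Finset.sum_add_distrib, hx.1, zero_add, Finset.sum_const, Finset.card_univ,
      Fintype.card_fin, nsmul_eq_mul]
  have havg : avg g = L⁻¹ * m := by
    rw [avg, hsumg]
    field_simp
  have hhp : hp g = fun v => L⁻¹ * x v := by
    funext v
    rw [hp, havg, hgv, hy]
    ring
  have htoEu : toEu (hp g) = L⁻¹ • x := by
    rw [hhp, toEu_smul, toEu_coordFun]
  have hnorm : ‖toEu (hp g)‖ = L⁻¹ := by
    rw [htoEu, norm_smul, hx.2, mul_one, norm_inv, Real.norm_eq_abs, abs_of_pos hLpos]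
  rw [piFun, hnorm, hhp]
  have h3 : (fun v => (L⁻¹)⁻¹ * (L⁻¹ * x v)) = (fun v => x v) := by
    funext v
    field_simp
  rw [show (fun v => (L⁻¹)⁻¹ * ((fun v => L⁻¹ * x v) v)) = (fun v => x v) from h3]
  exact toEu_coordFun x


variable {n : ℕ} {K : Set (Finset (Fin n))}

lemma continuous_avg : Continuous (avg : (Fin n → ℝ) → ℝ) :=
  (continuous_finset_sum _ fun v _ => continuous_apply v).div_const _

lemma continuous_hp : Continuous (hp : (Fin n → ℝ) → (Fin n → ℝ)) :=
  continuous_pi fun v => (continuous_apply v).sub continuous_avg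

lemma continuous_toEu : Continuous (toEu : (Fin n → ℝ) → EuclideanSpace ℝ (Fin n)) :=
  PiLp.continuous_toLp 2 (fun _ : Fin n => ℝ)

lemma continuous_coordFun :
    Continuous (fun x : EuclideanSpace ℝ (Fin n) => (fun v => x v)) :=
  PiLp.continuous_ofLp 2 (fun _ : Fin n => ℝ)

lemma continuous_msec (hK : IsComplex K) (hproper : K ≠ Set.univ) :
    Continuous (msec K : (Fin n → ℝ) → ℝ) :=
  ((continuous_sigma hK hproper).add (continuous_tau hK hproper)).div_const 2

noncomputable def piMap (hK : IsComplex K) (hproper : K ≠ Set.univ) (hn : 0 < n) :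
    C(↥(Xset K), ↥(Zset n)) :=
  ⟨fun g => ⟨piFun K g.1, piFun_mem hK hproper hn g.2⟩, by
    apply Continuous.subtype_mk
    have chp : Continuous fun g : ↥(Xset K) => hp g.1 :=
      continuous_hp.comp continuous_subtype_val
    have cl : Continuous fun g : ↥(Xset K) => ‖toEu (hp g.1)‖ :=
      (continuous_toEu.comp chp).norm
    have clinv : Continuous fun g : ↥(Xset K) => ‖toEu (hp g.1)‖⁻¹ :=
      cl.inv₀ fun g => (norm_toEu_hp_pos hK hproper g.2).ne'
    exact continuous_toEu.comp <| continuous_pi fun v =>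
      clinv.mul ((continuous_apply v).comp chp)⟩

noncomputable def sMap (hK : IsComplex K) (hproper : K ≠ Set.univ) (hn : 0 < n) :
    C(↥(Zset n), ↥(Xset K)) :=
  ⟨fun x => ⟨sFun K x.1, sFun_mem hK hproper hn x.2⟩, by
    apply Continuous.subtype_mk
    have cz : Continuous fun x : ↥(Zset n) => (fun v => x.1 v) :=
      continuous_coordFun.comp continuous_subtype_val
    have cm : Continuous fun x : ↥(Zset n) => msec K (fun v => x.1 v) :=
      (continuous_msec hK hproper).comp cz
    have cy : Continuous fun x : ↥(Zset n) => (fun v => x.1 v + msec K (fun w => x.1 w)) :=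
      continuous_pi fun v => ((continuous_apply v).comp cz).add cm
    have cS : Continuous fun x : ↥(Zset n) =>
        (∑ w, |(x.1 w + msec K (fun w' => x.1 w'))|) :=
      continuous_finset_sum _ fun w _ => (((continuous_apply w).comp cz).add cm).abs
    have cSne : ∀ x : ↥(Zset n), (∑ w, |(x.1 w + msec K (fun w' => x.1 w'))|) ≠ 0 := by
      intro x
      exact (sum_abs_pos (shift_ne_zero hn x.2.1 (coordFun_ne_zero x.2.2) _)).ne'
    exact continuous_pi fun v =>
      (cS.inv₀ cSne).mul (((continuous_apply v).comp cz).add cm)⟩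

noncomputable def stepTwo (hK : IsComplex K) (hproper : K ≠ Set.univ) (hn : 0 < n) :
    ContinuousMap.HomotopyEquiv ↥(Xset K) ↥(Zset n) where
  toFun := piMap hK hproper hn
  invFun := sMap hK hproper hn
  left_inv := by
    refine ⟨{ toFun := fun p => ⟨Hfun K ((p.1 : ℝ)) p.2.1,
                Hfun_mem hK hproper hn (by linarith [p.1.2.1]) (by linarith [p.1.2.2]) p.2.2⟩,
              continuous_toFun := ?_,
              map_zero_left := ?_,
              map_one_left := ?_ }⟩
    · apply Continuous.subtype_mk
      have cθ : Continuous fun p : ↥unitInterval × ↥(Xset K) => ((p.1 : ℝ)) :=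
        continuous_subtype_val.comp continuous_fst
      have cg : Continuous fun p : ↥unitInterval × ↥(Xset K) => p.2.1 :=
        continuous_subtype_val.comp continuous_snd
      have chp : Continuous fun p : ↥unitInterval × ↥(Xset K) => hp p.2.1 :=
        continuous_hp.comp cg
      have cm : Continuous fun p : ↥unitInterval × ↥(Xset K) => msec K (hp p.2.1) :=
        (continuous_msec hK hproper).comp chp
      have ca : Continuous fun p : ↥unitInterval × ↥(Xset K) => avg p.2.1 :=
        continuous_avg.comp cg
      have cc : Continuous fun p : ↥unitInterval × ↥(Xset K) =>
          ((1 - (p.1 : ℝ)) * msec K (hp p.2.1) + ((p.1 : ℝ)) * avg p.2.1) :=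
        ((continuous_const.sub cθ).mul cm).add (cθ.mul ca)
      have cy : Continuous fun p : ↥unitInterval × ↥(Xset K) =>
          (fun v => hp p.2.1 v + ((1 - (p.1 : ℝ)) * msec K (hp p.2.1)
            + ((p.1 : ℝ)) * avg p.2.1)) :=
        continuous_pi fun v => ((continuous_apply v).comp chp).add cc
      have cS : Continuous fun p : ↥unitInterval × ↥(Xset K) =>
          (∑ w, |hp p.2.1 w + ((1 - (p.1 : ℝ)) * msec K (hp p.2.1)
            + ((p.1 : ℝ)) * avg p.2.1)|) :=
        continuous_finset_sum _ fun w _ => (((continuous_apply w).comp chp).add cc).abs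
      have cSne : ∀ p : ↥unitInterval × ↥(Xset K),
          (∑ w, |hp p.2.1 w + ((1 - (p.1 : ℝ)) * msec K (hp p.2.1)
            + ((p.1 : ℝ)) * avg p.2.1)|) ≠ 0 := by
        intro p
        exact (sum_abs_pos (shift_ne_zero hn (sum_hp hn p.2.1)
          (hp_ne_zero hK hproper p.2.2) _)).ne'
      exact continuous_pi fun v =>
        (cS.inv₀ cSne).mul (((continuous_apply v).comp chp).add cc)
    · intro g
      apply Subtype.ext
      show Hfun K (((0 : ↥unitInterval) : ℝ)) g.1 = _
      rw [show ((0 : ↥unitInterval) : ℝ) = 0 from rfl]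
      exact Hfun_zero hK hproper hn g.2
    · intro g
      apply Subtype.ext
      show Hfun K (((1 : ↥unitInterval) : ℝ)) g.1 = g.1
      rw [show ((1 : ↥unitInterval) : ℝ) = 1 from rfl]
      exact Hfun_one g.2
  right_inv := by
    have heq : (piMap hK hproper hn).comp (sMap hK hproper hn) = ContinuousMap.id _ := by
      apply ContinuousMap.ext
      intro x
      apply Subtype.ext
      show piFun K (sFun K x.1) = x.1
      exact piFun_sFun hK hproper hn x.2
    rw [heq]


variable {n : ℕ}

noncomputable def sumL (n : ℕ) : EuclideanSpace ℝ (Fin n) →ₗ[ℝ] ℝ where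
  toFun x := ∑ v, x v
  map_add' x y := by
    simp [Finset.sum_add_distrib, PiLp.add_apply]
  map_smul' c x := by
    simp [Finset.mul_sum, PiLp.smul_apply, smul_eq_mul]

lemma sumL_surjective (hn : 0 < n) : Function.Surjective (sumL n) := by
  intro r
  refine ⟨toEu (fun _ => r / n), ?_⟩
  have hnn : (n : ℝ) ≠ 0 := Nat.cast_ne_zero.mpr hn.ne'
  show (∑ v, toEu (fun _ : Fin n => r / n) v) = r
  simp only [toEu_apply, Finset.sum_const, Finset.card_univ, Fintype.card_fin,
    nsmul_eq_mul]
  field_simp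

lemma finrank_ker (hn : 0 < n) :
    Module.finrank ℝ ↥(LinearMap.ker (sumL n)) = n - 1 := by
  have h1 := LinearMap.finrank_range_add_finrank_ker (sumL n)
  rw [finrank_euclideanSpace_fin] at h1
  rw [LinearMap.range_eq_top.mpr (sumL_surjective hn)] at h1
  rw [finrank_top, Module.finrank_self] at h1
  omega

noncomputable def stepThree (hn : 0 < n) :
    ↥(Zset n) ≃ₜ ↥(Metric.sphere (0 : EuclideanSpace ℝ (Fin (n - 1))) 1) := by
  set W := LinearMap.ker (sumL n) with hW
  have hrank : Module.finrank ℝ ↥W = n - 1 := finrank_ker hn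
  let Φ : ↥W ≃ₗᵢ[ℝ] EuclideanSpace ℝ (Fin (n - 1)) :=
    (stdOrthonormalBasis ℝ ↥W).repr.trans
      (LinearIsometryEquiv.piLpCongrLeft 2 ℝ ℝ (finCongr hrank))
  have hmemW : ∀ z : ↥(Zset n), z.1 ∈ W := by
    intro z
    rw [hW, LinearMap.mem_ker]
    exact z.2.1
  refine
    { toFun := fun z => ⟨Φ ⟨z.1, hmemW z⟩, ?_⟩
      invFun := fun w => ⟨((Φ.symm w.1 : ↥W) : EuclideanSpace ℝ (Fin n)), ?_, ?_⟩
      left_inv := ?_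
      right_inv := ?_
      continuous_toFun := ?_
      continuous_invFun := ?_ }
  · rw [mem_sphere_zero_iff_norm, Φ.norm_map]
    exact z.2.2
  · exact (Φ.symm w.1).2
  · rw [Submodule.norm_coe, Φ.symm.norm_map]
    exact mem_sphere_zero_iff_norm.mp w.2
  · intro z
    apply Subtype.ext
    show ((Φ.symm (Φ ⟨z.1, hmemW z⟩) : ↥W) : EuclideanSpace ℝ (Fin n)) = z.1
    rw [Φ.symm_apply_apply]
  · intro w
    apply Subtype.ext
    show Φ ⟨((Φ.symm w.1 : ↥W) : EuclideanSpace ℝ (Fin n)), _⟩ = w.1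
    have : (⟨((Φ.symm w.1 : ↥W) : EuclideanSpace ℝ (Fin n)), _⟩ : ↥W) = Φ.symm w.1 :=
      Subtype.ext rfl
    rw [this, Φ.apply_symm_apply]
  · exact Continuous.subtype_mk
      (Φ.continuous.comp (Continuous.subtype_mk continuous_subtype_val _)) _
  · exact Continuous.subtype_mk
      (continuous_subtype_val.comp (Φ.symm.continuous.comp continuous_subtype_val)) _


variable {n : ℕ} {K : Set (Finset (Fin n))}

def phi (f : Fin n × Fin 2 → ℝ) : Fin n → ℝ := fun v => f (v, 0) - f (v, 1)

noncomputable def psi (g : Fin n → ℝ) : Fin n × Fin 2 → ℝ :=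
  fun p => if p.2 = 0 then max (g p.1) 0 else max (-g p.1) 0

lemma fin2_ne (v : Fin n) : ((v, (0 : Fin 2)) : Fin n × Fin 2) ≠ (v, 1) := by
  intro h
  have := congrArg Prod.snd h
  simp at this

lemma disj_of_mem {f : Fin n × Fin 2 → ℝ}
    (hf : f ∈ realization (DeletedJoin ![K, alexDual K])) (v : Fin n) :
    f (v, 0) = 0 ∨ f (v, 1) = 0 := by
  obtain ⟨S, hS, hsupp⟩ := hf.2.2
  by_contra hcon
  push_neg at hcon
  have h0 : (v, (0 : Fin 2)) ∈ S := hsupp _ hcon.1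
  have h1 : (v, (1 : Fin 2)) ∈ S := hsupp _ hcon.2
  exact fin2_ne v (hS.1 _ h0 _ h1 rfl)

lemma phi_mem (hK : IsComplex K) {f : Fin n × Fin 2 → ℝ}
    (hf : f ∈ realization (DeletedJoin ![K, alexDual K])) : phi f ∈ Xset K := by
  obtain ⟨S, hS, hsupp⟩ := hf.2.2
  refine ⟨?_, ?_, ?_⟩
  · have h1 : ∀ v, |phi f v| = f (v, 0) + f (v, 1) := by
      intro v
      rcases disj_of_mem hf v with h | h
      · rw [phi, h, zero_sub, abs_neg, abs_of_nonneg (hf.1 _), zero_add]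
      · rw [phi, h, sub_zero, abs_of_nonneg (hf.1 _), add_zero]
    calc ∑ v, |phi f v| = ∑ v, (f (v, 0) + f (v, 1)) := Finset.sum_congr rfl fun v _ => h1 v
      _ = ∑ v, ∑ i : Fin 2, f (v, i) := by simp [Fin.sum_univ_two]
      _ = ∑ p : Fin n × Fin 2, f p := (Fintype.sum_prod_type f).symm
      _ = 1 := hf.2.1
  · have hsub : psupp (phi f) ⊆ (S.filter (fun p => p.2 = 0)).image Prod.fst := by
      intro v hv
      rw [mem_psupp, phi] at hv
      have hne : f (v, 0) ≠ 0 := by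
        have := hf.1 (v, 1)
        intro h0
        rw [h0] at hv
        linarith
      exact Finset.mem_image.mpr ⟨(v, 0), Finset.mem_filter.mpr ⟨hsupp _ hne, rfl⟩, rfl⟩
    have := hS.2 0
    rw [Matrix.cons_val_zero] at this
    exact hK.2 _ _ hsub this
  · have hsub : nsupp (phi f) ⊆ (S.filter (fun p => p.2 = 1)).image Prod.fst := by
      intro v hv
      rw [mem_nsupp, phi] at hv
      have hne : f (v, 1) ≠ 0 := by
        have := hf.1 (v, 0)
        intro h0
        rw [h0] at hv
        linarith
      exact Finset.mem_image.mpr ⟨(v, 1), Finset.mem_filter.mpr ⟨hsupp _ hne, rfl⟩, rfl⟩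
    have := hS.2 1
    rw [Matrix.cons_val_one, Matrix.cons_val_zero] at this
    exact dual_mono hK hsub this

lemma fin2_eq_one {i : Fin 2} (h : ¬ i = 0) : i = 1 := by
  fin_cases i
  · exact absurd rfl h
  · rfl

lemma max_add_max_neg (a : ℝ) : max a 0 + max (-a) 0 = |a| := by
  rcases le_total 0 a with h | h
  · rw [max_eq_left h, max_eq_right (neg_nonpos.mpr h), add_zero, abs_of_nonneg h]
  · rw [max_eq_right h, max_eq_left (neg_nonneg.mpr h), zero_add, abs_of_nonpos h]

lemma psi_mem {g : Fin n → ℝ} (hg : g ∈ Xset K) :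
    psi g ∈ realization (DeletedJoin ![K, alexDual K]) := by
  refine ⟨?_, ?_, ?_⟩
  · intro p
    rw [psi]
    split_ifs <;> exact le_max_right _ _
  · calc ∑ p : Fin n × Fin 2, psi g p
        = ∑ v, ∑ i : Fin 2, psi g (v, i) := Fintype.sum_prod_type _
      _ = ∑ v, |g v| := by
          apply Finset.sum_congr rfl
          intro v _
          rw [Fin.sum_univ_two]
          show (if (0 : Fin 2) = 0 then max (g v) 0 else max (-g v) 0)
            + (if (1 : Fin 2) = 0 then max (g v) 0 else max (-g v) 0) = |g v|
          rw [if_pos rfl, if_neg (by decide)]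
          exact max_add_max_neg (g v)
      _ = 1 := hg.1
  · refine ⟨(psupp g).image (fun v => (v, (0 : Fin 2)))
      ∪ (nsupp g).image (fun v => (v, (1 : Fin 2))), ⟨?_, ?_⟩, ?_⟩
    · intro p hp q hq hpq
      rw [Finset.mem_union, Finset.mem_image, Finset.mem_image] at hp hq
      rcases hp with ⟨a, ha, rfl⟩ | ⟨a, ha, rfl⟩ <;>
        rcases hq with ⟨b, hb, rfl⟩ | ⟨b, hb, rfl⟩ <;>
        simp only [Prod.fst] at hpq <;> subst hpq
      · rfl
      · rw [mem_psupp] at ha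
        rw [mem_nsupp] at hb
        linarith
      · rw [mem_nsupp] at ha
        rw [mem_psupp] at hb
        linarith
      · rfl
    · intro i
      match i with
      | 0 =>
        rw [Matrix.cons_val_zero]
        have heq : ((((psupp g).image (fun v => (v, (0 : Fin 2)))
            ∪ (nsupp g).image (fun v => (v, (1 : Fin 2)))).filter
            (fun p => p.2 = 0)).image Prod.fst) = psupp g := by
          ext v
          rw [Finset.mem_image]
          constructor
          · rintro ⟨p, hp, rfl⟩
            rw [Finset.mem_filter, Finset.mem_union, Finset.mem_image,
              Finset.mem_image] at hp
            rcases hp.1 with ⟨a, ha, rfl⟩ | ⟨a, ha, rfl⟩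
            · exact ha
            · exact absurd hp.2 (by simp)
          · intro hv
            exact ⟨(v, 0), Finset.mem_filter.mpr
              ⟨Finset.mem_union_left _ (Finset.mem_image.mpr ⟨v, hv, rfl⟩), rfl⟩, rfl⟩
        rw [heq]
        exact hg.2.1
      | 1 =>
        rw [Matrix.cons_val_one, Matrix.cons_val_zero]
        have heq : ((((psupp g).image (fun v => (v, (0 : Fin 2)))
            ∪ (nsupp g).image (fun v => (v, (1 : Fin 2)))).filter
            (fun p => p.2 = 1)).image Prod.fst) = nsupp g := by
          ext v
          rw [Finset.mem_image]
          constructor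
          · rintro ⟨p, hp, rfl⟩
            rw [Finset.mem_filter, Finset.mem_union, Finset.mem_image,
              Finset.mem_image] at hp
            rcases hp.1 with ⟨a, ha, rfl⟩ | ⟨a, ha, rfl⟩
            · exact absurd hp.2 (by simp)
            · exact ha
          · intro hv
            exact ⟨(v, 1), Finset.mem_filter.mpr
              ⟨Finset.mem_union_right _ (Finset.mem_image.mpr ⟨v, hv, rfl⟩), rfl⟩, rfl⟩
        rw [heq]
        exact hg.2.2
    · intro p hp
      rw [Finset.mem_union, Finset.mem_image, Finset.mem_image]
      rw [psi] at hp
      by_cases hi : p.2 = 0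
      · rw [if_pos hi] at hp
        left
        have hpos : 0 < g p.1 := by
          rcases lt_or_ge 0 (g p.1) with h | h
          · exact h
          · exact absurd (max_eq_right h) hp
        exact ⟨p.1, mem_psupp.mpr hpos, by rw [← hi]⟩
      · rw [if_neg hi] at hp
        right
        have hi1 : p.2 = 1 := fin2_eq_one hi
        have hneg : g p.1 < 0 := by
          rcases lt_or_ge (g p.1) 0 with h | h
          · exact h
          · exact absurd (max_eq_right (by linarith)) hp
        exact ⟨p.1, mem_nsupp.mpr hneg, by rw [← hi1]⟩

lemma psi_phi {f : Fin n × Fin 2 → ℝ}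
    (hf : f ∈ realization (DeletedJoin ![K, alexDual K])) : psi (phi f) = f := by
  funext p
  rw [psi, phi]
  by_cases hi : p.2 = 0
  · rw [if_pos hi]
    have hp : p = (p.1, 0) := Prod.ext rfl hi
    rw [hp]
    rcases disj_of_mem hf p.1 with h | h
    · rw [h, zero_sub]
      exact max_eq_right (neg_nonpos.mpr (hf.1 _))
    · rw [h, sub_zero]
      exact max_eq_left (hf.1 _)
  · rw [if_neg hi]
    have hi1 : p.2 = 1 := fin2_eq_one hi
    have hp : p = (p.1, 1) := Prod.ext rfl hi1
    rw [hp]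
    rcases disj_of_mem hf p.1 with h | h
    · rw [h, zero_sub, neg_neg]
      exact max_eq_left (hf.1 _)
    · rw [h, sub_zero]
      exact max_eq_right (neg_nonpos.mpr (hf.1 _))

lemma phi_psi (g : Fin n → ℝ) : phi (psi g) = g := by
  funext v
  rw [phi, psi]
  show (if (0 : Fin 2) = 0 then max (g v) 0 else max (-g v) 0)
    - (if (1 : Fin 2) = 0 then max (g v) 0 else max (-g v) 0) = g v
  rw [if_pos rfl, if_neg (by decide)]
  rcases le_total 0 (g v) with h | h
  · rw [max_eq_left h, max_eq_right (neg_nonpos.mpr h), sub_zero]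
  · rw [max_eq_right h, max_eq_left (neg_nonneg.mpr h), zero_sub, neg_neg]

noncomputable def stepOne (hK : IsComplex K) :
    ↥(realization (DeletedJoin ![K, alexDual K])) ≃ₜ ↥(Xset K) where
  toFun f := ⟨phi f.1, phi_mem hK f.2⟩
  invFun g := ⟨psi g.1, psi_mem g.2⟩
  left_inv f := Subtype.ext (psi_phi f.2)
  right_inv g := Subtype.ext (phi_psi g.1)
  continuous_toFun := by
    apply Continuous.subtype_mk
    exact continuous_pi fun v =>
      ((continuous_apply ((v, 0) : Fin n × Fin 2)).comp continuous_subtype_val).sub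
        ((continuous_apply ((v, 1) : Fin n × Fin 2)).comp continuous_subtype_val)
  continuous_invFun := by
    apply Continuous.subtype_mk
    apply continuous_pi
    intro p
    by_cases hi : p.2 = 0
    · simp only [psi, if_pos hi]
      exact (((continuous_apply p.1).comp continuous_subtype_val).max continuous_const)
    · simp only [psi, if_neg hi]
      exact ((((continuous_apply p.1).comp continuous_subtype_val).neg).max continuous_const)


end BierAux

/-- For a proper superdual complex `K` (i.e. `K° ⊆ K`) on `[n]`, the Bier sphere
`Bier(K) = K *_Δ K°` is homotopy equivalent to the sphere `S^{n-2}`. -/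
theorem bierSphere_homotopy_sphere (n : ℕ) (K : Set (Finset (Fin n)))
    (hK : IsComplex K) (hproper : K ≠ Set.univ) (hsd : alexDual K ⊆ K) :
    Nonempty (ContinuousMap.HomotopyEquiv
      ↥(realization (DeletedJoin ![K, alexDual K]))
      ↥(Metric.sphere (0 : EuclideanSpace ℝ (Fin (n - 1))) 1)) := by
  have hn : 0 < n := by
    rcases Nat.eq_zero_or_pos n with h0 | h
    · exfalso
      apply hproper
      apply Set.eq_univ_of_forall
      intro A
      apply hK.2 A Finset.univ (Finset.subset_univ A)
      subst h0
      rw [Finset.univ_eq_empty]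
      exact hK.1
    · exact h
  exact ⟨((BierAux.stepOne hK).toHomotopyEquiv).trans
    ((BierAux.stepTwo hK hproper hn).trans (BierAux.stepThree hn).toHomotopyEquiv)⟩
end

section
/- Let K_1, K_2 be proper simplicial complexes on [n]. Then ⟨K_1, K_2⟩ is an Alexander 2-tuple if and only if K_2 = K_1° (equivalently, K_1 = K_2°), i.e. the Alexander 2-tuples are exactly the pairs of mutually Alexander-dual complexes. -/
lemma alexDual_alexDual {V : Type*} [Fintype V] [DecidableEq V] (K : Set (Finset V)) :
    alexDual (alexDual K) = K := by
  ext F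
  simp [alexDual, Finset.sdiff_sdiff_self_left]

lemma biUnion_pair {n : ℕ} (A : Fin 2 → Finset (Fin n)) :
    Finset.univ.biUnion A = A 0 ∪ A 1 := by
  ext x; simp [Fin.exists_fin_two]

/-- `⟨K₁, K₂⟩` is an Alexander `2`-tuple iff `K₂ = K₁°` (equivalently `K₁ = K₂°`):
the Alexander `2`-tuples are exactly the pairs of mutually dual complexes. -/
theorem alexanderTuple_pair_iff_dual (n : ℕ)
    (K₁ K₂ : Set (Finset (Fin n)))
    (h₁ : IsComplex K₁) (h₂ : IsComplex K₂)
    (hp₁ : K₁ ≠ Set.univ) (hp₂ : K₂ ≠ Set.univ) :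
    (AlexanderTuple ![K₁, K₂] ↔ K₂ = alexDual K₁) ∧
      (K₂ = alexDual K₁ ↔ K₁ = alexDual K₂) := by
  constructor
  · constructor
    · rintro ⟨hcu, hcard⟩
      ext F
      simp only [alexDual, Set.mem_setOf_eq]
      constructor
      · intro hF hF'
        have := hcard ![Finset.univ \ F, F] (by
          intro i
          fin_cases i <;> simpa using (by assumption))
        rw [biUnion_pair] at this
        obtain ⟨x, hx⟩ := Finset.card_pos.mp this
        simp at hx
      · intro hF
        obtain ⟨i, hi⟩ := hcu ![Finset.univ \ F, F] (by
          intro i j hij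
          fin_cases i <;> fin_cases j <;> simp_all [Function.onFun]
          · exact Finset.sdiff_disjoint
          · exact Finset.sdiff_disjoint.symm)
        fin_cases i
        · exact absurd (by simpa using hi) hF
        · simpa using hi
    · intro hK
      subst hK
      constructor
      · intro A hA
        by_cases h : A 0 ∈ K₁
        · exact ⟨0, by simpa using h⟩
        · refine ⟨1, ?_⟩
          simp only [Matrix.cons_val_one, Matrix.head_cons, alexDual, Set.mem_setOf_eq]
          intro hmem
          have hd : Disjoint (A 0) (A 1) := hA (by decide : (0 : Fin 2) ≠ 1)
          exact h (h₁.2 _ _ (Finset.subset_sdiff.mpr ⟨Finset.subset_univ _, hd⟩) hmem)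
      · intro A hA
        have h0 : A 0 ∈ K₁ := by simpa using hA 0
        have h1 : Finset.univ \ A 1 ∉ K₁ := by simpa [alexDual] using hA 1
        rw [biUnion_pair]
        by_contra hc
        push_neg at hc
        have : Finset.univ \ (A 0 ∪ A 1) = ∅ := by
          have := Nat.lt_one_iff.mp hc
          exact Finset.card_eq_zero.mp this
        have hsub : Finset.univ \ A 1 ⊆ A 0 := by
          intro x hx
          simp only [Finset.mem_sdiff, Finset.mem_univ, true_and] at hx
          by_contra hx0
          have : x ∈ Finset.univ \ (A 0 ∪ A 1) := by simp [hx, hx0]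
          simp [this, ‹Finset.univ \ (A 0 ∪ A 1) = ∅›] at this
        exact h1 (h₁.2 _ _ hsub h0)
  · constructor
    · rintro rfl
      exact (alexDual_alexDual K₁).symm
    · rintro rfl
      exact (alexDual_alexDual K₂).symm
end

section
/- An r-tuple ⟨K_1,...,K_r⟩ of simplicial complexes on [n] is collective r-unavoidable if and only if for every ordered collection (A_1,...,A_r) of pairwise disjoint subsets of [n] there exist subsets S, T ⊆ [r] with |S| + |T| = r + 1 such that A_i ∈ K_j for every i ∈ S and every j ∈ T. -/
/-- Frobenius-type characterization: `⟨K 1, …, K r⟩` is collective `r`-unavoidable iff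
for every ordered collection of pairwise disjoint sets `(A 1, …, A r)` there are sets
`S, T ⊆ [r]` with `|S| + |T| = r + 1` and `A i ∈ K j` for all `i ∈ S`, `j ∈ T`. -/
theorem collUnavoidable_iff_frobenius (n r : ℕ)
    (K : Fin r → Set (Finset (Fin n))) (hcplx : ∀ i, IsComplex (K i)) :
    CollUnavoidable K ↔
      ∀ A : Fin r → Finset (Fin n), Pairwise (Function.onFun Disjoint A) →
        ∃ S T : Finset (Fin r), S.card + T.card = r + 1 ∧
          ∀ i ∈ S, ∀ j ∈ T, A i ∈ K j := by
  classical
  constructor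
  · intro hun A hA
    set t : Fin r → Finset (Fin r) :=
      fun i => Finset.univ.filter (fun j => A i ∉ K j) with ht
    by_cases hHall : ∀ s : Finset (Fin r), s.card ≤ (s.biUnion t).card
    · exfalso
      obtain ⟨f, hfinj, hf⟩ :=
        (Finset.all_card_le_biUnion_card_iff_exists_injective t).mp hHall
      have hbij := Finite.injective_iff_bijective.mp hfinj
      let e := Equiv.ofBijective f hbij
      have hA' : Pairwise (Function.onFun Disjoint (A ∘ e.symm)) :=
        fun i j hij => hA (e.symm.injective.ne hij)
      obtain ⟨j, hj⟩ := hun (A ∘ e.symm) hA'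
      have h1 := hf (e.symm j)
      simp only [ht, Finset.mem_filter] at h1
      have h2 : f (e.symm j) = j := e.apply_symm_apply j
      rw [h2] at h1
      exact h1.2 hj
    · push_neg at hHall
      obtain ⟨s, hs⟩ := hHall
      set T := (s.biUnion t)ᶜ with hT
      have hb : (s.biUnion t).card ≤ r := by
        have := Finset.card_le_card (Finset.subset_univ (s.biUnion t))
        simpa using this
      have hTcard : T.card = r - (s.biUnion t).card := by
        simp [hT, Finset.card_compl]
      have hle : r + 1 - T.card ≤ s.card := by omega
      obtain ⟨S, hSsub, hScard⟩ := Finset.exists_subset_card_eq hle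
      refine ⟨S, T, by omega, ?_⟩
      intro i hi j hj
      have hjs : j ∉ s.biUnion t := by simpa [hT] using hj
      by_contra hA2
      exact hjs (Finset.mem_biUnion.mpr ⟨i, hSsub hi, by simp [ht, hA2]⟩)
  · intro h A hA
    obtain ⟨S, T, hcard, hST⟩ := h A hA
    have hU : (S ∪ T).card ≤ r := by
      have := Finset.card_le_card (Finset.subset_univ (S ∪ T))
      simpa using this
    have hI : 0 < (S ∩ T).card := by
      have := Finset.card_union_add_card_inter S T
      omega
    obtain ⟨i, hi⟩ := Finset.card_pos.mp hI
    rw [Finset.mem_inter] at hi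
    exact ⟨i, hST i hi.1 i hi.2⟩
end

section
/- Let r ≥ 2 and let m_1,...,m_r be nonnegative integers with n = m_1 + ... + m_r + r − 1 ≥ 1. Then the r-tuple of skeleta ⟨([n] choose ≤ m_1), ..., ([n] choose ≤ m_r)⟩ is an Alexander r-tuple of simplicial complexes on [n]. -/
/-- If `n = m 1 + ⋯ + m r + r - 1 ≥ 1` and `r ≥ 2`, then the tuple of skeleta
`⟨([n] choose ≤ m 1), …, ([n] choose ≤ m r)⟩` is an Alexander `r`-tuple. -/
theorem skeleta_alexanderTuple (n r : ℕ) (hr : 2 ≤ r) (m : Fin r → ℕ)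
    (hn : n = (∑ i, m i) + r - 1) (h1 : 1 ≤ n) :
    AlexanderTuple (fun i : Fin r => {A : Finset (Fin n) | A.card ≤ m i}) := by
  constructor
  · intro A hA
    by_contra h
    push_neg at h
    simp only [Set.mem_setOf_eq, not_le] at h
    have hsum : ∑ i, (A i).card ≤ n := by
      rw [← Finset.card_biUnion (fun i _ j _ hij => hA hij)]
      calc _ ≤ (Finset.univ : Finset (Fin n)).card :=
            Finset.card_le_card (Finset.subset_univ _)
        _ = n := by simp
    have hge : (∑ i, m i) + r ≤ ∑ i, (A i).card := by
      calc (∑ i, m i) + r = ∑ i, (m i + 1) := by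
            rw [Finset.sum_add_distrib]; simp [Finset.card_univ]
        _ ≤ _ := Finset.sum_le_sum fun i _ => h i
    omega
  · intro A hA
    simp only [Set.mem_setOf_eq] at hA
    have hcard : (Finset.univ.biUnion A).card ≤ ∑ i, m i :=
      le_trans Finset.card_biUnion_le (Finset.sum_le_sum fun i _ => hA i)
    rw [Finset.card_sdiff_of_subset (Finset.subset_univ _), Finset.card_univ, Fintype.card_fin]
    omega
end

section
/- Let r ≥ 2, let m_1,...,m_r be nonnegative integers with n = m_1 + ... + m_r + r − 1, and let C be a nonempty finite set disjoint from [n]. For each i define the complex K_i = ([n] choose ≤ m_i) * Δ(C) on the vertex set [n] ⊎ C, i.e. K_i = {A ⊆ [n] ∪ C : |A ∩ [n]| ≤ m_i}. Then ⟨K_1,...,K_r⟩ is an Alexander r-tuple. -/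
/-- Let `n = m 1 + ⋯ + m r + r - 1`, let `C` be a nonempty finite set disjoint from
`[n]`, and let `K i = ([n] choose ≤ m i) * Δ(C)` on the vertex set `[n] ⊎ C`, i.e.
the sets meeting `[n]` in at most `m i` elements. Then `⟨K 1, …, K r⟩` is an
Alexander `r`-tuple. -/
theorem skeleta_join_simplex_alexanderTuple (n r : ℕ) (hr : 2 ≤ r) (m : Fin r → ℕ)
    (hn : n = (∑ i, m i) + r - 1)
    (C : Type*) [Fintype C] [DecidableEq C] [Nonempty C] :
    AlexanderTuple (fun i : Fin r =>
      {A : Finset (Fin n ⊕ C) | (A.filter (fun x => x.isLeft = true)).card ≤ m i}) := by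
  have hL : (Finset.univ.filter (fun x : Fin n ⊕ C => x.isLeft = true)).card = n := by
    rw [show (Finset.univ.filter (fun x : Fin n ⊕ C => x.isLeft = true)) =
        Finset.univ.map ⟨Sum.inl, Sum.inl_injective⟩ by ext x; cases x <;> simp]
    simp
  constructor
  · intro A hA
    by_contra h
    push_neg at h
    simp only [Set.mem_setOf_eq, not_le] at h
    have hd : ∀ i ∈ Finset.univ, ∀ j ∈ Finset.univ, i ≠ j →
        Disjoint ((A i).filter (fun x => x.isLeft = true))
          ((A j).filter (fun x => x.isLeft = true)) := fun i _ j _ hij =>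
      (hA hij).mono (Finset.filter_subset _ _) (Finset.filter_subset _ _)
    have h1 : (Finset.univ.biUnion (fun i => (A i).filter (fun x => x.isLeft = true))).card
        = ∑ i, ((A i).filter (fun x => x.isLeft = true)).card := Finset.card_biUnion hd
    have h2 : ∑ i, (m i + 1) ≤ ∑ i, ((A i).filter (fun x => x.isLeft = true)).card :=
      Finset.sum_le_sum (fun i _ => h i)
    have h3 : (Finset.univ.biUnion (fun i => (A i).filter (fun x => x.isLeft = true))).card ≤ n := by
      refine le_trans (Finset.card_le_card ?_) hL.le
      intro x hx
      simp only [Finset.mem_biUnion, Finset.mem_filter] at hx ⊢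
      obtain ⟨i, _, _, hxl⟩ := hx
      exact ⟨Finset.mem_univ x, hxl⟩
    have h4 : ∑ i, (m i + 1) = (∑ i, m i) + r := by
      rw [Finset.sum_add_distrib]; simp
    omega
  · intro A hA
    simp only [Set.mem_setOf_eq] at hA
    have hsub : (Finset.univ.filter (fun x : Fin n ⊕ C => x.isLeft = true)) \
        Finset.univ.biUnion (fun i => (A i).filter (fun x => x.isLeft = true))
        ⊆ Finset.univ \ Finset.univ.biUnion A := by
      intro x hx
      simp only [Finset.mem_sdiff, Finset.mem_filter, Finset.mem_biUnion, Finset.mem_univ,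
        true_and, not_exists] at hx ⊢
      intro i hxi
      exact hx.2 i ⟨hxi, hx.1⟩
    have hcard := Finset.card_le_card hsub
    have hbu : (Finset.univ.biUnion (fun i => (A i).filter (fun x => x.isLeft = true))).card
        ≤ ∑ i, m i := le_trans (Finset.card_biUnion_le) (Finset.sum_le_sum fun i _ => hA i)
    have hsd := Finset.le_card_sdiff
      (Finset.univ.biUnion (fun i => (A i).filter (fun x => x.isLeft = true)))
      (Finset.univ.filter (fun x : Fin n ⊕ C => x.isLeft = true))
    omega
end

section
/- Let r ≥ 2 and let 𝒦 = ⟨K_1,...,K_{r−1}⟩ be an (r−1)-tuple of simplicial complexes on [n] that is NOT collective (r−1)-unavoidable. Define R(𝒦) = {F ⊆ [n] : there exists an ordered partition [n]∖F = F_1 ⊎ ... ⊎ F_{r−1} with F_i ∉ K_i for all i}. Then R(𝒦) is a simplicial complex on [n] containing ∅, the r-tuple ⟨K_1,...,K_{r−1}, R(𝒦)⟩ is collective r-unavoidable, and R(𝒦) is the unique minimal such complex: for every simplicial complex Z on [n] such that ⟨K_1,...,K_{r−1}, Z⟩ is collective r-unavoidable, one has R(𝒦) ⊆ Z. -/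
/-- The residual complex of an `s`-tuple `𝒦`: all `F ⊆ [n]` such that the complement of
`F` admits an ordered partition `F 1 ⊎ ⋯ ⊎ F s` with `F i ∉ K i` for all `i`. -/
def Residual {n s : ℕ} (K : Fin s → Set (Finset (Fin n))) : Set (Finset (Fin n)) :=
  {F | ∃ F' : Fin s → Finset (Fin n), Pairwise (Function.onFun Disjoint F') ∧
    (∀ i, F' i ∉ K i) ∧ Finset.univ.biUnion F' = Finset.univ \ F}

lemma extend_family {n s : ℕ} (hs : 0 < s) (K : Fin s → Set (Finset (Fin n)))
    (hcplx : ∀ i, IsComplex (K i)) (G : Fin s → Finset (Fin n))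
    (hdisj : Pairwise (Function.onFun Disjoint G)) (hmem : ∀ i, G i ∉ K i)
    (T : Finset (Fin n)) (hT : Finset.univ.biUnion G ⊆ T) :
    ∃ G' : Fin s → Finset (Fin n), Pairwise (Function.onFun Disjoint G') ∧
      (∀ i, G' i ∉ K i) ∧ Finset.univ.biUnion G' = T := by
  set i0 : Fin s := ⟨0, hs⟩
  set E : Finset (Fin n) := T \ Finset.univ.biUnion G with hE
  refine ⟨Function.update G i0 (G i0 ∪ E), ?_, ?_, ?_⟩
  · intro i j hij
    have hEd : ∀ k, Disjoint E (G k) := by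
      intro k
      refine Finset.disjoint_left.2 ?_
      intro x hx hxk
      exact (Finset.mem_sdiff.1 hx).2 (Finset.mem_biUnion.2 ⟨k, Finset.mem_univ _, hxk⟩)
    by_cases hi : i = i0
    · subst hi
      have hj : j ≠ i0 := fun h => hij h.symm
      simp only [Function.onFun, Function.update_self, Function.update_of_ne hj]
      exact Finset.disjoint_union_left.2 ⟨hdisj hij, (hEd j)⟩
    · by_cases hj : j = i0
      · subst hj
        simp only [Function.onFun, Function.update_self, Function.update_of_ne hi]
        exact Finset.disjoint_union_right.2 ⟨hdisj hij, (hEd i).symm⟩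
      · simp only [Function.onFun, Function.update_of_ne hi, Function.update_of_ne hj]
        exact hdisj hij
  · intro i hi
    by_cases h : i = i0
    · subst h
      rw [Function.update_self] at hi
      exact hmem i0 ((hcplx i0).2 _ _ Finset.subset_union_left hi)
    · rw [Function.update_of_ne h] at hi
      exact hmem i hi
  · ext x
    simp only [Finset.mem_biUnion, Finset.mem_univ, true_and]
    constructor
    · rintro ⟨i, hi⟩
      by_cases h : i = i0
      · subst h
        rw [Function.update_self, Finset.mem_union] at hi
        rcases hi with hi | hi
        · exact hT (Finset.mem_biUnion.2 ⟨i0, Finset.mem_univ _, hi⟩)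
        · exact (Finset.mem_sdiff.1 hi).1
      · rw [Function.update_of_ne h] at hi
        exact hT (Finset.mem_biUnion.2 ⟨i, Finset.mem_univ _, hi⟩)
    · intro hx
      by_cases h : x ∈ Finset.univ.biUnion G
      · obtain ⟨i, -, hi⟩ := Finset.mem_biUnion.1 h
        refine ⟨i, ?_⟩
        by_cases hii : i = i0
        · subst hii; rw [Function.update_self]; exact Finset.mem_union_left _ hi
        · rw [Function.update_of_ne hii]; exact hi
      · refine ⟨i0, ?_⟩
        rw [Function.update_self]
        exact Finset.mem_union_right _ (Finset.mem_sdiff.2 ⟨hx, h⟩)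

/-- If `𝒦 = ⟨K 1, …, K (r-1)⟩` is not collective `(r-1)`-unavoidable, then the residual
complex `R(𝒦)` is a simplicial complex (in particular `∅ ∈ R(𝒦)`), the extended tuple
`⟨K 1, …, K (r-1), R(𝒦)⟩` is collective `r`-unavoidable, and `R(𝒦)` is the unique
minimal complex with this property. -/
theorem residual_minimal_unavoidable (n r : ℕ) (hr : 2 ≤ r)
    (K : Fin (r - 1) → Set (Finset (Fin n))) (hcplx : ∀ i, IsComplex (K i))
    (hnot : ¬ CollUnavoidable K) :
    IsComplex (Residual K) ∧ ∅ ∈ Residual K ∧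
      CollUnavoidable (Fin.snoc K (Residual K)) ∧
      ∀ Z : Set (Finset (Fin n)), IsComplex Z →
        CollUnavoidable (Fin.snoc K Z) → Residual K ⊆ Z := by
  have hs : 0 < r - 1 := by omega
  -- downward closure
  have hsub : ∀ A B : Finset (Fin n), A ⊆ B → B ∈ Residual K → A ∈ Residual K := by
    intro A B hAB ⟨F', hd, hm, hu⟩
    obtain ⟨G', hd', hm', hu'⟩ := extend_family hs K hcplx F' hd hm
      (Finset.univ \ A) (by
        rw [hu]
        exact Finset.sdiff_subset_sdiff (le_refl _) hAB)
    exact ⟨G', hd', hm', hu'⟩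
  -- empty set
  have hempty : ∅ ∈ Residual K := by
    rw [CollUnavoidable] at hnot
    push_neg at hnot
    obtain ⟨A, hd, hm⟩ := hnot
    obtain ⟨G', hd', hm', hu'⟩ := extend_family hs K hcplx A hd hm
      (Finset.univ \ ∅) (by simp)
    exact ⟨G', hd', hm', hu'⟩
  refine ⟨⟨hempty, hsub⟩, hempty, ?_, ?_⟩
  · -- collective unavoidability of the extended tuple
    intro A hA
    by_contra h
    push_neg at h
    set G : Fin (r - 1) → Finset (Fin n) := fun i => A i.castSucc with hG
    have hdG : Pairwise (Function.onFun Disjoint G) := fun i j hij =>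
      hA (fun hc => hij (Fin.castSucc_injective _ hc))
    have hmG : ∀ i, G i ∉ K i := by
      intro i hi
      have := h i.castSucc
      rw [Fin.snoc_castSucc] at this
      exact this hi
    obtain ⟨G', hd', hm', hu'⟩ := extend_family hs K hcplx G hdG hmG
      (Finset.univ \ A (Fin.last _)) (by
        intro x hx
        obtain ⟨i, -, hi⟩ := Finset.mem_biUnion.1 hx
        refine Finset.mem_sdiff.2 ⟨Finset.mem_univ _, fun hxl => ?_⟩
        exact Finset.disjoint_left.1
          (hA (i.castSucc_lt_last).ne) hi hxl)
    have hres : A (Fin.last _) ∈ Residual K := ⟨G', hd', hm', hu'⟩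
    have := h (Fin.last _)
    rw [Fin.snoc_last] at this
    exact this hres
  · -- minimality
    intro Z hZ hun F hF
    obtain ⟨F', hd, hm, hu⟩ := hF
    set A : Fin ((r - 1) + 1) → Finset (Fin n) := Fin.snoc F' F with hA
    have hFd : ∀ i, Disjoint (F' i) F := by
      intro i
      refine Finset.disjoint_left.2 fun x hx hxF => ?_
      have : x ∈ Finset.univ.biUnion F' := Finset.mem_biUnion.2 ⟨i, Finset.mem_univ _, hx⟩
      rw [hu] at this
      exact (Finset.mem_sdiff.1 this).2 hxF
    have hdA : Pairwise (Function.onFun Disjoint A) := by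
      intro i j hij
      induction i using Fin.lastCases with
      | last =>
        induction j using Fin.lastCases with
        | last => exact absurd rfl hij
        | cast j' =>
          simpa only [hA, Function.onFun, Fin.snoc_last, Fin.snoc_castSucc] using (hFd j').symm
      | cast i' =>
        induction j using Fin.lastCases with
        | last =>
          simpa only [hA, Function.onFun, Fin.snoc_last, Fin.snoc_castSucc] using hFd i'
        | cast j' =>
          simp only [hA, Function.onFun, Fin.snoc_castSucc]
          exact hd fun hc => hij (by rw [hc])
    obtain ⟨i, hi⟩ := hun A hdA
    induction i using Fin.lastCases with
    | last =>
      rw [hA, Fin.snoc_last] at hi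
      rwa [Fin.snoc_last] at hi
    | cast i' =>
      rw [hA, Fin.snoc_castSucc] at hi
      rw [Fin.snoc_castSucc] at hi
      exact absurd hi (hm i')
end
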